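/- arXiv:1509.00383 — 16 statements merged into one kernel-verified Lean document; each statement's English description precedes it below -/
import Mathlib

section
/- Let A be a ring, let u ∈ A, and let c be an element of the center of A. Define a sequence (u_m) in A by u_0 = 1, u_1 = u, and u_m = u_{m−1}·u − c·u_{m−2} for m ≥ 2. Then for all natural numbers m, n with m ≤ n, one has u_m·u_n = Σ_{t=0}^{m} c^t·u_{m+n−2t}. -/
/-- Multiplication formula for abstract Hecke-type sequences: if `u 0 = 1`,
`u 1 = u`, and `u (m+2) = u (m+1) * u - c * u m` with `c` central, then
`u m * u n = ∑_{t=0}^{m} c^t * u (m+n-2t)` for `m ≤ n`. -/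
theorem stmt_0 {A : Type*} [Ring A] (u c : A) (hc : c ∈ Set.center A)
    (U : ℕ → A) (hU0 : U 0 = 1) (hU1 : U 1 = u)
    (hUrec : ∀ m : ℕ, U (m + 2) = U (m + 1) * u - c * U m)
    (m n : ℕ) (hmn : m ≤ n) :
    U m * U n = ∑ t ∈ Finset.range (m + 1), c ^ t * U (m + n - 2 * t) := by
  have hcc : ∀ x : A, c * x = x * c := fun x => (Set.mem_center_iff.mp hc).comm x
  -- U n commutes with u
  have huU : ∀ k : ℕ, U k * u = u * U k := by
    intro k
    induction k using Nat.twoStepInduction with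
    | zero => rw [hU0, one_mul, mul_one]
    | one => rw [hU1]
    | more k ih1 ih2 =>
      have h1 : U (k + 1) * u * u = u * (U (k + 1) * u) := by
        rw [ih2, mul_assoc, ih2]
      have h2 : c * U k * u = u * (c * U k) := by
        rw [mul_assoc, ih1, ← mul_assoc, hcc u, mul_assoc]
      rw [hUrec k, sub_mul, mul_sub, h1, h2]
  have hkey : ∀ p : ℕ, u * U (p + 1) = U (p + 2) + c * U p := by
    intro p
    have h := hUrec p
    rw [huU (p + 1)] at h
    exact eq_add_of_sub_eq h.symm
  induction m using Nat.twoStepInduction generalizing n with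
  | zero => simp [hU0]
  | one =>
    obtain ⟨k, rfl⟩ : ∃ k, n = k + 1 := ⟨n - 1, by omega⟩
    rw [hU1, hkey k, Finset.sum_range_succ, Finset.sum_range_one]
    simp only [pow_zero, one_mul, pow_one,
      show 1 + (k + 1) - 2 * 0 = k + 2 from by omega,
      show 1 + (k + 1) - 2 * 1 = k from by omega]
  | more m ih1 ih2 =>
    obtain ⟨p, rfl, hmp⟩ : ∃ p, n = p + 2 ∧ m ≤ p := ⟨n - 2, by omega, by omega⟩
    have e1 : U (m + 1) * U (p + 3) =
        ∑ t ∈ Finset.range (m + 2), c ^ t * U (m + 1 + (p + 3) - 2 * t) :=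
      ih2 (p + 3) (by omega)
    have e2 : U (m + 1) * U (p + 1) =
        ∑ t ∈ Finset.range (m + 2), c ^ t * U (m + 1 + (p + 1) - 2 * t) :=
      ih2 (p + 1) (by omega)
    have e3 : U m * U (p + 2) =
        ∑ t ∈ Finset.range (m + 1), c ^ t * U (m + (p + 2) - 2 * t) :=
      ih1 (p + 2) (by omega)
    calc U (m + 2) * U (p + 2)
        = (U (m + 1) * u - c * U m) * U (p + 2) := by rw [hUrec m]
      _ = U (m + 1) * (u * U (p + 2)) - c * (U m * U (p + 2)) := by
          rw [sub_mul, mul_assoc, mul_assoc]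
      _ = U (m + 1) * U (p + 3) + c * (U (m + 1) * U (p + 1))
            - c * (U m * U (p + 2)) := by
          rw [hkey (p + 1), mul_add, ← mul_assoc, ← hcc (U (m + 1)), mul_assoc]
      _ = ∑ t ∈ Finset.range (m + 2), c ^ t * U (m + 1 + (p + 3) - 2 * t)
            + ∑ t ∈ Finset.range (m + 2), c ^ (t + 1) * U (m + 1 + (p + 1) - 2 * t)
            - ∑ t ∈ Finset.range (m + 1), c ^ (t + 1) * U (m + (p + 2) - 2 * t) := by
          rw [e1, e2, e3, Finset.mul_sum, Finset.mul_sum]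
          congr 1
          congr 1
          · refine Finset.sum_congr rfl fun t ht => ?_
            rw [← mul_assoc, ← pow_succ']
          · refine Finset.sum_congr rfl fun t ht => ?_
            rw [← mul_assoc, ← pow_succ']
      _ = ∑ t ∈ Finset.range (m + 3), c ^ t * U (m + 2 + (p + 2) - 2 * t) := by
          have r2 : ∑ t ∈ Finset.range (m + 2), c ^ (t + 1) * U (m + 1 + (p + 1) - 2 * t)
              = ∑ t ∈ Finset.range (m + 3), c ^ t * U (m + 2 + (p + 2) - 2 * t)
                - c ^ 0 * U (m + 2 + (p + 2) - 2 * 0) := by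
            rw [Finset.sum_range_succ' (fun t => c ^ t * U (m + 2 + (p + 2) - 2 * t)) (m + 2)]
            rw [add_sub_cancel_right]
            refine Finset.sum_congr rfl fun t ht => ?_
            simp only [Finset.mem_range] at ht
            congr 2
            omega
          have r1 : ∑ t ∈ Finset.range (m + 2), c ^ t * U (m + 1 + (p + 3) - 2 * t)
              = ∑ t ∈ Finset.range (m + 2), c ^ t * U (m + 2 + (p + 2) - 2 * t) := by
            refine Finset.sum_congr rfl fun t ht => ?_
            simp only [Finset.mem_range] at ht
            congr 2
            omega
          have r3 : ∑ t ∈ Finset.range (m + 1), c ^ (t + 1) * U (m + (p + 2) - 2 * t)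
              = ∑ t ∈ Finset.range (m + 2), c ^ t * U (m + 2 + (p + 2) - 2 * t)
                - c ^ 0 * U (m + 2 + (p + 2) - 2 * 0) := by
            rw [Finset.sum_range_succ' (fun t => c ^ t * U (m + 2 + (p + 2) - 2 * t)) (m + 1)]
            rw [add_sub_cancel_right]
            refine Finset.sum_congr rfl fun t ht => ?_
            simp only [Finset.mem_range] at ht
            congr 2
            omega
          rw [r1, r2, r3]
          rw [Finset.sum_range_succ _ (m + 2)]
          abel
end

section
/- Let j be a positive integer with p² ∤ j, let v ≥ 0 be an integer, and set D = p^{2v}·j. Then for every integer n ≥ v, T_n(g_D) = Σ_{t=0}^{n−v} (j/p)^{n−v−t}·p^t·g_{p^{2t}·j} + Σ_{t=1}^{v} p^{n−v+t}·g_{p^{2n−2v+4t}·j}. -/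
/-!
Write `G m = g (p ^ (2 * m) * j)` and `χ = (j / p)`. Then `T G₀ = χ G₀ + p G₁` and
`T G_{m+1} = G_m + p G_{m+2}`: `T` walks along a ladder with a reflecting end at `0`. Away from
that end the ladder is free and `T_n G_{n+d} = ∑_{t ≤ n} p^t G_{d+2t}`. For fixed `v`, the vectors
`T_{v+k} G_v`, the boundary sums `∑_{t ≤ k} χ^(k-t) p^t G_t` and the tails
`∑_{1 ≤ t ≤ v} p^(k+t) G_{k+2t}` all satisfy the recurrence `x_{k+2} = T x_{k+1} - p x_k` of the
`T_n`, so the claimed identity only has to be checked for `k = 0, 1`, where the free formula gives it.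
-/

open Finset

section

variable {R M : Type*} [CommRing R] [AddCommGroup M] [Module R M]

def HeckeRecurrence (T : M →ₗ[R] M) (p : R) (x : ℕ → M) : Prop :=
  ∀ k, x (k + 2) = T (x (k + 1)) - p • x k

namespace HeckeRecurrence

variable {T : M →ₗ[R] M} {p : R} {x y : ℕ → M}

theorem add (hx : HeckeRecurrence T p x) (hy : HeckeRecurrence T p y) :
    HeckeRecurrence T p (x + y) := fun k => by
  simp only [Pi.add_apply, hx k, hy k, map_add, smul_add]
  abel

theorem eq_of_eq_init (hx : HeckeRecurrence T p x) (hy : HeckeRecurrence T p y)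
    (h0 : x 0 = y 0) (h1 : x 1 = y 1) : x = y := by
  funext k
  induction k using Nat.twoStepInduction with
  | zero => exact h0
  | one => exact h1
  | more k ih0 ih1 => rw [hx, hy, ih0, ih1]

end HeckeRecurrence

theorem heckeRecurrence_apply_add {T : M →ₗ[R] M} {p : R} {Tn : ℕ → M →ₗ[R] M}
    (hrec : ∀ n, Tn (n + 2) = T ∘ₗ Tn (n + 1) - p • Tn n) (m : ℕ) (w : M) :
    HeckeRecurrence T p (fun k => Tn (m + k) w) := fun k => by
  simp [← add_assoc, hrec]

variable (p χ : R) (G : ℕ → M)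

def ladderSum (m d : ℕ) : M := ∑ t ∈ range m, p ^ t • G (d + 2 * t)

def boundarySum (k : ℕ) : M := ∑ t ∈ range (k + 1), (χ ^ (k - t) * p ^ t) • G t

theorem ladderSum_zero (d : ℕ) : ladderSum p G 0 d = 0 := by
  simp [ladderSum]

theorem ladderSum_succ (m d : ℕ) :
    ladderSum p G (m + 1) d = G d + p • ladderSum p G m (d + 2) := by
  simp only [ladderSum, sum_range_succ', smul_sum, smul_smul, ← pow_succ']
  rw [add_comm]
  congr 2 <;> simp [mul_add, add_assoc, add_comm]

theorem smul_ladderSum_eq_sum_Icc (k v : ℕ) :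
    p ^ (k + 1) • ladderSum p G v (k + 2) = ∑ t ∈ Icc 1 v, p ^ (k + t) • G (k + 2 * t) := by
  rw [← Finset.Ico_add_one_right_eq_Icc, sum_Ico_eq_sum_range, ladderSum, smul_sum]
  refine sum_congr rfl fun t _ => ?_
  rw [smul_smul, ← pow_add]
  congr 2 <;> ring

theorem boundarySum_zero : boundarySum p χ G 0 = G 0 := by
  simp [boundarySum]

theorem boundarySum_succ (k : ℕ) :
    boundarySum p χ G (k + 1) = χ • boundarySum p χ G k + p ^ (k + 1) • G (k + 1) := by
  simp only [boundarySum, sum_range_succ _ (k + 1), smul_sum, smul_smul, Nat.sub_self, pow_zero,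
    one_mul]
  congr 1
  refine sum_congr rfl fun t ht => ?_
  rw [Nat.sub_add_comm (mem_range_succ_iff.mp ht), pow_succ', mul_assoc]

variable {p χ G} {T : M →ₗ[R] M} {Tn : ℕ → M →ₗ[R] M}

theorem map_ladderSum (hB : ∀ m, T (G (m + 1)) = G m + p • G (m + 2)) (m d : ℕ) :
    T (ladderSum p G m (d + 1)) = ladderSum p G m d + p • ladderSum p G m (d + 2) := by
  simp only [ladderSum, map_sum, map_smul, smul_sum, smul_smul, ← sum_add_distrib]
  refine sum_congr rfl fun t _ => ?_
  rw [show d + 1 + 2 * t = d + 2 * t + 1 by ring, hB, show d + 2 * t + 2 = d + 2 + 2 * t by ring]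
  module

theorem map_boundarySum_succ (hA : T (G 0) = χ • G 0 + p • G 1)
    (hB : ∀ m, T (G (m + 1)) = G m + p • G (m + 2)) (k : ℕ) :
    T (boundarySum p χ G (k + 1)) = boundarySum p χ G (k + 2) + p • boundarySum p χ G k := by
  induction k with
  | zero =>
    simp only [boundarySum_succ, boundarySum_zero, map_add, map_smul, hA, hB 0]
    module
  | succ k ih =>
    rw [boundarySum_succ p χ G (k + 1), map_add, map_smul, ih, map_smul, hB,
      boundarySum_succ p χ G (k + 2), boundarySum_succ p χ G k]
    module

theorem heckeRecurrence_boundarySum (hA : T (G 0) = χ • G 0 + p • G 1)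
    (hB : ∀ m, T (G (m + 1)) = G m + p • G (m + 2)) :
    HeckeRecurrence T p (boundarySum p χ G) := fun k => by
  rw [map_boundarySum_succ hA hB]
  abel

theorem heckeRecurrence_smul_ladderSum (hB : ∀ m, T (G (m + 1)) = G m + p • G (m + 2))
    (v : ℕ) : HeckeRecurrence T p (fun k => p ^ (k + 1) • ladderSum p G v (k + 2)) := fun k => by
  simp only [map_smul, map_ladderSum hB]
  module

theorem apply_add_eq_ladderSum (h0 : Tn 0 = LinearMap.id) (h1 : Tn 1 = T)
    (hrec : ∀ n, Tn (n + 2) = T ∘ₗ Tn (n + 1) - p • Tn n)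
    (hB : ∀ m, T (G (m + 1)) = G m + p • G (m + 2)) (n d : ℕ) :
    Tn n (G (n + d)) = ladderSum p G (n + 1) d := by
  induction n using Nat.twoStepInduction generalizing d with
  | zero => simp [h0, ladderSum_succ, ladderSum_zero]
  | one => simp [h1, add_comm 1 d, hB, ladderSum_succ, ladderSum_zero]
  | more n ih0 ih1 =>
    rw [hrec, LinearMap.sub_apply, LinearMap.comp_apply, LinearMap.smul_apply,
      show n + 2 + d = n + 1 + (d + 1) by ring, ih1, show n + 1 + (d + 1) = n + (d + 2) by ring,
      ih0, map_ladderSum hB, ladderSum_succ p G (n + 2), ladderSum_succ p G (n + 1)]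
    module

theorem apply_add_eq_boundarySum_add (h0 : Tn 0 = LinearMap.id) (h1 : Tn 1 = T)
    (hrec : ∀ n, Tn (n + 2) = T ∘ₗ Tn (n + 1) - p • Tn n)
    (hA : T (G 0) = χ • G 0 + p • G 1) (hB : ∀ m, T (G (m + 1)) = G m + p • G (m + 2))
    (v k : ℕ) :
    Tn (v + k) (G v) = boundarySum p χ G k + p ^ (k + 1) • ladderSum p G v (k + 2) := by
  refine congrFun ((heckeRecurrence_apply_add hrec v (G v)).eq_of_eq_init
    ((heckeRecurrence_boundarySum hA hB).add (heckeRecurrence_smul_ladderSum hB v)) ?_ ?_) k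
  · simpa [boundarySum_zero, ladderSum_succ] using apply_add_eq_ladderSum h0 h1 hrec hB v 0
  · cases v with
    | zero => simp [h1, hA, boundarySum_succ, boundarySum_zero, ladderSum_zero]
    | succ w =>
      have hw := apply_add_eq_ladderSum h0 h1 hrec hB w 1
      have hw' := apply_add_eq_ladderSum h0 h1 hrec hB (w + 1) 0
      simp only [add_zero] at hw'
      simp only [Pi.add_apply, zero_add, hrec, LinearMap.sub_apply, LinearMap.comp_apply,
        LinearMap.smul_apply, hw, hw', ladderSum_succ p G (w + 1) 0, map_add, map_smul, hA,
        map_ladderSum hB, boundarySum_succ, boundarySum_zero]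
      module

end

theorem stmt_1_general {p : ℕ} [Fact p.Prime]
    {M : Type*} [AddCommGroup M] [Module ℤ M]
    (g : ℕ → M) (T : M →ₗ[ℤ] M)
    (hT : ∀ D : ℕ, 0 < D →
      T (g D) = (if p ^ 2 ∣ D then g (D / p ^ 2) else 0)
        + (legendreSym p (D : ℤ)) • g D + (p : ℤ) • g (p ^ 2 * D))
    (Tn : ℕ → M →ₗ[ℤ] M)
    (hTn0 : Tn 0 = LinearMap.id) (hTn1 : Tn 1 = T)
    (hTnrec : ∀ n : ℕ, Tn (n + 2) = T ∘ₗ Tn (n + 1) - (p : ℤ) • Tn n)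
    (j v : ℕ) (hj : 0 < j) (hjp : ¬ p ^ 2 ∣ j)
    (D : ℕ) (hD : D = p ^ (2 * v) * j)
    (n : ℕ) (hn : v ≤ n) :
    Tn n (g D) =
      ∑ t ∈ Finset.range (n - v + 1),
        ((legendreSym p (j : ℤ)) ^ (n - v - t) * (p : ℤ) ^ t) •
          g (p ^ (2 * t) * j)
      + ∑ t ∈ Finset.Icc 1 v,
          ((p : ℤ) ^ (n - v + t)) • g (p ^ (2 * (n - v) + 4 * t) * j) := by
  -- `ℤ`-module structures are unique: identify the given one with `zsmul`, which `•` elaborates to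
  obtain rfl : ‹Module ℤ M› = AddCommGroup.toIntModule M := Subsingleton.elim _ _
  have hp0 : 0 < p := (Fact.out : p.Prime).pos
  have hA : T (g (p ^ (2 * 0) * j)) =
      legendreSym p j • g (p ^ (2 * 0) * j) + (p : ℤ) • g (p ^ (2 * 1) * j) := by
    simpa [hjp] using hT j hj
  have hB (m : ℕ) : T (g (p ^ (2 * (m + 1)) * j)) =
      g (p ^ (2 * m) * j) + (p : ℤ) • g (p ^ (2 * (m + 2)) * j) := by
    have hdvd : p ^ 2 ∣ p ^ (2 * (m + 1)) * j := Dvd.dvd.mul_right (pow_dvd_pow p (by omega)) j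
    have hleg : legendreSym p ((p ^ (2 * (m + 1)) * j : ℕ) : ℤ) = 0 := by
      simp [legendreSym.eq_zero_iff]
    have hdiv : p ^ (2 * (m + 1)) * j / p ^ 2 = p ^ (2 * m) * j :=
      Nat.div_eq_of_eq_mul_left (by positivity) (by ring)
    rw [hT _ (by positivity), if_pos hdvd, hleg, zero_smul, add_zero, hdiv,
      show p ^ 2 * (p ^ (2 * (m + 1)) * j) = p ^ (2 * (m + 2)) * j by ring]
  obtain ⟨k, rfl⟩ := Nat.exists_eq_add_of_le hn
  rw [hD, Nat.add_sub_cancel_left,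
    apply_add_eq_boundarySum_add (G := fun m => g (p ^ (2 * m) * j)) hTn0 hTn1 hTnrec hA hB,
    smul_ladderSum_eq_sum_Icc]
  simp only [boundarySum, mul_add, ← mul_assoc]
  rfl

/-- Action of the Hecke operators `T(p^{2n})` on Zagier's weight 3/2 forms
`g_D`, for `D = p^{2v}·j` with `p² ∤ j` and `n ≥ v`. -/
theorem stmt_1 {p : ℕ} [Fact p.Prime] (hp : p ≠ 2)
    {M : Type*} [AddCommGroup M] [Module ℤ M]
    (g : ℕ → M) (T : M →ₗ[ℤ] M)
    (hT : ∀ D : ℕ, 0 < D →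
      T (g D) = (if p ^ 2 ∣ D then g (D / p ^ 2) else 0)
        + (legendreSym p (D : ℤ)) • g D + (p : ℤ) • g (p ^ 2 * D))
    (Tn : ℕ → M →ₗ[ℤ] M)
    (hTn0 : Tn 0 = LinearMap.id) (hTn1 : Tn 1 = T)
    (hTnrec : ∀ n : ℕ, Tn (n + 2) = T ∘ₗ Tn (n + 1) - (p : ℤ) • Tn n)
    (j v : ℕ) (hj : 0 < j) (hjp : ¬ p ^ 2 ∣ j)
    (D : ℕ) (hD : D = p ^ (2 * v) * j)
    (n : ℕ) (hn : v ≤ n) :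
    Tn n (g D) =
      ∑ t ∈ Finset.range (n - v + 1),
        ((legendreSym p (j : ℤ)) ^ (n - v - t) * (p : ℤ) ^ t) •
          g (p ^ (2 * t) * j)
      + ∑ t ∈ Finset.Icc 1 v,
          ((p : ℤ) ^ (n - v + t)) • g (p ^ (2 * (n - v) + 4 * t) * j) :=
  stmt_1_general g T hT Tn hTn0 hTn1 hTnrec j v hj hjp D hD n hn
end

section
/- Let j be a positive integer with p² ∤ j, let v ≥ 0 be an integer, and set D = p^{2v}·j. Then for every integer n with 0 ≤ n < v, T_n(g_D) = Σ_{t=0}^{n} p^t·g_{p^{2v−2n+4t}·j}. -/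
/-!
Write `h k = g (p ^ (2 * k) * j)`. For `k ≥ 1` the discriminant `p ^ (2 * k) * j` is divisible
by `p²`, so its Legendre symbol vanishes and `T` acts on `h` as a pure lowering/raising operator:
`T (h (k + 1)) = h k + p • h (k + 2)`. For any operator of this shape, the Chebyshev-type
recursion `T_{n+2} = T T_{n+1} - p T_n` gives `T_n (h (k + n)) = ∑_{t ≤ n} p ^ t • h (k + 2t)` by
two-step induction.
-/

open Finset

section LoweringRaising

variable {S M : Type*} [Semiring S] [AddCommGroup M] [Module S M]
  (T : M →ₗ[S] M) (c : ℤ) (Tn : ℕ → M →ₗ[S] M) (h : ℕ → M)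

theorem map_sum_of_lowering_raising (hT : ∀ k, T (h (k + 1)) = h k + c • h (k + 2)) (k n : ℕ) :
    T (∑ t ∈ range n, c ^ t • h (k + 1 + 2 * t)) =
      ∑ t ∈ range n, c ^ t • h (k + 2 * t) + ∑ t ∈ range n, c ^ (t + 1) • h (k + 2 + 2 * t) := by
  rw [map_sum, ← sum_add_distrib]
  refine sum_congr rfl fun t _ => ?_
  rw [map_zsmul, show k + 1 + 2 * t = k + 2 * t + 1 by ring, hT, smul_add, pow_succ, mul_smul]
  ring_nf

theorem apply_eq_sum_of_lowering_raising (h0 : Tn 0 = LinearMap.id) (h1 : Tn 1 = T)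
    (hrec : ∀ n, Tn (n + 2) = T ∘ₗ Tn (n + 1) - c • Tn n)
    (hT : ∀ k, T (h (k + 1)) = h k + c • h (k + 2)) (n k : ℕ) :
    Tn n (h (k + n)) = ∑ t ∈ range (n + 1), c ^ t • h (k + 2 * t) := by
  induction n using Nat.twoStepInduction generalizing k with
  | zero => simp [h0]
  | one => simp [h1, hT, sum_range_succ]
  | more n ih₀ ih₁ =>
    rw [hrec, LinearMap.sub_apply, LinearMap.comp_apply, LinearMap.smul_apply,
      show k + (n + 2) = k + 1 + (n + 1) by ring, ih₁, show k + 1 + (n + 1) = k + 2 + n by ring,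
      ih₀, map_sum_of_lowering_raising T c h hT, smul_sum]
    simp only [smul_smul, ← pow_succ']
    rw [sum_range_succ _ (n + 2), sum_range_succ (fun t => c ^ (t + 1) • h (k + 2 + 2 * t)),
      show k + 2 + 2 * (n + 1) = k + 2 * (n + 2) by ring]
    abel

end LoweringRaising

theorem hecke_apply_pow_mul {p : ℕ} [Fact p.Prime] {M : Type*} [AddCommGroup M] [Module ℤ M]
    {g : ℕ → M} {T : M →ₗ[ℤ] M}
    (hT : ∀ D : ℕ, 0 < D →
      T (g D) = (if p ^ 2 ∣ D then g (D / p ^ 2) else 0)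
        + (legendreSym p (D : ℤ)) • g D + (p : ℤ) • g (p ^ 2 * D))
    {j : ℕ} (hj : 0 < j) (k : ℕ) :
    T (g (p ^ (2 * (k + 1)) * j)) = g (p ^ (2 * k) * j) + (p : ℤ) • g (p ^ (2 * (k + 2)) * j) := by
  have hp : 0 < p := (Fact.out : p.Prime).pos
  have hpow : ∀ i, p ^ (2 * (i + 1)) * j = p ^ 2 * (p ^ (2 * i) * j) := fun i => by ring
  have hleg : legendreSym p ((p ^ 2 * (p ^ (2 * k) * j) : ℕ) : ℤ) = 0 := by
    rw [legendreSym.eq_zero_iff]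
    simp
  rw [hpow, hT _ (by positivity), if_pos (dvd_mul_right _ _), hleg,
    Nat.mul_div_cancel_left _ (by positivity), zero_smul, add_zero, ← hpow, ← hpow]

theorem stmt_2_general {p : ℕ} [Fact p.Prime]
    {M : Type*} [AddCommGroup M] [Module ℤ M]
    (g : ℕ → M) (T : M →ₗ[ℤ] M)
    (hT : ∀ D : ℕ, 0 < D →
      T (g D) = (if p ^ 2 ∣ D then g (D / p ^ 2) else 0)
        + (legendreSym p (D : ℤ)) • g D + (p : ℤ) • g (p ^ 2 * D))
    (Tn : ℕ → M →ₗ[ℤ] M)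
    (hTn0 : Tn 0 = LinearMap.id) (hTn1 : Tn 1 = T)
    (hTnrec : ∀ n : ℕ, Tn (n + 2) = T ∘ₗ Tn (n + 1) - (p : ℤ) • Tn n)
    (j v : ℕ) (hj : 0 < j)
    (D : ℕ) (hD : D = p ^ (2 * v) * j)
    (n : ℕ) (hn : n < v) :
    Tn n (g D) =
      ∑ t ∈ Finset.range (n + 1),
        ((p : ℤ) ^ t) • g (p ^ (2 * (v - n) + 4 * t) * j) := by
  have hsum := apply_eq_sum_of_lowering_raising T (p : ℤ) Tn (fun k => g (p ^ (2 * k) * j))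
    hTn0 hTn1 hTnrec (hecke_apply_pow_mul hT hj) n (v - n)
  rw [Nat.sub_add_cancel hn.le] at hsum
  rw [hD, hsum]
  refine sum_congr rfl fun t _ => ?_
  congr 2
  ring

/-- Action of the Hecke operators `T(p^{2n})` on Zagier's weight 3/2 forms
`g_D`, for `D = p^{2v}·j` with `p² ∤ j` and `0 ≤ n < v`. -/
theorem stmt_2 {p : ℕ} [Fact p.Prime] (hp : p ≠ 2)
    {M : Type*} [AddCommGroup M] [Module ℤ M]
    (g : ℕ → M) (T : M →ₗ[ℤ] M)
    (hT : ∀ D : ℕ, 0 < D →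
      T (g D) = (if p ^ 2 ∣ D then g (D / p ^ 2) else 0)
        + (legendreSym p (D : ℤ)) • g D + (p : ℤ) • g (p ^ 2 * D))
    (Tn : ℕ → M →ₗ[ℤ] M)
    (hTn0 : Tn 0 = LinearMap.id) (hTn1 : Tn 1 = T)
    (hTnrec : ∀ n : ℕ, Tn (n + 2) = T ∘ₗ Tn (n + 1) - (p : ℤ) • Tn n)
    (j v : ℕ) (hj : 0 < j) (hjp : ¬ p ^ 2 ∣ j)
    (D : ℕ) (hD : D = p ^ (2 * v) * j)
    (n : ℕ) (hn : n < v) :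
    Tn n (g D) =
      ∑ t ∈ Finset.range (n + 1),
        ((p : ℤ) ^ t) • g (p ^ (2 * (v - n) + 4 * t) * j) :=
  stmt_2_general g T hT Tn hTn0 hTn1 hTnrec j v hj D hD n hn
end

section
/- Let i be a positive integer with p² ∤ i, let u ≥ 0 be an integer, and set d = p^{2u}·i. Then for every integer n ≥ u, T_n(f_d) = Σ_{t=0}^{n−u} (−i/p)^{n−u−t}·p^u·f_{p^{2t}·i} + Σ_{t=1}^{u} p^{u−t}·f_{p^{2n−2u+4t}·i}. -/
/-!
Write `g t = f (p ^ (2 * t) * i)` and `ε = (-i/p)`. On these vectors `T` is tridiagonal: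
`T g (m + 1) = p g m + g (m + 2)`, and `T g 0 = ε g 0 + g 1` because `p² ∤ i`.
Away from the boundary `T_n` acts like a Chebyshev polynomial,
`T_n g (n + j) = ∑_{t ≤ n} p ^ (n - t) g (j + 2t)`. The boundary term is absorbed by the
twisted sums `S k = ∑_{t ≤ k} ε ^ (k - t) g t`, which satisfy
`T S (k + 1) = S (k + 2) + p S k`, the recurrence of the `T_n`. Hence `n ↦ T_n g u` and
`n ↦ p ^ u S (n - u) + ∑_t p ^ (u - t) g (n - u + 2t)` obey the same three-term recurrence
for `n ≥ u`, and the Chebyshev formula shows that they agree at `n = u` and `n = u + 1`.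
-/

open Finset

section Tridiagonal

variable {R M : Type*} [CommRing R] [AddCommGroup M] [Module R M]

def chebyshevSum (c : R) (g : ℕ → M) (n j : ℕ) : M :=
  ∑ t ∈ range n, c ^ (n - 1 - t) • g (j + 2 * t)

def twistedSum (ε : R) (g : ℕ → M) (k : ℕ) : M :=
  ∑ t ∈ range (k + 1), ε ^ (k - t) • g t

theorem chebyshevSum_succ (c : R) (g : ℕ → M) (n j : ℕ) :
    chebyshevSum c g (n + 1) j = c ^ n • g j + chebyshevSum c g n (j + 2) := by
  rw [chebyshevSum, chebyshevSum, sum_range_succ', add_comm]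
  congr 1
  refine sum_congr rfl fun t _ => ?_
  rw [show n + 1 - 1 - (t + 1) = n - 1 - t by omega, show j + 2 * (t + 1) = j + 2 + 2 * t by ring]

theorem twistedSum_zero (ε : R) (g : ℕ → M) : twistedSum ε g 0 = g 0 := by
  simp [twistedSum]

theorem twistedSum_succ (ε : R) (g : ℕ → M) (k : ℕ) :
    twistedSum ε g (k + 1) = ε • twistedSum ε g k + g (k + 1) := by
  rw [twistedSum, sum_range_succ, twistedSum, smul_sum, Nat.sub_self, pow_zero, one_smul]
  congr 1
  refine sum_congr rfl fun t ht => ?_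
  rw [smul_smul, ← pow_succ', Nat.sub_add_comm (Nat.le_of_lt_succ (mem_range.mp ht))]

theorem chebyshevSum_add_two_eq_sum_Icc (c : R) (g : ℕ → M) (n j : ℕ) :
    chebyshevSum c g n (j + 2) = ∑ t ∈ Icc 1 n, c ^ (n - t) • g (j + 2 * t) := by
  rw [chebyshevSum, ← Ico_add_one_right_eq_Icc, ← sum_Ico_add' _ 0 n 1, ← range_eq_Ico]
  refine sum_congr rfl fun t _ => ?_
  rw [show n - 1 - t = n - (t + 1) by omega, show j + 2 + 2 * t = j + 2 * (t + 1) by ring]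

variable (T : M →ₗ[R] M) {c ε : R} {g : ℕ → M}
  (hstep : ∀ m, T (g (m + 1)) = c • g m + g (m + 2))
include hstep

theorem map_chebyshevSum (n j : ℕ) :
    T (chebyshevSum c g n (j + 1)) = chebyshevSum c g n (j + 2) + c • chebyshevSum c g n j := by
  simp only [chebyshevSum, map_sum, map_smul, smul_sum, ← sum_add_distrib]
  refine sum_congr rfl fun t _ => ?_
  rw [show j + 1 + 2 * t = j + 2 * t + 1 by ring, hstep, smul_add, smul_comm c,
    show j + 2 * t + 2 = j + 2 + 2 * t by ring, add_comm]

theorem map_twistedSum_succ (hbase : T (g 0) = ε • g 0 + g 1) (k : ℕ) :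
    T (twistedSum ε g (k + 1)) = twistedSum ε g (k + 2) + c • twistedSum ε g k := by
  induction k with
  | zero =>
    rw [twistedSum_succ, map_add, map_smul, twistedSum_zero, hbase, hstep, twistedSum_succ,
      twistedSum_succ, twistedSum_zero]
    module
  | succ k ih =>
    rw [twistedSum_succ ε g (k + 1), map_add, map_smul, ih, hstep, twistedSum_succ ε g (k + 2),
      twistedSum_succ ε g k]
    module

end Tridiagonal

section Recurrence

variable {R M : Type*} [CommRing R] [AddCommGroup M] [Module R M]
  {T : M →ₗ[R] M} {c : R} {Tn : ℕ → M →ₗ[R] M}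
  (hTnrec : ∀ n, Tn (n + 2) = T ∘ₗ Tn (n + 1) - c • Tn n)
include hTnrec

theorem apply_add_eq_of_recurrence {v : M} {N : ℕ} {x : ℕ → M}
    (hx : ∀ m, T (x (m + 1)) = x (m + 2) + c • x m)
    (h0 : Tn N v = x 0) (h1 : Tn (N + 1) v = x 1) (m : ℕ) : Tn (N + m) v = x m := by
  induction m using Nat.twoStepInduction with
  | zero => exact h0
  | one => exact h1
  | more m ih0 ih1 =>
    rw [← add_assoc] at ih1 ⊢
    rw [hTnrec, LinearMap.sub_apply, LinearMap.comp_apply, LinearMap.smul_apply, ih1, ih0, hx,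
      add_sub_cancel_right]

variable {g : ℕ → M} (hstep : ∀ m, T (g (m + 1)) = c • g m + g (m + 2))
  (hTn0 : Tn 0 = LinearMap.id) (hTn1 : Tn 1 = T)
include hstep hTn0 hTn1

theorem apply_add_eq_chebyshevSum (n j : ℕ) : Tn n (g (n + j)) = chebyshevSum c g (n + 1) j := by
  induction n using Nat.twoStepInduction generalizing j with
  | zero => simp [hTn0, chebyshevSum]
  | one => simp [hTn1, chebyshevSum, sum_range_succ, add_comm 1 j, hstep]
  | more n ih0 ih1 =>
    have h1 := ih1 (j + 1)
    have h0 := ih0 (j + 2)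
    rw [show n + 1 + (j + 1) = n + 2 + j by ring] at h1
    rw [show n + (j + 2) = n + 2 + j by ring] at h0
    rw [hTnrec, LinearMap.sub_apply, LinearMap.comp_apply, LinearMap.smul_apply, h1, h0,
      chebyshevSum_succ c g (n + 1) (j + 1), map_add, map_smul, hstep, map_chebyshevSum T hstep,
      chebyshevSum_succ c g (n + 2), chebyshevSum_succ c g (n + 1) (j + 2)]
    module

theorem apply_add_eq_twistedSum {ε : R} (hbase : T (g 0) = ε • g 0 + g 1) (u k : ℕ) :
    Tn (u + k) (g u) = c ^ u • twistedSum ε g k + chebyshevSum c g u (k + 2) := by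
  have h0 : Tn u (g u) = c ^ u • twistedSum ε g 0 + chebyshevSum c g u 2 := by
    simpa [twistedSum_zero, chebyshevSum_succ] using
      apply_add_eq_chebyshevSum hTnrec hstep hTn0 hTn1 u 0
  have hT0 : T (twistedSum ε g 0) = twistedSum ε g 1 := by
    rw [twistedSum_succ, twistedSum_zero, hbase]
  refine apply_add_eq_of_recurrence hTnrec
    (x := fun k => c ^ u • twistedSum ε g k + chebyshevSum c g u (k + 2)) (fun m => ?_) h0 ?_ k
  · rw [map_add, map_smul, map_twistedSum_succ T hstep hbase, map_chebyshevSum T hstep]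
    module
  cases u with
  | zero => simp [hTn1, ← hT0, twistedSum_zero, chebyshevSum]
  | succ v =>
    rw [hTnrec, LinearMap.sub_apply, LinearMap.comp_apply, LinearMap.smul_apply, h0,
      apply_add_eq_chebyshevSum hTnrec hstep hTn0 hTn1 v 1, map_add, map_smul, hT0,
      map_chebyshevSum T hstep (v + 1) 1]
    module

end Recurrence

section ZagierForms

variable {p : ℕ} [Fact p.Prime] {M : Type*} [AddCommGroup M] [Module ℤ M]
  {f : ℕ → M} {T : M →ₗ[ℤ] M}
  (hT : ∀ d : ℕ, 0 < d →
    T (f d) = (p : ℤ) • (if p ^ 2 ∣ d then f (d / p ^ 2) else 0)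
      + (legendreSym p (-(d : ℤ))) • f d + f (p ^ 2 * d))
  {i : ℕ} (hi : 0 < i)
include hT hi

theorem map_f_pow_mul (m : ℕ) :
    T (f (p ^ (2 * (m + 1)) * i)) =
      (p : ℤ) • f (p ^ (2 * m) * i) + f (p ^ (2 * (m + 2)) * i) := by
  have hp : 0 < p := (Fact.out : p.Prime).pos
  have hdvd : p ^ 2 ∣ p ^ (2 * (m + 1)) * i := Dvd.dvd.mul_right (pow_dvd_pow p (by omega)) i
  have hdiv : p ^ (2 * (m + 1)) * i / p ^ 2 = p ^ (2 * m) * i := by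
    rw [show p ^ (2 * (m + 1)) * i = p ^ 2 * (p ^ (2 * m) * i) by ring,
      Nat.mul_div_cancel_left _ (pow_pos hp 2)]
  have hleg : legendreSym p (-((p ^ (2 * (m + 1)) * i : ℕ) : ℤ)) = 0 := by
    rw [legendreSym.eq_zero_iff]
    push_cast
    simp [zero_pow (show 2 * (m + 1) ≠ 0 by omega)]
  rw [hT _ (by positivity), if_pos hdvd, hdiv, hleg, zero_smul, add_zero,
    show p ^ 2 * (p ^ (2 * (m + 1)) * i) = p ^ (2 * (m + 2)) * i by ring]

theorem map_f_of_not_dvd (hip : ¬ p ^ 2 ∣ i) :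
    T (f (p ^ (2 * 0) * i)) =
      legendreSym p (-(i : ℤ)) • f (p ^ (2 * 0) * i) + f (p ^ (2 * 1) * i) := by
  simpa [hip] using hT i hi

end ZagierForms

theorem stmt_3_general {p : ℕ} [Fact p.Prime]
    {M : Type*} [AddCommGroup M] [Module ℤ M]
    (f : ℕ → M) (T : M →ₗ[ℤ] M)
    (hT : ∀ d : ℕ, 0 < d →
      T (f d) = (p : ℤ) • (if p ^ 2 ∣ d then f (d / p ^ 2) else 0)
        + (legendreSym p (-(d : ℤ))) • f d + f (p ^ 2 * d))
    (Tn : ℕ → M →ₗ[ℤ] M)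
    (hTn0 : Tn 0 = LinearMap.id) (hTn1 : Tn 1 = T)
    (hTnrec : ∀ n : ℕ, Tn (n + 2) = T ∘ₗ Tn (n + 1) - (p : ℤ) • Tn n)
    (i u : ℕ) (hi : 0 < i) (hip : ¬ p ^ 2 ∣ i)
    (d : ℕ) (hd : d = p ^ (2 * u) * i)
    (n : ℕ) (hn : u ≤ n) :
    Tn n (f d) =
      ∑ t ∈ Finset.range (n - u + 1),
        ((legendreSym p (-(i : ℤ))) ^ (n - u - t) * (p : ℤ) ^ u) •
          f (p ^ (2 * t) * i)
      + ∑ t ∈ Finset.Icc 1 u,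
          ((p : ℤ) ^ (u - t)) • f (p ^ (2 * (n - u) + 4 * t) * i) := by
  -- The `ℤ`-actions in the statement are `zsmul`; making the module structure the canonical one
  -- identifies them with the module action of the general lemmas.
  obtain rfl : ‹Module ℤ M› = AddCommGroup.toIntModule M := Subsingleton.elim _ _
  obtain ⟨k, rfl⟩ := Nat.exists_eq_add_of_le hn
  rw [hd, apply_add_eq_twistedSum hTnrec (g := fun t => f (p ^ (2 * t) * i))
      (map_f_pow_mul hT hi) hTn0 hTn1 (map_f_of_not_dvd hT hi hip) u k,
    chebyshevSum_add_two_eq_sum_Icc, twistedSum, smul_sum, Nat.add_sub_cancel_left]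
  congr 1
  · refine sum_congr rfl fun t _ => ?_
    rw [smul_smul, mul_comm]
  · refine sum_congr rfl fun t _ => ?_
    rw [show 2 * (k + 2 * t) = 2 * k + 4 * t by ring]

/-- Action of the normalized Hecke operators `T(p^{2n})` on Zagier's weight 1/2
forms `f_d`, for `d = p^{2u}·i` with `p² ∤ i` and `n ≥ u`. -/
theorem stmt_3 {p : ℕ} [Fact p.Prime] (hp : p ≠ 2)
    {M : Type*} [AddCommGroup M] [Module ℤ M]
    (f : ℕ → M) (T : M →ₗ[ℤ] M)
    (hT : ∀ d : ℕ, 0 < d →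
      T (f d) = (p : ℤ) • (if p ^ 2 ∣ d then f (d / p ^ 2) else 0)
        + (legendreSym p (-(d : ℤ))) • f d + f (p ^ 2 * d))
    (Tn : ℕ → M →ₗ[ℤ] M)
    (hTn0 : Tn 0 = LinearMap.id) (hTn1 : Tn 1 = T)
    (hTnrec : ∀ n : ℕ, Tn (n + 2) = T ∘ₗ Tn (n + 1) - (p : ℤ) • Tn n)
    (i u : ℕ) (hi : 0 < i) (hip : ¬ p ^ 2 ∣ i)
    (d : ℕ) (hd : d = p ^ (2 * u) * i)
    (n : ℕ) (hn : u ≤ n) :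
    Tn n (f d) =
      ∑ t ∈ Finset.range (n - u + 1),
        ((legendreSym p (-(i : ℤ))) ^ (n - u - t) * (p : ℤ) ^ u) •
          f (p ^ (2 * t) * i)
      + ∑ t ∈ Finset.Icc 1 u,
          ((p : ℤ) ^ (u - t)) • f (p ^ (2 * (n - u) + 4 * t) * i) :=
  stmt_3_general f T hT Tn hTn0 hTn1 hTnrec i u hi hip d hd n hn
end

section
/- Let i be a positive integer with p² ∤ i, let u ≥ 0 be an integer, and set d = p^{2u}·i. Then for every integer n with 0 ≤ n < u, T_n(f_d) = Σ_{t=0}^{n} p^{n−t}·f_{p^{2u−2n+4t}·i}. -/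
/-!
Write `g k = f (p^{2k} i)`. Since `p ∣ d` for every `d = p^{2(k+1)} i`, the Legendre symbol term
vanishes and `T` acts on the chain `g` as the three-term raising/lowering operator
`T (g (k+1)) = p • g k + g (k+2)`. Any family `T_n` satisfying the Chebyshev-type recursion
`T_{n+2} = T T_{n+1} - p T_n` then acts on `g (m+n)` as `∑_{t ≤ n} p^{n-t} • g (m+2t)`, by
two-step induction on `n`, shifting `m` in the inductive hypotheses.
-/

open Finset

section Recursion

variable {R M : Type*} [CommRing R] [AddCommGroup M] [Module R M] (c : R)

lemma smul_sum_pow_sub_smul (x : ℕ → M) (n : ℕ) :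
    c • ∑ t ∈ range (n + 1), c ^ (n - t) • x t =
      ∑ t ∈ range (n + 1), c ^ (n + 1 - t) • x t := by
  rw [smul_sum]
  refine sum_congr rfl fun t ht => ?_
  rw [smul_smul, ← pow_succ', Nat.sub_add_comm (Nat.lt_succ_iff.mp (mem_range.mp ht))]

variable {c} {T : M →ₗ[R] M} {g : ℕ → M}

lemma map_sum_pow_sub_smul_of_raising (hg : ∀ k, T (g (k + 1)) = c • g k + g (k + 2))
    (n m : ℕ) :
    T (∑ t ∈ range (n + 1), c ^ (n - t) • g (m + 1 + 2 * t)) =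
      ∑ t ∈ range (n + 1), c ^ (n + 1 - t) • g (m + 2 * t) +
        ∑ t ∈ range (n + 1), c ^ (n - t) • g (m + 2 + 2 * t) := by
  rw [map_sum, ← sum_add_distrib]
  refine sum_congr rfl fun t ht => ?_
  rw [map_smul, show m + 1 + 2 * t = m + 2 * t + 1 by ring, hg, smul_add, smul_smul, ← pow_succ,
    Nat.sub_add_comm (Nat.lt_succ_iff.mp (mem_range.mp ht)),
    show m + 2 * t + 2 = m + 2 + 2 * t by ring]

theorem apply_of_raising_of_chebyshev (hg : ∀ k, T (g (k + 1)) = c • g k + g (k + 2))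
    {Tn : ℕ → M →ₗ[R] M} (hTn0 : Tn 0 = LinearMap.id) (hTn1 : Tn 1 = T)
    (hTnrec : ∀ n, Tn (n + 2) = T ∘ₗ Tn (n + 1) - c • Tn n) (n m : ℕ) :
    Tn n (g (m + n)) = ∑ t ∈ range (n + 1), c ^ (n - t) • g (m + 2 * t) := by
  induction n using Nat.twoStepInduction generalizing m with
  | zero => simp [hTn0]
  | one => simp [hTn1, sum_range_succ, hg]
  | more n ih ih1 =>
    have h1 := ih1 (m + 1)
    have h0 := ih (m + 2)
    rw [show m + 1 + (n + 1) = m + (n + 2) by ring] at h1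
    rw [show m + 2 + n = m + (n + 2) by ring] at h0
    rw [hTnrec, LinearMap.sub_apply, LinearMap.comp_apply, LinearMap.smul_apply, h1, h0,
      map_sum_pow_sub_smul_of_raising hg, smul_sum_pow_sub_smul,
      sum_range_succ (fun t => c ^ (n + 1 - t) • g (m + 2 + 2 * t)) (n + 1),
      sum_range_succ (fun t => c ^ (n + 2 - t) • g (m + 2 * t)) (n + 2)]
    simp only [Nat.sub_self, pow_zero, one_smul]
    rw [show m + 2 + 2 * (n + 1) = m + 2 * (n + 2) by ring]
    abel

end Recursion

section Hecke

variable {p : ℕ} [Fact p.Prime] {M : Type*} [AddCommGroup M] [Module ℤ M]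
  {f : ℕ → M} {T : M →ₗ[ℤ] M}

lemma hecke_apply_of_sq_dvd
    (hT : ∀ d : ℕ, 0 < d →
      T (f d) = (p : ℤ) • (if p ^ 2 ∣ d then f (d / p ^ 2) else 0)
        + (legendreSym p (-(d : ℤ))) • f d + f (p ^ 2 * d))
    {d : ℕ} (hd : 0 < d) (hpd : p ^ 2 ∣ d) :
    T (f d) = (p : ℤ) • f (d / p ^ 2) + f (p ^ 2 * d) := by
  have hleg : legendreSym p (-(d : ℤ)) = 0 := by
    rw [legendreSym.eq_zero_iff]
    exact_mod_cast neg_eq_zero.mpr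
      ((ZMod.natCast_eq_zero_iff d p).mpr ((dvd_pow_self p two_ne_zero).trans hpd))
  rw [hT d hd, if_pos hpd, hleg, zero_smul, add_zero]

lemma hecke_apply_sq_pow_succ_mul
    (hT : ∀ d : ℕ, 0 < d →
      T (f d) = (p : ℤ) • (if p ^ 2 ∣ d then f (d / p ^ 2) else 0)
        + (legendreSym p (-(d : ℤ))) • f d + f (p ^ 2 * d))
    {i : ℕ} (hi : 0 < i) (k : ℕ) :
    T (f (p ^ (2 * (k + 1)) * i)) =
      (p : ℤ) • f (p ^ (2 * k) * i) + f (p ^ (2 * (k + 2)) * i) := by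
  have hp : 0 < p := (Fact.out : p.Prime).pos
  have hsplit : p ^ (2 * (k + 1)) * i = p ^ 2 * (p ^ (2 * k) * i) := by ring
  rw [hecke_apply_of_sq_dvd hT (by positivity) (hsplit ▸ dvd_mul_right _ _), hsplit,
    Nat.mul_div_cancel_left _ (by positivity)]
  congr 2
  ring

end Hecke

theorem stmt_4_general {p : ℕ} [Fact p.Prime]
    {M : Type*} [AddCommGroup M] [Module ℤ M]
    (f : ℕ → M) (T : M →ₗ[ℤ] M)
    (hT : ∀ d : ℕ, 0 < d →
      T (f d) = (p : ℤ) • (if p ^ 2 ∣ d then f (d / p ^ 2) else 0)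
        + (legendreSym p (-(d : ℤ))) • f d + f (p ^ 2 * d))
    (Tn : ℕ → M →ₗ[ℤ] M)
    (hTn0 : Tn 0 = LinearMap.id) (hTn1 : Tn 1 = T)
    (hTnrec : ∀ n : ℕ, Tn (n + 2) = T ∘ₗ Tn (n + 1) - (p : ℤ) • Tn n)
    (i u : ℕ) (hi : 0 < i)
    (d : ℕ) (hd : d = p ^ (2 * u) * i)
    (n : ℕ) (hn : n < u) :
    Tn n (f d) =
      ∑ t ∈ Finset.range (n + 1),
        ((p : ℤ) ^ (n - t)) • f (p ^ (2 * (u - n) + 4 * t) * i) := by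
  -- `(p : ℤ) • Tn n` elaborates to `zsmul`, which matches `LinearMap`'s scalar action only for
  -- the canonical `ℤ`-module structure on `M`.
  obtain rfl : ‹Module ℤ M› = AddCommGroup.toIntModule M := Subsingleton.elim _ _
  rw [hd, show 2 * u = 2 * (u - n + n) by omega,
    apply_of_raising_of_chebyshev (g := fun k => f (p ^ (2 * k) * i))
      (hecke_apply_sq_pow_succ_mul hT hi) hTn0 hTn1 hTnrec n (u - n)]
  refine sum_congr rfl fun t _ => ?_
  rw [show 2 * (u - n + 2 * t) = 2 * (u - n) + 4 * t by ring]

/-- Action of the normalized Hecke operators `T(p^{2n})` on Zagier's weight 1/2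
forms `f_d`, for `d = p^{2u}·i` with `p² ∤ i` and `0 ≤ n < u`. -/
theorem stmt_4 {p : ℕ} [Fact p.Prime] (hp : p ≠ 2)
    {M : Type*} [AddCommGroup M] [Module ℤ M]
    (f : ℕ → M) (T : M →ₗ[ℤ] M)
    (hT : ∀ d : ℕ, 0 < d →
      T (f d) = (p : ℤ) • (if p ^ 2 ∣ d then f (d / p ^ 2) else 0)
        + (legendreSym p (-(d : ℤ))) • f d + f (p ^ 2 * d))
    (Tn : ℕ → M →ₗ[ℤ] M)
    (hTn0 : Tn 0 = LinearMap.id) (hTn1 : Tn 1 = T)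
    (hTnrec : ∀ n : ℕ, Tn (n + 2) = T ∘ₗ Tn (n + 1) - (p : ℤ) • Tn n)
    (i u : ℕ) (hi : 0 < i) (hip : ¬ p ^ 2 ∣ i)
    (d : ℕ) (hd : d = p ^ (2 * u) * i)
    (n : ℕ) (hn : n < u) :
    Tn n (f d) =
      ∑ t ∈ Finset.range (n + 1),
        ((p : ℤ) ^ (n - t)) • f (p ^ (2 * (u - n) + 4 * t) * i) :=
  stmt_4_general f T hT Tn hTn0 hTn1 hTnrec i u hi d hd n hn
end

section
/- Let j be a positive integer with p² ∤ j, let v ≥ 0 be an integer, and set D = p^{2v}·j. Then for every integer n ≥ v, T_n(G_D) = Σ_{t=0}^{n−v} (12/p)^{n−v−t}·(j/p)^{n−v−t}·p^t·G_{p^{2t}·j} + Σ_{t=1}^{v} p^{n−v+t}·G_{p^{2n−2v+4t}·j}. -/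
/-- Action of the Hecke operators `T₁₂(p^{2n})` on the Folsom–Ono weight 3/2
forms `G_D`, for `D = p^{2v}·j` with `p² ∤ j` and `n ≥ v`. -/
theorem stmt_5 {p : ℕ} [Fact p.Prime] (hp : 5 ≤ p)
    {M : Type*} [AddCommGroup M] [Module ℤ M]
    (G : ℕ → M) (T : M →ₗ[ℤ] M)
    (hT : ∀ D : ℕ, 0 < D →
      T (G D) = (if p ^ 2 ∣ D then G (D / p ^ 2) else 0)
        + (legendreSym p 12 * legendreSym p (D : ℤ)) • G D
        + (p : ℤ) • G (p ^ 2 * D))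
    (Tn : ℕ → M →ₗ[ℤ] M)
    (hTn0 : Tn 0 = LinearMap.id) (hTn1 : Tn 1 = T)
    (hTnrec : ∀ n : ℕ, Tn (n + 2) = T ∘ₗ Tn (n + 1) - (p : ℤ) • Tn n)
    (j v : ℕ) (hj : 0 < j) (hjp : ¬ p ^ 2 ∣ j)
    (D : ℕ) (hD : D = p ^ (2 * v) * j)
    (n : ℕ) (hn : v ≤ n) :
    Tn n (G D) =
      ∑ t ∈ Finset.range (n - v + 1),
        ((legendreSym p 12) ^ (n - v - t) * (legendreSym p (j : ℤ)) ^ (n - v - t)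
            * (p : ℤ) ^ t) • G (p ^ (2 * t) * j)
      + ∑ t ∈ Finset.Icc 1 v,
          ((p : ℤ) ^ (n - v + t)) • G (p ^ (2 * (n - v) + 4 * t) * j) := by
  subst hD
  have hprime : p.Prime := Fact.out
  have hp0 : 0 < p := hprime.pos
  set ε : ℤ := legendreSym p 12 * legendreSym p (j : ℤ) with hε
  have hGc : ∀ (a b : ℤ) (c d : ℕ), a = b → c = d →
      a • G (p ^ c * j) = b • G (p ^ d * j) := by
    rintro a b c d rfl rfl; rfl
  have TGlow : T (G (p ^ (2*0) * j)) = ε • G (p ^ (2*0) * j) + (p:ℤ) • G (p ^ (2*1) * j) := by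
    have e0 : p ^ (2*0) * j = j := by norm_num
    have e1 : p ^ 2 * j = p ^ (2*1) * j := by norm_num
    rw [e0, hT j hj, if_neg hjp, hε, e1]
    abel
  have TGhigh : ∀ e : ℕ, T (G (p ^ (2*e+2) * j)) =
      G (p ^ (2*e) * j) + (p:ℤ) • G (p ^ (2*e+4) * j) := by
    intro e
    have h1 : p ^ (2*e+2) * j = p ^ 2 * (p ^ (2*e) * j) := by ring
    have hdvd : p ^ 2 ∣ p ^ (2*e+2) * j := ⟨p ^ (2*e) * j, h1⟩
    have hdiv : p ^ (2*e+2) * j / p ^ 2 = p ^ (2*e) * j := by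
      rw [h1, Nat.mul_div_cancel_left _ (pow_pos hp0 2)]
    have hleg : legendreSym p ((p ^ (2*e+2) * j : ℕ) : ℤ) = 0 := by
      rw [legendreSym.eq_zero_iff]
      push_cast
      simp [ZMod.natCast_self]
    have h2 : p ^ 2 * (p ^ (2*e+2) * j) = p ^ (2*e+4) * j := by ring
    rw [hT _ (by positivity), if_pos hdvd, hdiv, hleg, mul_zero, zero_zsmul, add_zero, h2]
  -- pure regime: T_n on G_{p^{2(n+w)} j}
  have lemA : ∀ n w : ℕ, Tn n (G (p ^ (2*(n+w)) * j)) =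
      ∑ t ∈ Finset.range (n+1), ((p:ℤ)^t) • G (p ^ (2*w+4*t) * j) := by
    intro n
    induction n using Nat.strong_induction_on with
    | _ n ih =>
      match n with
      | 0 =>
        intro w
        rw [hTn0, Finset.sum_range_one]
        simp only [LinearMap.id_apply]
        rw [hGc ((p:ℤ)^0) 1 (2*w+4*0) (2*(0+w)) (by norm_num) (by ring), one_zsmul]
      | 1 =>
        intro w
        rw [hTn1, show 2*(1+w) = 2*w+2 from by ring, TGhigh w,
          Finset.sum_range_succ, Finset.sum_range_one]
        rw [hGc ((p:ℤ)^0) 1 (2*w+4*0) (2*w) (by norm_num) (by ring), one_zsmul]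
        rw [hGc ((p:ℤ)^1) (p:ℤ) (2*w+4*1) (2*w+4) (by norm_num) (by ring)]
      | (k+2) =>
        intro w
        rw [hTnrec k, LinearMap.sub_apply, LinearMap.comp_apply,
          show (((p:ℤ) • Tn k) (G (p ^ (2*((k+2)+w)) * j)) : M)
            = (p:ℤ) • Tn k (G (p ^ (2*((k+2)+w)) * j)) from rfl]
        rw [show 2*((k+2)+w) = 2*((k+1)+(w+1)) from by ring, ih (k+1) (by omega) (w+1)]
        rw [show 2*((k+1)+(w+1)) = 2*(k+(w+2)) from by ring, ih k (by omega) (w+2)]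
        rw [map_sum]
        have step : ∀ t ∈ Finset.range (k+2), T (((p:ℤ)^t) • G (p ^ (2*(w+1)+4*t) * j)) =
            ((p:ℤ)^t) • G (p ^ (2*w+4*t) * j) + ((p:ℤ)^(t+1)) • G (p ^ (2*w+4*(t+1)) * j) := by
          intro t _
          rw [map_zsmul, show 2*(w+1)+4*t = 2*(w+2*t)+2 from by ring, TGhigh (w+2*t),
            zsmul_add, ← mul_zsmul]
          exact congrArg₂ (· + ·) (hGc _ _ _ _ rfl (by ring)) (hGc _ _ _ _ (by ring) (by ring))
        rw [Finset.sum_congr rfl step, Finset.sum_add_distrib]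
        have hsm : (p:ℤ) • ∑ t ∈ Finset.range (k+1), ((p:ℤ)^t) • G (p ^ (2*(w+2)+4*t) * j) =
            ∑ t ∈ Finset.range (k+1), ((p:ℤ)^(t+1)) • G (p ^ (2*w+4*(t+1)) * j) := by
          rw [← Finset.sum_zsmul]
          exact Finset.sum_congr rfl fun t _ => by
            rw [← mul_zsmul]; exact hGc _ _ _ _ (by ring) (by ring)
        rw [hsm, Finset.sum_range_succ (fun t => ((p:ℤ)^(t+1)) • G (p ^ (2*w+4*(t+1)) * j)) (k+1)]
        rw [show (k+2)+1 = (k+2)+1 from rfl,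
          Finset.sum_range_succ (fun t => ((p:ℤ)^t) • G (p ^ (2*w+4*t) * j)) (k+2)]
        rw [hGc ((p:ℤ)^(k+1+1)) ((p:ℤ)^(k+2)) (2*w+4*(k+1+1)) (2*w+4*(k+2)) rfl rfl]
        abel
  -- main regime: T_{v0+m} on G_{p^{2 v0} j}
  have lemB : ∀ m v0 : ℕ, Tn (v0+m) (G (p ^ (2*v0) * j)) =
      ∑ t ∈ Finset.range (m+1), (ε^(m-t) * (p:ℤ)^t) • G (p ^ (2*t) * j)
      + ∑ t ∈ Finset.range v0, ((p:ℤ)^(m+1+t)) • G (p ^ (2*m+4+4*t) * j) := by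
    intro m
    induction m using Nat.strong_induction_on with
    | _ m ih =>
      match m with
      | 0 =>
        intro v0
        rw [show v0+0 = v0 from rfl, show 2*v0 = 2*(v0+0) from by ring, lemA v0 0]
        rw [Finset.sum_range_succ' (fun t => ((p:ℤ)^t) • G (p ^ (2*0+4*t) * j)) v0]
        rw [Finset.sum_range_one]
        rw [hGc ((p:ℤ)^0) (ε^(0-0) * (p:ℤ)^0) (2*0+4*0) (2*0) (by norm_num) (by ring)]
        rw [Finset.sum_congr rfl (fun t _ => hGc ((p:ℤ)^(t+1)) ((p:ℤ)^(0+1+t))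
          (2*0+4*(t+1)) (2*0+4+4*t) (by ring_nf) (by ring))]
        abel
      | 1 =>
        intro v0
        match v0 with
        | 0 =>
          rw [show (0:ℕ)+1 = 1 from rfl, hTn1, show 2*0 = 2*0 from rfl, TGlow]
          rw [Finset.sum_range_succ, Finset.sum_range_one, Finset.range_zero,
            Finset.sum_empty, add_zero]
          rw [hGc ε (ε^(1-0) * (p:ℤ)^0) (2*0) (2*0) (by norm_num) rfl]
          rw [hGc ((p:ℤ)) (ε^(1-1) * (p:ℤ)^1) (2*1) (2*1) (by norm_num) rfl]
        | (u+1) =>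
          rw [show (u+1)+1 = u+2 from rfl, hTnrec u, LinearMap.sub_apply, LinearMap.comp_apply,
            show (((p:ℤ) • Tn u) (G (p ^ (2*(u+1)) * j)) : M)
              = (p:ℤ) • Tn u (G (p ^ (2*(u+1)) * j)) from rfl]
          rw [show 2*(u+1) = 2*((u+1)+0) from by ring, lemA (u+1) 0]
          rw [show 2*((u+1)+0) = 2*(u+1) from by ring, lemA u 1]
          rw [Finset.sum_range_succ' (fun t => ((p:ℤ)^t) • G (p ^ (2*0+4*t) * j)) (u+1)]
          rw [map_add, map_sum]
          have T0 : T (((p:ℤ)^0) • G (p ^ (2*0+4*0) * j))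
              = (ε^(1-0) * (p:ℤ)^0) • G (p ^ (2*0) * j)
                + (ε^(1-1) * (p:ℤ)^1) • G (p ^ (2*1) * j) := by
            rw [map_zsmul, show 2*0+4*0 = 2*0 from rfl, TGlow, zsmul_add,
              ← mul_zsmul, ← mul_zsmul]
            exact congrArg₂ (· + ·) (hGc _ _ _ _ (by norm_num) rfl)
              (hGc _ _ _ _ (by norm_num) rfl)
          rw [T0]
          have step1 : ∀ t ∈ Finset.range (u+1),
              T (((p:ℤ)^(t+1)) • G (p ^ (2*0+4*(t+1)) * j)) =
              (p:ℤ) • (((p:ℤ)^t) • G (p ^ (2*1+4*t) * j))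
                + ((p:ℤ)^(1+1+t)) • G (p ^ (2*1+4+4*t) * j) := by
            intro t _
            rw [map_zsmul, show 2*0+4*(t+1) = 2*(2*t+1)+2 from by ring, TGhigh (2*t+1),
              zsmul_add, ← mul_zsmul, ← mul_zsmul]
            exact congrArg₂ (· + ·) (hGc _ _ _ _ (by ring) (by ring))
              (hGc _ _ _ _ (by ring) (by ring))
          rw [Finset.sum_congr rfl step1, Finset.sum_add_distrib, ← Finset.sum_zsmul,
            Finset.sum_range_succ (fun t => (ε^(1-t) * (p:ℤ)^t) • G (p ^ (2*t) * j)) 1,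
            Finset.sum_range_one]
          abel
      | (m+2) =>
        intro v0
        rw [show v0+(m+2) = (v0+m)+2 from by ring, hTnrec (v0+m), LinearMap.sub_apply,
          LinearMap.comp_apply,
          show (((p:ℤ) • Tn (v0+m)) (G (p ^ (2*v0) * j)) : M)
            = (p:ℤ) • Tn (v0+m) (G (p ^ (2*v0) * j)) from rfl]
        rw [show (v0+m)+1 = v0+(m+1) from by ring, ih (m+1) (by omega) v0, ih m (by omega) v0]
        rw [Finset.sum_range_succ' (fun t => (ε^(m+1-t) * (p:ℤ)^t) • G (p ^ (2*t) * j)) (m+1)]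
        rw [map_add, map_add, map_sum, map_sum]
        have T0 : T ((ε^(m+1-0) * (p:ℤ)^0) • G (p ^ (2*0) * j))
            = (ε^(m+2-0) * (p:ℤ)^0) • G (p ^ (2*0) * j)
              + (ε^(m+2-1) * (p:ℤ)^1) • G (p ^ (2*1) * j) := by
          rw [map_zsmul, TGlow, zsmul_add, ← mul_zsmul, ← mul_zsmul]
          refine congrArg₂ (· + ·) (hGc _ _ _ _ ?_ rfl) (hGc _ _ _ _ ?_ rfl)
          · rw [Nat.sub_zero, Nat.sub_zero]; ring
          · rw [Nat.sub_zero, show m+2-1 = m+1 from rfl]; ring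
        rw [T0]
        have stepA : ∀ t ∈ Finset.range (m+1),
            T ((ε^(m+1-(t+1)) * (p:ℤ)^(t+1)) • G (p ^ (2*(t+1)) * j)) =
            (p:ℤ) • ((ε^(m-t) * (p:ℤ)^t) • G (p ^ (2*t) * j))
              + (ε^(m+2-(t+2)) * (p:ℤ)^(t+2)) • G (p ^ (2*(t+2)) * j) := by
          intro t _
          rw [map_zsmul, show 2*(t+1) = 2*t+2 from by ring, TGhigh t, zsmul_add,
            ← mul_zsmul, ← mul_zsmul]
          refine congrArg₂ (· + ·) (hGc _ _ _ _ ?_ rfl) (hGc _ _ _ _ ?_ (by ring))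
          · rw [show m+1-(t+1) = m-t from by omega]; ring
          · rw [show m+1-(t+1) = m-t from by omega, show m+2-(t+2) = m-t from by omega]; ring
        have stepB : ∀ t ∈ Finset.range v0,
            T (((p:ℤ)^(m+1+1+t)) • G (p ^ (2*(m+1)+4+4*t) * j)) =
            (p:ℤ) • (((p:ℤ)^(m+1+t)) • G (p ^ (2*m+4+4*t) * j))
              + ((p:ℤ)^(m+2+1+t)) • G (p ^ (2*(m+2)+4+4*t) * j) := by
          intro t _
          rw [map_zsmul, show 2*(m+1)+4+4*t = 2*(m+2*t+2)+2 from by ring, TGhigh (m+2*t+2),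
            zsmul_add, ← mul_zsmul, ← mul_zsmul]
          exact congrArg₂ (· + ·) (hGc _ _ _ _ (by ring) (by ring))
            (hGc _ _ _ _ (by ring) (by ring))
        rw [Finset.sum_congr rfl stepA, Finset.sum_congr rfl stepB,
          Finset.sum_add_distrib, Finset.sum_add_distrib, zsmul_add,
          ← Finset.sum_zsmul, ← Finset.sum_zsmul]
        have hS5 : ∑ t ∈ Finset.range (m+2+1), (ε^(m+2-t) * (p:ℤ)^t) • G (p ^ (2*t) * j)
            = (ε^(m+2-0) * (p:ℤ)^0) • G (p ^ (2*0) * j)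
              + (ε^(m+2-1) * (p:ℤ)^1) • G (p ^ (2*1) * j)
              + ∑ t ∈ Finset.range (m+1), (ε^(m+2-(t+2)) * (p:ℤ)^(t+2)) • G (p ^ (2*(t+2)) * j) := by
          rw [Finset.sum_range_succ' (fun t => (ε^(m+2-t) * (p:ℤ)^t) • G (p ^ (2*t) * j)) (m+2),
            Finset.sum_range_succ' (fun t => (ε^(m+2-(t+1)) * (p:ℤ)^(t+1)) • G (p ^ (2*(t+1)) * j)) (m+1)]
          abel
        rw [hS5]
        abel
  obtain ⟨m, rfl⟩ := Nat.exists_eq_add_of_le hn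
  rw [show v + m - v = m from by omega, lemB m v]
  congr 1
  · exact Finset.sum_congr rfl fun t _ => hGc _ _ _ _ (by rw [hε, mul_pow]) rfl
  · rw [← Finset.Ico_add_one_right_eq_Icc, Finset.sum_Ico_eq_sum_range, show v+1-1 = v from rfl]
    exact Finset.sum_congr rfl fun t _ =>
      (hGc _ _ _ _ (by rw [show m+(1+t) = m+1+t from by ring]) (by ring)).symm
end

section
/- Let j be a positive integer with p² ∤ j, let v ≥ 0 be an integer, and set D = p^{2v}·j. Then for every integer n with 0 ≤ n < v, T_n(G_D) = Σ_{t=0}^{n} p^t·G_{p^{2v−2n+4t}·j}. -/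
/-- Bridge between the default `ℤ`-scalar action (via `zsmul`) and the scalar
action coming from a `Module ℤ M` instance. -/
theorem stmt_6_bridge {M : Type*} [AddCommGroup M] (h : Module ℤ M) (c : ℤ) (x : M) :
    c • x = @HSMul.hSMul ℤ M M (@instHSMul ℤ M h.toSMul) c x :=
  (int_smul_eq_zsmul h c x).symm

section Aux

variable {p : ℕ} [Fact p.Prime]
    {M : Type*} [AddCommGroup M] [Module ℤ M]
    (G : ℕ → M) (T : M →ₗ[ℤ] M)

theorem stmt_6_key
    (hT : ∀ D : ℕ, 0 < D →
      T (G D) = (if p ^ 2 ∣ D then G (D / p ^ 2) else 0)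
        + (legendreSym p 12 * legendreSym p (D : ℤ)) • G D
        + (p : ℤ) • G (p ^ 2 * D))
    (j : ℕ) (hj : 0 < j) (k : ℕ) (hk : 1 ≤ k) :
    T (G (p ^ (2 * k) * j))
      = G (p ^ (2 * (k - 1)) * j) + (p : ℤ) • G (p ^ (2 * (k + 1)) * j) := by
  have hp0 : 0 < p := (Fact.out : p.Prime).pos
  have hpos : 0 < p ^ (2 * k) * j := by positivity
  rw [hT _ hpos]
  have hsplit : p ^ (2 * k) * j = p ^ 2 * (p ^ (2 * (k - 1)) * j) := by
    have h2 : 2 * k = 2 + 2 * (k - 1) := by omega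
    rw [h2, pow_add, mul_assoc]
  have hdvd : p ^ 2 ∣ p ^ (2 * k) * j := ⟨p ^ (2 * (k - 1)) * j, hsplit⟩
  rw [if_pos hdvd]
  have hdiv : p ^ (2 * k) * j / p ^ 2 = p ^ (2 * (k - 1)) * j := by
    rw [hsplit, Nat.mul_div_cancel_left _ (by positivity)]
  have hleg : legendreSym p ((p ^ (2 * k) * j : ℕ) : ℤ) = 0 := by
    rw [legendreSym.eq_zero_iff]
    push_cast
    rw [ZMod.natCast_self]
    rw [zero_pow (by omega : 2 * k ≠ 0), zero_mul]
  have hmul : p ^ 2 * (p ^ (2 * k) * j) = p ^ (2 * (k + 1)) * j := by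
    have h3 : 2 * (k + 1) = 2 + 2 * k := by ring
    rw [h3, pow_add, mul_assoc]
  rw [hdiv, hleg, hmul, mul_zero, zero_zsmul, add_zero]

theorem stmt_6_aux
    (hT : ∀ D : ℕ, 0 < D →
      T (G D) = (if p ^ 2 ∣ D then G (D / p ^ 2) else 0)
        + (legendreSym p 12 * legendreSym p (D : ℤ)) • G D
        + (p : ℤ) • G (p ^ 2 * D))
    (Tn : ℕ → M →ₗ[ℤ] M)
    (hTn0 : Tn 0 = LinearMap.id) (hTn1 : Tn 1 = T)
    (hTnrec : ∀ n : ℕ, Tn (n + 2) = T ∘ₗ Tn (n + 1) - (p : ℤ) • Tn n)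
    (j : ℕ) (hj : 0 < j) :
    ∀ n w : ℕ, 1 ≤ w →
      Tn n (G (p ^ (2 * (n + w)) * j)) =
        ∑ t ∈ Finset.range (n + 1),
          ((p : ℤ) ^ t) • G (p ^ (2 * w + 4 * t) * j) := by
  have smul_apply' : ∀ (m : ℕ) (x : M),
      Tn (m + 2) x = T (Tn (m + 1) x) - (p : ℤ) • Tn m x := by
    intro m x
    rw [hTnrec m, LinearMap.sub_apply, LinearMap.comp_apply]
    rfl
  have zsmul_sum : ∀ (c : ℤ) (s : Finset ℕ) (f : ℕ → M),
      c • ∑ t ∈ s, f t = ∑ t ∈ s, c • f t := by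
    intro c s f
    simp only [stmt_6_bridge ‹Module ℤ M›]
    exact Finset.smul_sum
  intro n
  induction n using Nat.twoStepInduction with
  | zero =>
    intro w hw
    rw [hTn0]
    have e0 : 2 * (0 + w) = 2 * w + 4 * 0 := by ring
    simp [Finset.sum_range_one, e0]
  | one =>
    intro w hw
    rw [hTn1, stmt_6_key G T hT j hj (1 + w) (by omega)]
    rw [Finset.sum_range_succ, Finset.sum_range_one]
    have e2 : 1 + w - 1 = w := by omega
    have e3 : 2 * (1 + w + 1) = 2 * w + 4 * 1 := by ring
    have e4 : 2 * w = 2 * w + 4 * 0 := by ring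
    rw [e2, e3, e4, pow_zero, one_zsmul, pow_one]
  | more n ih2 ih1 =>
    intro w hw
    rw [smul_apply' n]
    have hA : 2 * (n + 2 + w) = 2 * (n + 1 + (w + 1)) := by ring
    have hB : 2 * (n + 2 + w) = 2 * (n + (w + 2)) := by ring
    have h1 := ih1 (w + 1) (by omega)
    have h2 := ih2 (w + 2) (by omega)
    rw [hA, h1, ← hA, hB, h2]
    rw [map_sum]
    have step : ∀ t ∈ Finset.range (n + 1 + 1),
        T (((p : ℤ) ^ t) • G (p ^ (2 * (w + 1) + 4 * t) * j))
          = ((p : ℤ) ^ t) • G (p ^ (2 * w + 4 * t) * j)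
            + ((p : ℤ) ^ (t + 1)) • G (p ^ (2 * (w + 2) + 4 * t) * j) := by
      intro t _
      have hk := stmt_6_key G T hT j hj (w + 1 + 2 * t) (by omega)
      rw [map_zsmul]
      have e1 : 2 * (w + 1) + 4 * t = 2 * (w + 1 + 2 * t) := by ring
      rw [e1, hk]
      have e2 : 2 * (w + 1 + 2 * t - 1) = 2 * w + 4 * t := by omega
      have e3 : 2 * (w + 1 + 2 * t + 1) = 2 * (w + 2) + 4 * t := by ring
      rw [e2, e3, zsmul_add, ← mul_zsmul', ← pow_succ']
    rw [Finset.sum_congr rfl step, Finset.sum_add_distrib]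
    rw [zsmul_sum]
    have hps : ∀ t : ℕ, (p : ℤ) • ((p : ℤ) ^ t • G (p ^ (2 * (w + 2) + 4 * t) * j))
        = ((p : ℤ) ^ (t + 1)) • G (p ^ (2 * (w + 2) + 4 * t) * j) := by
      intro t
      rw [← mul_zsmul', ← pow_succ]
    simp only [hps]
    rw [Finset.sum_range_succ
      (fun t => ((p : ℤ) ^ (t + 1)) • G (p ^ (2 * (w + 2) + 4 * t) * j)) (n + 1)]
    rw [Finset.sum_range_succ
      (fun t => ((p : ℤ) ^ t) • G (p ^ (2 * w + 4 * t) * j)) (n + 1 + 1)]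
    have e4 : 2 * (w + 2) + 4 * (n + 1) = 2 * w + 4 * (n + 1 + 1) := by ring
    rw [e4]
    abel

end Aux

/-- Action of the Hecke operators `T₁₂(p^{2n})` on the Folsom–Ono weight 3/2
forms `G_D`, for `D = p^{2v}·j` with `p² ∤ j` and `0 ≤ n < v`. -/
theorem stmt_6 {p : ℕ} [Fact p.Prime] (hp : 5 ≤ p)
    {M : Type*} [AddCommGroup M] [Module ℤ M]
    (G : ℕ → M) (T : M →ₗ[ℤ] M)
    (hT : ∀ D : ℕ, 0 < D →
      T (G D) = (if p ^ 2 ∣ D then G (D / p ^ 2) else 0)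
        + (legendreSym p 12 * legendreSym p (D : ℤ)) • G D
        + (p : ℤ) • G (p ^ 2 * D))
    (Tn : ℕ → M →ₗ[ℤ] M)
    (hTn0 : Tn 0 = LinearMap.id) (hTn1 : Tn 1 = T)
    (hTnrec : ∀ n : ℕ, Tn (n + 2) = T ∘ₗ Tn (n + 1) - (p : ℤ) • Tn n)
    (j v : ℕ) (hj : 0 < j) (hjp : ¬ p ^ 2 ∣ j)
    (D : ℕ) (hD : D = p ^ (2 * v) * j)
    (n : ℕ) (hn : n < v) :
    Tn n (G D) =
      ∑ t ∈ Finset.range (n + 1),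
        ((p : ℤ) ^ t) • G (p ^ (2 * (v - n) + 4 * t) * j) := by
  rw [hD]
  have hv : 2 * v = 2 * (n + (v - n)) := by omega
  rw [hv]
  exact stmt_6_aux G T hT Tn hTn0 hTn1 hTnrec j hj n (v - n) (by omega)
end

section
/- Let i be a positive integer with p² ∤ i, let u ≥ 0 be an integer, and set d = p^{2u}·i. Then for every integer n with 0 ≤ n < u, T_n(F_d) = Σ_{t=0}^{n} p^{n−t}·F_{p^{2u−2n+4t}·i}. -/
/-! Write `G e = F (p ^ e * i)`. Since `p ∣ p ^ (e + 2) * i`, the Legendre term vanishes and `T`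
acts by the three-term rule `T (G (e + 2)) = p • G e + G (e + 4)`. This rule alone gives
`T_n (G (2n + b)) = ∑_{t ≤ n} p^(n-t) • G (b + 4t)` for every `b`, by two-step induction on `n`:
the sums `S n b = heckeSum p G n b` satisfy `S (n + 1) b = p • S n b + G (b + 4(n + 1))`,
which is exactly what the recurrence `T_{n+2} = T ∘ T_{n+1} - p • T_n` needs. -/

section HeckeSum

variable {M : Type*} [AddCommGroup M] (c : ℤ) (G : ℕ → M)

def heckeSum (n b : ℕ) : M :=
  ∑ t ∈ Finset.range (n + 1), c ^ (n - t) • G (b + 4 * t)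

lemma heckeSum_zero (b : ℕ) : heckeSum c G 0 b = G b := by
  simp [heckeSum]

lemma heckeSum_succ (n b : ℕ) :
    heckeSum c G (n + 1) b = c • heckeSum c G n b + G (b + 4 * (n + 1)) := by
  rw [heckeSum, Finset.sum_range_succ, Nat.sub_self, pow_zero, one_smul, heckeSum,
    Finset.smul_sum]
  congr 1
  refine Finset.sum_congr rfl fun t ht => ?_
  rw [smul_smul, ← pow_succ', Nat.sub_add_comm (Finset.mem_range_succ_iff.mp ht)]

variable {c G} [Module ℤ M]

lemma map_heckeSum {T : M →ₗ[ℤ] M} (hG : ∀ e, T (G (e + 2)) = c • G e + G (e + 4))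
    (n b : ℕ) :
    T (heckeSum c G n (b + 2)) = c • heckeSum c G n b + heckeSum c G n (b + 4) := by
  simp only [heckeSum, map_sum, map_zsmul, ← Finset.sum_zsmul, ← Finset.sum_add_distrib]
  refine Finset.sum_congr rfl fun t _ => ?_
  rw [add_right_comm, hG, zsmul_add, zsmul_comm, add_right_comm b 4]

theorem apply_eq_heckeSum {T : M →ₗ[ℤ] M} (hG : ∀ e, T (G (e + 2)) = c • G e + G (e + 4))
    {Tn : ℕ → M →ₗ[ℤ] M} (h0 : Tn 0 = LinearMap.id) (h1 : Tn 1 = T)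
    (hrec : ∀ n, Tn (n + 2) = T ∘ₗ Tn (n + 1) - c • Tn n) (n b : ℕ) :
    Tn n (G (2 * n + b)) = heckeSum c G n b := by
  induction n using Nat.twoStepInduction generalizing b with
  | zero => simp [h0, heckeSum_zero]
  | one => rw [h1, heckeSum_succ, heckeSum_zero, add_comm, hG]
  | more n ih₀ ih₁ =>
    have h₀ := ih₀ (b + 4)
    have h₁ := ih₁ (b + 2)
    rw [show 2 * n + (b + 4) = 2 * (n + 2) + b by omega] at h₀
    rw [show 2 * (n + 1) + (b + 2) = 2 * (n + 2) + b by omega] at h₁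
    have zsmul_apply : (c • Tn n) (G (2 * (n + 2) + b)) = c • Tn n (G (2 * (n + 2) + b)) := rfl
    rw [hrec, LinearMap.sub_apply, LinearMap.comp_apply, zsmul_apply, h₀, h₁,
      map_heckeSum hG, heckeSum_succ c G n (b + 4), heckeSum_succ c G (n + 1) b,
      show b + 4 + 4 * (n + 1) = b + 4 * (n + 1 + 1) by omega]
    abel

end HeckeSum

lemma legendreSym_neg_prime_pow_mul (p : ℕ) [Fact p.Prime] {e : ℕ} (he : e ≠ 0) (i : ℕ) :
    legendreSym p (-((p ^ e * i : ℕ) : ℤ)) = 0 := by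
  rw [legendreSym.eq_zero_iff]
  push_cast
  rw [ZMod.natCast_self, zero_pow he, zero_mul, neg_zero]

lemma hecke_apply_prime_pow_mul {p : ℕ} [Fact p.Prime] {M : Type*} [AddCommGroup M] [Module ℤ M]
    {F : ℕ → M} {T : M →ₗ[ℤ] M}
    (hT : ∀ d : ℕ, 0 < d →
      T (F d) = (p : ℤ) • (if p ^ 2 ∣ d then F (d / p ^ 2) else 0)
        + (legendreSym p 12 * legendreSym p (-(d : ℤ))) • F d + F (p ^ 2 * d))
    {i : ℕ} (hi : 0 < i) (e : ℕ) :
    T (F (p ^ (e + 2) * i)) = (p : ℤ) • F (p ^ e * i) + F (p ^ (e + 4) * i) := by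
  have hp : 0 < p := (Fact.out : p.Prime).pos
  have hfactor : p ^ (e + 2) * i = p ^ 2 * (p ^ e * i) := by ring
  rw [hT _ (by positivity), if_pos (hfactor ▸ dvd_mul_right _ _),
    legendreSym_neg_prime_pow_mul p (by omega), mul_zero, zero_smul, add_zero, hfactor,
    Nat.mul_div_cancel_left _ (by positivity)]
  ring_nf

theorem stmt_8_general {p : ℕ} [Fact p.Prime]
    {M : Type*} [AddCommGroup M] [Module ℤ M]
    (F : ℕ → M) (T : M →ₗ[ℤ] M)
    (hT : ∀ d : ℕ, 0 < d →
      T (F d) = (p : ℤ) • (if p ^ 2 ∣ d then F (d / p ^ 2) else 0)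
        + (legendreSym p 12 * legendreSym p (-(d : ℤ))) • F d + F (p ^ 2 * d))
    (Tn : ℕ → M →ₗ[ℤ] M)
    (hTn0 : Tn 0 = LinearMap.id) (hTn1 : Tn 1 = T)
    (hTnrec : ∀ n : ℕ, Tn (n + 2) = T ∘ₗ Tn (n + 1) - (p : ℤ) • Tn n)
    (i u : ℕ) (hi : 0 < i)
    (d : ℕ) (hd : d = p ^ (2 * u) * i)
    (n : ℕ) (hn : n < u) :
    Tn n (F d) =
      ∑ t ∈ Finset.range (n + 1),
        ((p : ℤ) ^ (n - t)) • F (p ^ (2 * (u - n) + 4 * t) * i) := by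
  rw [hd, show 2 * u = 2 * n + 2 * (u - n) by omega]
  exact apply_eq_heckeSum (G := fun e => F (p ^ e * i)) (hecke_apply_prime_pow_mul hT hi)
    hTn0 hTn1 hTnrec n _

/-- Action of the normalized Hecke operators `T₁₂(p^{2n})` on the Folsom–Ono
weight 1/2 mock modular forms `F_d`, for `d = p^{2u}·i` with `p² ∤ i` and
`0 ≤ n < u`. -/
theorem stmt_8 {p : ℕ} [Fact p.Prime] (hp : 5 ≤ p)
    {M : Type*} [AddCommGroup M] [Module ℤ M]
    (F : ℕ → M) (T : M →ₗ[ℤ] M)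
    (hT : ∀ d : ℕ, 0 < d →
      T (F d) = (p : ℤ) • (if p ^ 2 ∣ d then F (d / p ^ 2) else 0)
        + (legendreSym p 12 * legendreSym p (-(d : ℤ))) • F d + F (p ^ 2 * d))
    (Tn : ℕ → M →ₗ[ℤ] M)
    (hTn0 : Tn 0 = LinearMap.id) (hTn1 : Tn 1 = T)
    (hTnrec : ∀ n : ℕ, Tn (n + 2) = T ∘ₗ Tn (n + 1) - (p : ℤ) • Tn n)
    (i u : ℕ) (hi : 0 < i) (hip : ¬ p ^ 2 ∣ i)
    (d : ℕ) (hd : d = p ^ (2 * u) * i)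
    (n : ℕ) (hn : n < u) :
    Tn n (F d) =
      ∑ t ∈ Finset.range (n + 1),
        ((p : ℤ) ^ (n - t)) • F (p ^ (2 * (u - n) + 4 * t) * i) :=
  stmt_8_general F T hT Tn hTn0 hTn1 hTnrec i u hi d hd n hn
end

section
/- Let j be a positive integer with p² ∤ j, let v ≥ 0 be an integer, and set D = p^{2v}·j. Then for every integer n ≥ v there exists x ∈ M such that T_{n+1}(g_D) − (j/p)·T_n(g_D) = p^{n−v+1}·x; that is, T_{n+1}(g_D) − (j/p)·T_n(g_D) ≡ 0 modulo p^{n−v+1}·M. -/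
/-!
Put `ε = (j/p)`, `e₀ = ε g_j` and `e_{s+1} = g_{p^{2s} j}`. The Hecke relation then reads
`T e_{s+1} = e_s + p e_{s+2}` for every `s`, with no boundary case: `e` is a *ladder*.
Shift `T_k` to `U_{k+1} = T_k`, `U₀ = 0` (so that `U_v` makes sense at `v = 0`).
Induction on the recurrence `U_{k+2} = T U_{k+1} - p U_k` gives
`U_{k+1} e_{s+k} = ∑_{i ≤ k} p^i e_{s+2i}`.
For `D_m = U_{v+m+1} e_{v+1} - ε U_{v+m} e_{v+1}` this gives `D₀ = y₀` and `D₁ = p y₁`,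
where `y` is an explicit ladder built from shifts of `e`; the second identity uses `e₀ = ε e₁`.
Both `D_m` and `p^m y_m` satisfy the recurrence, so `D_m = p^m y_m` for all `m`.
-/

open Finset

section Ladder

variable {R M : Type*} [CommRing R] [AddCommGroup M] [Module R M]

theorem sum_range_succ_pow_smul (q : R) (f : ℕ → M) (n : ℕ) :
    ∑ i ∈ range (n + 1), q ^ i • f i = f 0 + q • ∑ i ∈ range n, q ^ i • f (i + 1) := by
  simp only [sum_range_succ', smul_sum, smul_smul, ← pow_succ', pow_zero, one_smul, add_comm]

variable (T : M →ₗ[R] M) (q : R)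

def ladder : Submodule R (ℕ → M) where
  carrier := {e | ∀ s, T (e (s + 1)) = e s + q • e (s + 2)}
  add_mem' {e f} he hf s := by
    simp only [Pi.add_apply, map_add, he s, hf s, smul_add]
    abel
  zero_mem' s := by simp
  smul_mem' c e he s := by
    simp only [Pi.smul_apply, map_smul, he s, smul_add, smul_comm q c]

variable {T q}

theorem mem_ladder {e : ℕ → M} :
    e ∈ ladder T q ↔ ∀ s, T (e (s + 1)) = e s + q • e (s + 2) := Iff.rfl

theorem shift_mem_ladder {e : ℕ → M} (he : e ∈ ladder T q) (c : ℕ) :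
    (fun s ↦ e (s + c)) ∈ ladder T q := fun s ↦ by
  simpa only [Nat.add_right_comm] using he (s + c)

theorem eq_pow_smul_of_mem_ladder {D y : ℕ → M}
    (hD : ∀ k, D (k + 2) = T (D (k + 1)) - q • D k) (hy : y ∈ ladder T q)
    (h0 : D 0 = y 0) (h1 : D 1 = q • y 1) (k : ℕ) : D k = q ^ k • y k := by
  induction k using Nat.twoStepInduction with
  | zero => simp [h0]
  | one => simp [h1]
  | more k ih₀ ih₁ =>
    rw [hD, ih₁, ih₀, map_smul, hy k]
    module

variable {U : ℕ → M →ₗ[R] M}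

theorem succ_apply_ladder_eq_sum (hU0 : U 0 = 0) (hU1 : U 1 = LinearMap.id)
    (hU : ∀ k, U (k + 2) = T ∘ₗ U (k + 1) - q • U k) {e : ℕ → M} (he : e ∈ ladder T q)
    (k s : ℕ) : U (k + 1) (e (s + k)) = ∑ i ∈ range (k + 1), q ^ i • e (s + 2 * i) := by
  induction k using Nat.twoStepInduction generalizing s with
  | zero => simp [hU1]
  | one => simp [hU, hU1, hU0, he s, sum_range_succ]
  | more k ih₀ ih₁ =>
    rw [hU, LinearMap.sub_apply, LinearMap.comp_apply, LinearMap.smul_apply,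
      show s + (k + 2) = s + 1 + (k + 1) by omega, ih₁ (s + 1),
      show s + 1 + (k + 1) = s + 2 + k by omega, ih₀ (s + 2), map_sum]
    simp only [map_smul, show ∀ i, s + 1 + 2 * i = s + 2 * i + 1 by omega, mem_ladder.1 he,
      smul_add, sum_add_distrib]
    rw [sum_range_succ _ (k + 2), sum_range_succ (fun i ↦ q ^ i • q • e (s + 2 * i + 2)),
      smul_sum]
    simp only [smul_smul, ← pow_succ, ← pow_succ',
      show ∀ i, s + 2 * i + 2 = s + 2 + 2 * i by omega,
      show s + 2 + 2 * (k + 1) = s + 2 * (k + 2) by omega]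
    abel

theorem apply_ladder_eq_sum (hU0 : U 0 = 0) (hU1 : U 1 = LinearMap.id)
    (hU : ∀ k, U (k + 2) = T ∘ₗ U (k + 1) - q • U k) {e : ℕ → M} (he : e ∈ ladder T q)
    (k s : ℕ) : U k (e (s + 1 + k)) = ∑ i ∈ range k, q ^ i • e (s + 2 + 2 * i) := by
  cases k with
  | zero => simp [hU0]
  | succ k =>
    rw [show s + 1 + (k + 1) = s + 2 + k by omega, succ_apply_ladder_eq_sum hU0 hU1 hU he]

theorem exists_apply_sub_smul_apply_eq_pow_smul (hU0 : U 0 = 0) (hU1 : U 1 = LinearMap.id)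
    (hU : ∀ k, U (k + 2) = T ∘ₗ U (k + 1) - q • U k) {e : ℕ → M} (he : e ∈ ladder T q)
    {ε : R} (he0 : e 0 = ε • e 1) (v : ℕ) :
    ∃ y : ℕ → M, ∀ m, U (v + m + 1) (e (v + 1)) - ε • U (v + m) (e (v + 1)) = q ^ m • y m := by
  let y : ℕ → M := ∑ i ∈ range (v + 1), q ^ i • (fun s ↦ e (s + (1 + 2 * i)))
    - ε • ∑ i ∈ range v, q ^ i • (fun s ↦ e (s + (2 + 2 * i)))
  have hy : y ∈ ladder T q :=
    sub_mem (sum_mem fun i _ ↦ Submodule.smul_mem _ _ (shift_mem_ladder he _))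
      (Submodule.smul_mem _ _ (sum_mem fun i _ ↦ Submodule.smul_mem _ _ (shift_mem_ladder he _)))
  refine ⟨y, eq_pow_smul_of_mem_ladder (fun m ↦ ?recurrence) hy ?initial ?next⟩
  case recurrence =>
    rw [show v + (m + 2) + 1 = v + m + 1 + 2 by omega, show v + (m + 2) = v + m + 2 by omega,
      show v + (m + 1) + 1 = v + m + 2 by omega, show v + (m + 1) = v + m + 1 by omega, hU, hU]
    simp only [LinearMap.sub_apply, LinearMap.comp_apply, LinearMap.smul_apply, map_sub, map_smul]
    module
  case initial =>
    have hsucc := succ_apply_ladder_eq_sum hU0 hU1 hU he v 1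
    have hprev := apply_ladder_eq_sum hU0 hU1 hU he v 0
    simp only [add_zero, add_comm 1 v, zero_add] at hsucc hprev ⊢
    rw [hsucc, hprev]
    simp [y, Finset.sum_apply]
  case next =>
    have hsucc := succ_apply_ladder_eq_sum hU0 hU1 hU he (v + 1) 0
    have hprev := succ_apply_ladder_eq_sum hU0 hU1 hU he v 1
    simp only [add_comm 1 v, zero_add] at hsucc hprev ⊢
    rw [hsucc, hprev, sum_range_succ_pow_smul _ _ (v + 1),
      sum_range_succ_pow_smul q (fun i ↦ e (1 + 2 * i)) v, he0]
    simp only [y, Pi.sub_apply, Finset.sum_apply, Pi.smul_apply, ← add_assoc, Nat.reduceAdd,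
      show ∀ i, 2 * (i + 1) = 2 + 2 * i by omega, mul_zero, add_zero]
    module

end Ladder

section Zagier

variable {M : Type*} [AddCommGroup M]

/-- The entry `ε • g_j` at index `0` absorbs the term `(j/p) g_j` of the Hecke relation at
`D = j`. -/
def zagierLadder (g : ℕ → M) (p j : ℕ) (ε : ℤ) : ℕ → M
  | 0 => ε • g j
  | s + 1 => g (p ^ (2 * s) * j)

theorem legendreSym_pow_mul_eq_zero {p : ℕ} [Fact p.Prime] (j : ℕ) {k : ℕ} (hk : k ≠ 0) :
    legendreSym p ((p ^ k * j : ℕ) : ℤ) = 0 := by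
  rw [legendreSym.eq_zero_iff]
  simp [hk]

theorem zagierLadder_mem_ladder {p : ℕ} [Fact p.Prime] (g : ℕ → M) (T : M →ₗ[ℤ] M)
    (hT : ∀ D : ℕ, 0 < D →
      T (g D) = (if p ^ 2 ∣ D then g (D / p ^ 2) else 0)
        + (legendreSym p (D : ℤ)) • g D + (p : ℤ) • g (p ^ 2 * D))
    {j : ℕ} (hj : 0 < j) (hjp : ¬ p ^ 2 ∣ j) :
    zagierLadder g p j (legendreSym p j) ∈ ladder T p := by
  have hp : 0 < p := (Fact.out : p.Prime).pos
  rintro (_ | s)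
  · simpa [zagierLadder, hjp] using hT j hj
  · have hprev : p ^ (2 * (s + 1)) * j = p ^ 2 * (p ^ (2 * s) * j) := by ring
    have hnext : p ^ 2 * (p ^ (2 * (s + 1)) * j) = p ^ (2 * (s + 2)) * j := by ring
    rw [zagierLadder, hT _ (by positivity), legendreSym_pow_mul_eq_zero j (by omega), hprev,
      if_pos (dvd_mul_right _ _), Nat.mul_div_cancel_left _ (by positivity), ← hprev, hnext]
    simp [zagierLadder]

end Zagier

theorem stmt_9_general {p : ℕ} [Fact p.Prime]
    {M : Type*} [AddCommGroup M] [Module ℤ M]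
    (g : ℕ → M) (T : M →ₗ[ℤ] M)
    (hT : ∀ D : ℕ, 0 < D →
      T (g D) = (if p ^ 2 ∣ D then g (D / p ^ 2) else 0)
        + (legendreSym p (D : ℤ)) • g D + (p : ℤ) • g (p ^ 2 * D))
    (Tn : ℕ → M →ₗ[ℤ] M)
    (hTn0 : Tn 0 = LinearMap.id) (hTn1 : Tn 1 = T)
    (hTnrec : ∀ n : ℕ, Tn (n + 2) = T ∘ₗ Tn (n + 1) - (p : ℤ) • Tn n)
    (j v : ℕ) (hj : 0 < j) (hjp : ¬ p ^ 2 ∣ j)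
    (D : ℕ) (hD : D = p ^ (2 * v) * j)
    (n : ℕ) (hn : v ≤ n) :
    ∃ x : M, Tn (n + 1) (g D) - (legendreSym p (j : ℤ)) • Tn n (g D)
      = ((p : ℤ) ^ (n - v + 1)) • x := by
  -- `T` is linear for the given `ℤ`-module structure, while `•` above is the canonical one.
  obtain rfl : ‹Module ℤ M› = AddCommGroup.toIntModule M := Subsingleton.elim _ _
  let U : ℕ → M →ₗ[ℤ] M := fun | 0 => 0 | k + 1 => Tn k
  have hU : ∀ k, U (k + 2) = T ∘ₗ U (k + 1) - (p : ℤ) • U k := by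
    rintro (_ | k)
    · simp [U, hTn0, hTn1]
    · exact hTnrec k
  obtain ⟨y, hy⟩ := exists_apply_sub_smul_apply_eq_pow_smul rfl hTn0 hU
    (zagierLadder_mem_ladder g T hT hj hjp) (ε := legendreSym p j) (by simp [zagierLadder]) v
  obtain ⟨m, rfl⟩ := Nat.exists_eq_add_of_le hn
  refine ⟨y (m + 1), ?_⟩
  rw [show v + m - v + 1 = m + 1 by omega, hD]
  exact hy (m + 1)

/-- Successive Hecke operators on Zagier's `g_D`: for `D = p^{2v}·j` with
`p² ∤ j` and `n ≥ v`, `T_{n+1}(g_D) − (j/p)·T_n(g_D) ≡ 0 mod p^{n−v+1}·M`. -/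
theorem stmt_9 {p : ℕ} [Fact p.Prime] (hp : p ≠ 2)
    {M : Type*} [AddCommGroup M] [Module ℤ M]
    (g : ℕ → M) (T : M →ₗ[ℤ] M)
    (hT : ∀ D : ℕ, 0 < D →
      T (g D) = (if p ^ 2 ∣ D then g (D / p ^ 2) else 0)
        + (legendreSym p (D : ℤ)) • g D + (p : ℤ) • g (p ^ 2 * D))
    (Tn : ℕ → M →ₗ[ℤ] M)
    (hTn0 : Tn 0 = LinearMap.id) (hTn1 : Tn 1 = T)
    (hTnrec : ∀ n : ℕ, Tn (n + 2) = T ∘ₗ Tn (n + 1) - (p : ℤ) • Tn n)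
    (j v : ℕ) (hj : 0 < j) (hjp : ¬ p ^ 2 ∣ j)
    (D : ℕ) (hD : D = p ^ (2 * v) * j)
    (n : ℕ) (hn : v ≤ n) :
    ∃ x : M, Tn (n + 1) (g D) - (legendreSym p (j : ℤ)) • Tn n (g D)
      = ((p : ℤ) ^ (n - v + 1)) • x :=
  stmt_9_general g T hT Tn hTn0 hTn1 hTnrec j v hj hjp D hD n hn
end

section
/- Let j be a positive integer with p² ∤ j, let v ≥ 0 be an integer, and set D = p^{2v}·j. Then for every integer n ≥ v there exists x ∈ M such that T_{n+1}(G_D) − (12/p)·(j/p)·T_n(G_D) = p^{n−v+1}·x; that is, T_{n+1}(G_D) − (12/p)·(j/p)·T_n(G_D) ≡ 0 modulo p^{n−v+1}·M. -/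
open Finset

namespace Stmt10Aux

variable {R : Type*} [CommRing R] {M : Type*} [AddCommGroup M] [Module R M]

/-- `Wsum P Gk c q = ∑_{i<q} Pⁱ • Gk (c+2i)`. -/
def Wsum (P : R) (Gk : ℕ → M) (c q : ℕ) : M :=
  ∑ i ∈ range q, P ^ i • Gk (c + 2 * i)

/-- `Xe P Gk ε v m` : the explicit element exhibiting the divisibility. -/
def Xe (P : R) (Gk : ℕ → M) (ε : R) (v m : ℕ) : M :=
  Wsum P Gk (m + 1) v - ε • Wsum P Gk (m + 2) v + P ^ v • Gk (m + 2 * v + 1)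

variable (P : R) (Gk : ℕ → M) (T : M →ₗ[R] M) (ε : R)

lemma W_last (c q : ℕ) :
    Wsum P Gk c (q + 1) = Wsum P Gk c q + P ^ q • Gk (c + 2 * q) :=
  sum_range_succ _ _

lemma W_first (c q : ℕ) :
    Wsum P Gk c (q + 1) = Gk c + P • Wsum P Gk (c + 2) q := by
  rw [Wsum, sum_range_succ', Wsum, smul_sum]
  simp only [pow_zero, one_smul, Nat.mul_zero, Nat.add_zero]
  rw [add_comm]
  congr 1
  refine sum_congr rfl fun i _ => ?_
  have h : c + 2 * (i + 1) = c + 2 + 2 * i := by ring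
  rw [h, ← mul_smul, ← pow_succ']

lemma W_both (c q : ℕ) :
    Gk c + P • Wsum P Gk (c + 2) q = Wsum P Gk c q + P ^ q • Gk (c + 2 * q) := by
  rw [← W_first, W_last]

variable (hTs : ∀ k, T (Gk (k + 1)) = Gk k + P • Gk (k + 2))

include hTs in
lemma W_T (c q : ℕ) :
    T (Wsum P Gk (c + 1) q) = Wsum P Gk c q + P • Wsum P Gk (c + 2) q := by
  rw [Wsum, map_sum]
  rw [show (Wsum P Gk c q + P • Wsum P Gk (c + 2) q : M)
      = ∑ i ∈ range q, (P ^ i • Gk (c + 2 * i) + P ^ i • (P • Gk (c + 2 + 2 * i))) from ?_]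
  · refine sum_congr rfl fun i _ => ?_
    rw [map_smul]
    have h1 : c + 1 + 2 * i = (c + 2 * i) + 1 := by ring
    have h2 : (c + 2 * i) + 2 = c + 2 + 2 * i := by ring
    rw [h1, hTs, h2, smul_add]
  · rw [sum_add_distrib]
    congr 1
    rw [Wsum, smul_sum]
    refine sum_congr rfl fun i _ => ?_
    rw [smul_comm]

include hTs in
lemma T_Xe (v m : ℕ) :
    T (Xe P Gk ε v (m + 1)) = Xe P Gk ε v m + P • Xe P Gk ε v (m + 2) := by
  rw [Xe, map_add, map_sub, map_smul, map_smul]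
  rw [show m + 1 + 1 = (m + 1) + 1 from rfl, W_T P Gk T hTs (m + 1) v]
  rw [show m + 1 + 2 = (m + 2) + 1 from rfl, W_T P Gk T hTs (m + 2) v]
  rw [show m + 1 + 2 * v + 1 = (m + 2 * v + 1) + 1 from by ring, hTs (m + 2 * v + 1)]
  rw [Xe, Xe]
  rw [show m + 2 * v + 1 + 2 = m + 2 + 2 * v + 1 from by ring]
  rw [show m + 2 + 1 = m + 3 from rfl, show m + 2 + 2 = m + 4 from rfl]
  module

variable (Tn : ℕ → M →ₗ[R] M)
variable (hTn0 : ∀ x : M, Tn 0 x = x) (hTn1 : ∀ x : M, Tn 1 x = T x)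
variable (hTnrec : ∀ (n : ℕ) (x : M), Tn (n + 2) x = T (Tn (n + 1) x) - P • Tn n x)

include hTn0 hTn1 hTnrec hTs in
lemma interior : ∀ n k, Tn n (Gk (n + k)) = Wsum P Gk k (n + 1) := by
  have key : ∀ n, (∀ k, Tn n (Gk (n + k)) = Wsum P Gk k (n + 1)) ∧
      (∀ k, Tn (n + 1) (Gk (n + 1 + k)) = Wsum P Gk k (n + 2)) := by
    intro n
    induction n with
    | zero =>
      constructor
      · intro k
        rw [hTn0]
        simp [Wsum]
      · intro k
        rw [hTn1, show 0 + 1 + k = k + 1 from by omega, hTs k, Wsum]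
        rw [sum_range_succ, sum_range_succ, sum_range_zero]
        simp
    | succ n ih =>
      refine ⟨ih.2, fun k => ?_⟩
      rw [hTnrec n]
      rw [show n + 1 + 1 + k = n + 1 + (k + 1) from by omega, ih.2 (k + 1)]
      rw [show n + 1 + (k + 1) = n + (k + 2) from by omega, ih.1 (k + 2)]
      rw [W_T P Gk T hTs k (n + 2)]
      rw [W_last P Gk (k + 2) (n + 1), W_last P Gk k (n + 2)]
      rw [show k + 2 + 2 * (n + 1) = k + 2 * (n + 2) from by ring]
      module
  exact fun n => (key n).1

include hTn0 hTn1 hTnrec hTs in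
lemma hTz_step (hTz : T (Gk 0) = ε • Gk 0 + P • Gk 1) (v : ℕ) :
    Tn (v + 1) (Gk v) = ε • Gk 0 + P • Wsum P Gk 1 v + P ^ (v + 1) • Gk (2 * v + 1) := by
  match v with
  | 0 =>
    rw [hTn1, hTz]
    simp [Wsum]
  | w + 1 =>
    have hint := interior P Gk T hTs Tn hTn0 hTn1 hTnrec
    rw [hTnrec w]
    rw [show (w + 1 : ℕ) = w + 1 + 0 from rfl, hint (w + 1) 0,
        show w + 1 + 0 = w + 1 from rfl]
    rw [show (w + 1 : ℕ) = w + 1 from rfl]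
    have h2 : Tn w (Gk (w + 1)) = Wsum P Gk 1 (w + 1) := hint w 1
    rw [h2]
    rw [W_first P Gk 0 (w + 1), show (0 + 2 : ℕ) = 2 from rfl]
    rw [map_add, map_smul, hTz, show (2 : ℕ) = 1 + 1 from rfl,
        W_T P Gk T hTs 1 (w + 1), show (1 + 2 : ℕ) = 3 from rfl]
    -- key : Gk 1 + P • Wsum 3 (w+1) = Wsum 1 (w+1) + P^(w+1) • Gk (1 + 2*(w+1))
    have hkey := W_both P Gk 1 (w + 1)
    rw [show (1 + 2 : ℕ) = 3 from rfl] at hkey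
    rw [show 2 * (w + 1) + 1 = 1 + 2 * (w + 1) from by ring]
    linear_combination (norm := module) P • hkey

end Stmt10Aux

namespace Stmt10Aux

variable {R : Type*} [CommRing R] {M : Type*} [AddCommGroup M] [Module R M]
variable (P : R) (Gk : ℕ → M) (T : M →ₗ[R] M) (ε : R)
variable (hTs : ∀ k, T (Gk (k + 1)) = Gk k + P • Gk (k + 2))
variable (hTz : T (Gk 0) = ε • Gk 0 + P • Gk 1)
variable (Tn : ℕ → M →ₗ[R] M)
variable (hTn0 : ∀ x : M, Tn 0 x = x) (hTn1 : ∀ x : M, Tn 1 x = T x)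
variable (hTnrec : ∀ (n : ℕ) (x : M), Tn (n + 2) x = T (Tn (n + 1) x) - P • Tn n x)

include hTn0 hTn1 hTnrec hTs hTz in
lemma Rv (v : ℕ) :
    Tn (v + 1) (Gk v) - ε • Tn v (Gk v) = P • Xe P Gk ε v 0 := by
  have hint := interior P Gk T hTs Tn hTn0 hTn1 hTnrec
  have h0 : Tn v (Gk v) = Wsum P Gk 0 (v + 1) := by
    have := hint v 0; rw [Nat.add_zero] at this; exact this
  rw [hTz_step P Gk T ε hTs Tn hTn0 hTn1 hTnrec hTz v, h0]
  rw [W_first P Gk 0 v, show (0 + 2 : ℕ) = 2 from rfl]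
  rw [Xe, show 0 + 1 = 1 from rfl, show 0 + 2 = 2 from rfl,
      show 0 + 2 * v + 1 = 2 * v + 1 from by omega]
  module

include hTn0 hTn1 hTnrec hTs hTz in
lemma Rv1 (v : ℕ) :
    Tn (v + 2) (Gk v) - ε • Tn (v + 1) (Gk v) = (P * P) • Xe P Gk ε v 1 := by
  have hint := interior P Gk T hTs Tn hTn0 hTn1 hTnrec
  have hstep := hTz_step P Gk T ε hTs Tn hTn0 hTn1 hTnrec hTz v
  rw [hTnrec v]
  have h0 : Tn v (Gk v) = Wsum P Gk 0 (v + 1) := by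
    have := hint v 0; rw [Nat.add_zero] at this; exact this
  have hWT : T (Wsum P Gk 1 v) = Wsum P Gk 0 v + P • Wsum P Gk 2 v := by
    have := W_T P Gk T hTs 0 v
    simpa using this
  have hWlast : Wsum P Gk 0 (v + 1) = Wsum P Gk 0 v + P ^ v • Gk (2 * v) := by
    have := W_last P Gk 0 v
    simpa using this
  rw [hstep, h0]
  rw [map_add, map_add, map_smul, map_smul, map_smul, hTz, hWT, hTs (2 * v), hWlast]
  rw [Xe, show 1 + 1 = 2 from rfl, show 1 + 2 = 3 from rfl,
      show 1 + 2 * v + 1 = 2 * v + 2 from by omega]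
  have hkey := W_both P Gk 1 v
  rw [show (1 + 2 : ℕ) = 3 from rfl, show 1 + 2 * v = 2 * v + 1 from by omega] at hkey
  linear_combination (norm := module) (ε * P) • hkey

include hTnrec in
lemma Rrec (k : ℕ) (x : M) :
    Tn (k + 3) x - ε • Tn (k + 2) x
      = T (Tn (k + 2) x - ε • Tn (k + 1) x) - P • (Tn (k + 1) x - ε • Tn k x) := by
  rw [show k + 3 = k + 1 + 2 from rfl, hTnrec (k + 1) x, hTnrec k x]
  simp only [map_sub, map_smul]
  module

include hTn0 hTn1 hTnrec hTs hTz in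
theorem aux_final (v m : ℕ) :
    Tn (v + m + 1) (Gk v) - ε • Tn (v + m) (Gk v) = (P ^ (m + 1)) • Xe P Gk ε v m := by
  have main : ∀ m : ℕ,
      (Tn (v + m + 1) (Gk v) - ε • Tn (v + m) (Gk v) = (P ^ (m + 1)) • Xe P Gk ε v m) ∧
      (Tn (v + m + 2) (Gk v) - ε • Tn (v + m + 1) (Gk v)
        = (P ^ (m + 2)) • Xe P Gk ε v (m + 1)) := by
    intro m
    induction m with
    | zero =>
      refine ⟨?_, ?_⟩
      · rw [show v + 0 + 1 = v + 1 from rfl, show v + 0 = v from rfl, pow_one]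
        exact Rv P Gk T ε hTs hTz Tn hTn0 hTn1 hTnrec v
      · rw [show v + 0 + 2 = v + 2 from rfl, show v + 0 + 1 = v + 1 from rfl]
        rw [show (P ^ (0 + 2) : R) = P * P from by ring]
        exact Rv1 P Gk T ε hTs hTz Tn hTn0 hTn1 hTnrec v
    | succ m ih =>
      refine ⟨ih.2, ?_⟩
      have hrec := Rrec P T ε Tn hTnrec (v + m) (Gk v)
      rw [show v + (m + 1) + 2 = v + m + 3 from by omega,
          show v + (m + 1) + 1 = v + m + 2 from by omega, hrec, ih.1, ih.2,
          map_smul, T_Xe P Gk T ε hTs v m]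
      rw [show m + 1 + 2 = m + 3 from rfl, show m + 1 + 1 = m + 2 from rfl]
      have e1 : (P ^ (m + 3) : R) = P ^ (m + 2) * P := by ring
      have e2 : (P ^ (m + 2) : R) = P * P ^ (m + 1) := by ring
      rw [e1, e2]
      module
  exact (main m).1

end Stmt10Aux

/-- Successive Hecke operators on the Folsom–Ono `G_D`: for `D = p^{2v}·j` with
`p² ∤ j` and `n ≥ v`,
`T_{n+1}(G_D) − (12/p)(j/p)·T_n(G_D) ≡ 0 mod p^{n−v+1}·M`. -/
theorem stmt_10 {p : ℕ} [Fact p.Prime] (hp : 5 ≤ p)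
    {M : Type*} [AddCommGroup M] [Module ℤ M]
    (G : ℕ → M) (T : M →ₗ[ℤ] M)
    (hT : ∀ D : ℕ, 0 < D →
      T (G D) = (if p ^ 2 ∣ D then G (D / p ^ 2) else 0)
        + (legendreSym p 12 * legendreSym p (D : ℤ)) • G D
        + (p : ℤ) • G (p ^ 2 * D))
    (Tn : ℕ → M →ₗ[ℤ] M)
    (hTn0 : Tn 0 = LinearMap.id) (hTn1 : Tn 1 = T)
    (hTnrec : ∀ n : ℕ, Tn (n + 2) = T ∘ₗ Tn (n + 1) - (p : ℤ) • Tn n)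
    (j v : ℕ) (hj : 0 < j) (hjp : ¬ p ^ 2 ∣ j)
    (D : ℕ) (hD : D = p ^ (2 * v) * j)
    (n : ℕ) (hn : v ≤ n) :
    ∃ x : M, Tn (n + 1) (G D)
        - (legendreSym p 12 * legendreSym p (j : ℤ)) • Tn n (G D)
      = ((p : ℤ) ^ (n - v + 1)) • x := by
  have hp0 : 0 < p := lt_of_lt_of_le (by norm_num) hp
  set ε : ℤ := legendreSym p 12 * legendreSym p (j : ℤ) with hε
  set Gk : ℕ → M := fun k => G (p ^ (2 * k) * j) with hGk
  have hTz : T (Gk 0) = ε • Gk 0 + (p : ℤ) • Gk 1 := by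
    have e0 : p ^ (2 * 0) * j = j := by norm_num
    have e1 : p ^ (2 * 1) * j = p ^ 2 * j := by norm_num
    show T (G (p ^ (2 * 0) * j)) = ε • G (p ^ (2 * 0) * j) + (p : ℤ) • G (p ^ (2 * 1) * j)
    rw [e0, e1, hT j hj, if_neg hjp, zero_add]
  have hTs : ∀ k, T (Gk (k + 1)) = Gk k + (p : ℤ) • Gk (k + 2) := by
    intro k
    show T (G (p ^ (2 * (k + 1)) * j))
      = G (p ^ (2 * k) * j) + (p : ℤ) • G (p ^ (2 * (k + 2)) * j)
    have hDpos : 0 < p ^ (2 * (k + 1)) * j := by positivity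
    have h := hT _ hDpos
    have hdvd : p ^ 2 ∣ p ^ (2 * (k + 1)) * j := ⟨p ^ (2 * k) * j, by ring⟩
    rw [if_pos hdvd] at h
    have hdiv : p ^ (2 * (k + 1)) * j / p ^ 2 = p ^ (2 * k) * j := by
      rw [show p ^ (2 * (k + 1)) * j = p ^ 2 * (p ^ (2 * k) * j) from by ring]
      exact Nat.mul_div_cancel_left _ (by positivity)
    have hleg : legendreSym p ((p ^ (2 * (k + 1)) * j : ℕ) : ℤ) = 0 := by
      rw [legendreSym.eq_zero_iff]
      push_cast
      rw [ZMod.natCast_self]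
      rw [zero_pow (by omega : 2 * (k + 1) ≠ 0), zero_mul]
    have hmul : p ^ 2 * (p ^ (2 * (k + 1)) * j) = p ^ (2 * (k + 2)) * j := by ring
    rw [hdiv, hleg, mul_zero, zero_smul, add_zero, hmul] at h
    exact h
  simp only [← Int.cast_smul_eq_zsmul ℤ, Int.cast_id] at hTz hTs
  have hTn0P : ∀ x : M, Tn 0 x = x := fun x => by rw [hTn0]; rfl
  have hTn1P : ∀ x : M, Tn 1 x = T x := fun x => by rw [hTn1]
  have hTnrecP : ∀ (k : ℕ) (x : M), Tn (k + 2) x = T (Tn (k + 1) x) - (p : ℤ) • Tn k x := by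
    intro k x
    have heval : ∀ (a : ℤ) (F : M →ₗ[ℤ] M), (a • F) x = a • F x := by
      intro a F
      exact map_zsmul (⟨⟨fun F : M →ₗ[ℤ] M => F x, rfl⟩, fun f g => rfl⟩ :
        (M →ₗ[ℤ] M) →+ M) a F
    rw [hTnrec k, LinearMap.sub_apply, LinearMap.comp_apply, heval]
  simp only [← Int.cast_smul_eq_zsmul ℤ, Int.cast_id] at hTnrecP
  obtain ⟨m, rfl⟩ : ∃ m, n = v + m := ⟨n - v, by omega⟩
  refine ⟨Stmt10Aux.Xe (p : ℤ) Gk ε v m, ?_⟩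
  have hfin := Stmt10Aux.aux_final (p : ℤ) Gk T ε hTs hTz Tn hTn0P hTn1P hTnrecP v m
  have hGD : G D = Gk v := by rw [hD, hGk]
  rw [hGD, show v + m - v = m from by omega]
  simp only [← Int.cast_smul_eq_zsmul ℤ, Int.cast_id]
  exact hfin
end

section
/- Let S be a finite nonempty set of positive integers, let c : S → ℤ, and set g := Σ_{D∈S} c(D)·g_D ∈ M. Let w := max_{D∈S} ⌊v_p(D)/2⌋, where v_p denotes the p-adic valuation. Then for every integer n ≥ w there exists x ∈ M such that T_{n+2}(g) − T_n(g) = p^{n−w}·x; that is, T_{n+2}(g) − T_n(g) ≡ 0 modulo p^{n−w}·M. -/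
/-!
Write `D = p^(2v) D₀` with `p² ∤ D₀` and put `h j = g (p^(2j) D₀)`, so that
`T h₀ = ε h₀ + p h₁` and `T h_(j+1) = h_j + p h_(j+2)` with `ε = (D₀/p)`, hence `ε³ = ε`.
Every sequence `n ↦ T_n x` solves `x_(n+2) = T x_(n+1) - p x_n`, and a solution is determined by
its first two terms. Comparing solutions gives
`T_(v+q) h_v = T_q h₀ - p^q h_q + p^q ∑_(k ≤ v) p^k h_(q+2k)` and
`T_(q+1) h₀ = ε T_q h₀ + p^(q+1) h_(q+1)`. The first reduces the claim to
`T_(q+2) h₀ - T_q h₀ ∈ p^q M`, and the second turns that difference into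
`(ε² - 1) T_q h₀ + p^(q+1) (…) = (ε³ - ε) T_(q-1) h₀ + p^q (…)`.
-/

open Finset

namespace Hecke

variable {R M : Type*} [CommRing R] [AddCommGroup M] [Module R M]

def IsHeckeSeq (T : M →ₗ[R] M) (P : R) (x : ℕ → M) : Prop :=
  ∀ n, x (n + 2) = T (x (n + 1)) - P • x n

variable {T : M →ₗ[R] M} {P : R}

namespace IsHeckeSeq

variable {x y : ℕ → M}

lemma add (hx : IsHeckeSeq T P x) (hy : IsHeckeSeq T P y) : IsHeckeSeq T P (x + y) := fun n => by
  simp only [Pi.add_apply, hx n, hy n, map_add, smul_add]; abel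

lemma sub (hx : IsHeckeSeq T P x) (hy : IsHeckeSeq T P y) : IsHeckeSeq T P (x - y) := fun n => by
  simp only [Pi.sub_apply, hx n, hy n, map_sub, smul_sub]; abel

lemma smul (c : R) (hx : IsHeckeSeq T P x) : IsHeckeSeq T P (c • x) := fun n => by
  simp only [Pi.smul_apply, hx n, map_smul, smul_sub, smul_comm c P]

lemma comp_add_left (hx : IsHeckeSeq T P x) (k : ℕ) : IsHeckeSeq T P (fun n => x (k + n)) :=
  fun n => by simpa only [add_assoc] using hx (k + n)

lemma ext (hx : IsHeckeSeq T P x) (hy : IsHeckeSeq T P y) (h0 : x 0 = y 0) (h1 : x 1 = y 1) :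
    x = y := by
  suffices ∀ n, x n = y n ∧ x (n + 1) = y (n + 1) from funext fun n => (this n).1
  intro n
  induction n with
  | zero => exact ⟨h0, h1⟩
  | succ n ih => exact ⟨ih.2, by rw [hx, hy, ih.1, ih.2]⟩

end IsHeckeSeq

variable {Tn : ℕ → M →ₗ[R] M}

lemma isHeckeSeq_apply (hTnrec : ∀ n, Tn (n + 2) = T ∘ₗ Tn (n + 1) - P • Tn n) (y : M) :
    IsHeckeSeq T P (fun n => Tn n y) := fun n => by
  simp [hTnrec]

variable {h : ℕ → M}

lemma isHeckeSeq_pow_smul (hR1 : ∀ j, T (h (j + 1)) = h j + P • h (j + 2)) :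
    IsHeckeSeq T P (fun q => P ^ q • h q) := fun q => by
  simp only [map_smul, hR1]; module

variable (P h) in
def ladder (r n : ℕ) : M := ∑ k ∈ range (n + 1), P ^ k • h (r + 2 * k)

lemma ladder_zero (r : ℕ) : ladder P h r 0 = h r := by simp [ladder]

lemma ladder_succ (r n : ℕ) : ladder P h r (n + 1) = h r + P • ladder P h (r + 2) n := by
  simp only [ladder, sum_range_succ' _ (n + 1), smul_sum, smul_smul, ← pow_succ']
  simp only [pow_zero, one_smul, mul_zero, add_zero]
  rw [add_comm]; congr 1
  refine sum_congr rfl fun k _ => ?_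
  ring_nf

lemma map_ladder (hR1 : ∀ j, T (h (j + 1)) = h j + P • h (j + 2)) (r n : ℕ) :
    T (ladder P h (r + 1) n) = ladder P h r n + P • ladder P h (r + 2) n := by
  simp only [ladder, map_sum, map_smul, smul_sum, ← sum_add_distrib]
  refine sum_congr rfl fun k _ => ?_
  rw [show r + 1 + 2 * k = r + 2 * k + 1 by ring, hR1, show r + 2 * k + 2 = r + 2 + 2 * k by ring]
  module

lemma isHeckeSeq_pow_smul_ladder (hR1 : ∀ j, T (h (j + 1)) = h j + P • h (j + 2)) (v : ℕ) :
    IsHeckeSeq T P (fun q => P ^ q • ladder P h q v) := fun q => by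
  simp only [map_smul, map_ladder hR1]; module

variable (hTn0 : Tn 0 = LinearMap.id) (hTn1 : Tn 1 = T)
  (hTnrec : ∀ n, Tn (n + 2) = T ∘ₗ Tn (n + 1) - P • Tn n)
  (hR1 : ∀ j, T (h (j + 1)) = h j + P • h (j + 2))
include hTn0 hTn1 hTnrec hR1

lemma apply_add_eq_ladder (n : ℕ) : ∀ r, Tn n (h (n + r)) = ladder P h r n := by
  induction n using Nat.twoStepInduction with
  | zero => simp [hTn0, ladder_zero]
  | one => intro r; simp [hTn1, ladder_succ, ladder_zero, add_comm 1 r, hR1]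
  | more n ih₀ ih₁ =>
    intro r
    have e₁ := ih₁ (r + 1)
    have e₀ := ih₀ (r + 2)
    rw [show n + 1 + (r + 1) = n + 2 + r by ring] at e₁
    rw [show n + (r + 2) = n + 2 + r by ring] at e₀
    rw [hTnrec, LinearMap.sub_apply, LinearMap.comp_apply, LinearMap.smul_apply, e₁, e₀,
      map_ladder hR1, ladder_succ r (n + 1), ladder_succ (r + 2) n, ladder_succ r n]
    module

lemma apply_add_eq (v q : ℕ) :
    Tn (v + q) (h v) = Tn q (h 0) - P ^ q • h q + P ^ q • ladder P h q v := by
  have hL := (isHeckeSeq_apply hTnrec (h v)).comp_add_left v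
  have hR := ((isHeckeSeq_apply hTnrec (h 0)).sub (isHeckeSeq_pow_smul hR1)).add
    (isHeckeSeq_pow_smul_ladder hR1 v)
  refine congrFun (hL.ext hR ?_ ?_) q
  · simpa [hTn0] using apply_add_eq_ladder hTn0 hTn1 hTnrec hR1 v 0
  · cases v with
    | zero => simp [ladder_zero]
    | succ m =>
      have e₁ := apply_add_eq_ladder hTn0 hTn1 hTnrec hR1 (m + 1) 0
      have e₀ := apply_add_eq_ladder hTn0 hTn1 hTnrec hR1 m 1
      simp only [add_zero] at e₁
      simp only [Pi.add_apply, Pi.sub_apply, hTnrec, LinearMap.sub_apply, LinearMap.comp_apply,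
        LinearMap.smul_apply, e₁, e₀, hTn1, ladder_succ, map_add, map_smul, map_ladder hR1]
      module

variable {e : R} (hR0 : T (h 0) = e • h 0 + P • h 1)
include hR0

lemma apply_succ_zero (q : ℕ) : Tn (q + 1) (h 0) = e • Tn q (h 0) + P ^ (q + 1) • h (q + 1) := by
  have hL := ((isHeckeSeq_apply hTnrec (h 0)).sub (isHeckeSeq_pow_smul hR1)).comp_add_left 1
  have hR := (isHeckeSeq_apply hTnrec (h 0)).smul e
  have := congrFun (hL.ext hR ?_ ?_) q
  · simp only [Pi.sub_apply, Pi.smul_apply, add_comm 1 q] at this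
    rw [← this]; abel
  · simp [hTn0, hTn1, hR0]
  · simp [hTnrec, hTn0, hTn1, hR0, hR1]
    module

lemma exists_apply_add_two_sub_zero (he : e ^ 3 = e) (q : ℕ) :
    ∃ x, Tn (q + 2) (h 0) - Tn q (h 0) = P ^ q • x := by
  cases q with
  | zero => exact ⟨_, by rw [pow_zero, one_smul]⟩
  | succ k =>
    have b := apply_succ_zero hTn0 hTn1 hTnrec hR1 hR0
    refine ⟨(e ^ 2 - 1) • h (k + 1) + (e * P) • h (k + 2) + P ^ 2 • h (k + 3), ?_⟩
    rw [b (k + 2), b (k + 1), b k]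
    linear_combination (norm := module) he • Tn k (h 0)

lemma exists_apply_add_two_sub (he : e ^ 3 = e) {v n : ℕ} (hvn : v ≤ n) :
    ∃ x, Tn (n + 2) (h v) - Tn n (h v) = P ^ (n - v) • x := by
  obtain ⟨q, rfl⟩ := Nat.exists_eq_add_of_le hvn
  obtain ⟨x, hx⟩ := exists_apply_add_two_sub_zero hTn0 hTn1 hTnrec hR1 hR0 he q
  refine ⟨x - (P ^ 2 • h (q + 2) - h q) + (P ^ 2 • ladder P h (q + 2) v - ladder P h q v), ?_⟩
  rw [add_tsub_cancel_left, add_assoc, apply_add_eq hTn0 hTn1 hTnrec hR1,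
    apply_add_eq hTn0 hTn1 hTnrec hR1]
  linear_combination (norm := module) hx

end Hecke

lemma exists_eq_pow_two_mul_not_sq_dvd {p D : ℕ} (hp : p.Prime) (hD : D ≠ 0) :
    ∃ D₀, D = p ^ (2 * (padicValNat p D / 2)) * D₀ ∧ ¬ p ^ 2 ∣ D₀ := by
  have : Fact p.Prime := ⟨hp⟩
  set v := padicValNat p D / 2 with hv
  obtain ⟨D₀, hD₀⟩ : p ^ (2 * v) ∣ D :=
    (pow_dvd_pow p (Nat.mul_div_le _ 2)).trans pow_padicValNat_dvd
  refine ⟨D₀, hD₀, fun hsq => ?_⟩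
  have hdvd : p ^ (2 * v + 2) ∣ D := by
    rw [hD₀, pow_add]
    exact mul_dvd_mul_left _ hsq
  have := (padicValNat_dvd_iff_le hD).mp hdvd
  omega

lemma legendreSym_pow_three (p : ℕ) [Fact p.Prime] (a : ℤ) :
    legendreSym p a ^ 3 = legendreSym p a := by
  by_cases ha : (a : ZMod p) = 0
  · simp [(legendreSym.eq_zero_iff p a).mpr ha]
  · rw [pow_succ, legendreSym.sq_one p ha, one_mul]

namespace KohnenPlus

variable {p : ℕ} [Fact p.Prime] {M : Type*} [AddCommGroup M] {g : ℕ → M}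
  {T : M →ₗ[ℤ] M}
  (hT : ∀ D : ℕ, 0 < D →
      T (g D) = (if p ^ 2 ∣ D then g (D / p ^ 2) else 0)
        + (legendreSym p (D : ℤ)) • g D + (p : ℤ) • g (p ^ 2 * D))
include hT

lemma apply_of_not_sq_dvd {D : ℕ} (hD : 0 < D) (hsq : ¬ p ^ 2 ∣ D) :
    T (g D) = legendreSym p D • g D + (p : ℤ) • g (p ^ 2 * D) := by
  rw [hT D hD, if_neg hsq, zero_add]

lemma apply_pow_mul {D : ℕ} (hD : 0 < D) (j : ℕ) :
    T (g (p ^ (2 * (j + 1)) * D)) = g (p ^ (2 * j) * D) + (p : ℤ) • g (p ^ (2 * (j + 2)) * D) := by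
  have hp : 0 < p := (Fact.out : p.Prime).pos
  have hmul : p ^ (2 * (j + 1)) * D = p ^ 2 * (p ^ (2 * j) * D) := by ring
  have hleg : legendreSym p ((p ^ (2 * (j + 1)) * D : ℕ) : ℤ) = 0 := by
    rw [legendreSym.eq_zero_iff]
    simp
  rw [hT _ (by positivity), if_pos (hmul ▸ dvd_mul_right _ _), hleg, zero_smul, add_zero, hmul,
    Nat.mul_div_cancel_left _ (by positivity), ← hmul]
  ring_nf

variable {Tn : ℕ → M →ₗ[ℤ] M} (hTn0 : Tn 0 = LinearMap.id) (hTn1 : Tn 1 = T)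
  (hTnrec : ∀ n : ℕ, Tn (n + 2) = T ∘ₗ Tn (n + 1) - (p : ℤ) • Tn n)
include hTn0 hTn1 hTnrec

lemma exists_apply_add_two_sub_of_pos {D n : ℕ} (hD : 0 < D) (hn : padicValNat p D / 2 ≤ n) :
    ∃ x, Tn (n + 2) (g D) - Tn n (g D) = (p : ℤ) ^ (n - padicValNat p D / 2) • x := by
  obtain ⟨D₀, hDeq, hsq⟩ := exists_eq_pow_two_mul_not_sq_dvd (Fact.out : p.Prime) hD.ne'
  have hD₀ : 0 < D₀ := Nat.pos_of_ne_zero fun h => by simp [h] at hDeq; omega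
  have key := Hecke.exists_apply_add_two_sub (h := fun j => g (p ^ (2 * j) * D₀)) hTn0 hTn1 hTnrec
    (apply_pow_mul hT hD₀) (by simpa using apply_of_not_sq_dvd hT hD₀ hsq)
    (legendreSym_pow_three p D₀) hn
  simpa only [← hDeq] using key

end KohnenPlus

theorem stmt_11_general {p : ℕ} [Fact p.Prime]
    {M : Type*} [AddCommGroup M] [Module ℤ M]
    (g : ℕ → M) (T : M →ₗ[ℤ] M)
    (hT : ∀ D : ℕ, 0 < D →
      T (g D) = (if p ^ 2 ∣ D then g (D / p ^ 2) else 0)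
        + (legendreSym p (D : ℤ)) • g D + (p : ℤ) • g (p ^ 2 * D))
    (Tn : ℕ → M →ₗ[ℤ] M)
    (hTn0 : Tn 0 = LinearMap.id) (hTn1 : Tn 1 = T)
    (hTnrec : ∀ n : ℕ, Tn (n + 2) = T ∘ₗ Tn (n + 1) - (p : ℤ) • Tn n)
    (S : Finset ℕ) (hSpos : ∀ D ∈ S, 0 < D)
    (c : ℕ → ℤ) (G : M) (hG : G = ∑ D ∈ S, c D • g D)
    (w : ℕ) (hw : w = S.sup (fun D => padicValNat p D / 2))
    (n : ℕ) (hn : w ≤ n) :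
    ∃ x : M, Tn (n + 2) G - Tn n G = ((p : ℤ) ^ (n - w)) • x := by
  -- `hT` scales by `zsmul`; the unique `Module ℤ M` structure is the one acting that way.
  obtain rfl : ‹Module ℤ M› = AddCommGroup.toIntModule M := Subsingleton.elim _ _
  have hgD : ∀ D ∈ S, ∃ y, Tn (n + 2) (g D) - Tn n (g D) = (p : ℤ) ^ (n - w) • y := by
    intro D hD
    have hvw : padicValNat p D / 2 ≤ w := hw ▸ le_sup (f := fun D => padicValNat p D / 2) hD
    obtain ⟨x, hx⟩ := KohnenPlus.exists_apply_add_two_sub_of_pos hT hTn0 hTn1 hTnrec (hSpos D hD)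
      (hvw.trans hn)
    refine ⟨(p : ℤ) ^ (w - padicValNat p D / 2) • x, ?_⟩
    rw [hx, smul_smul, ← pow_add]
    congr 2
    omega
  choose! y hy using hgD
  refine ⟨∑ D ∈ S, c D • y D, ?_⟩
  simp only [hG, map_sum, map_zsmul, ← sum_sub_distrib, smul_sum]
  exact sum_congr rfl fun D hD => by rw [← smul_sub, hy D hD, smul_comm]

/-- Theorem 1.1 (1): for `g = ∑_{D∈S} c(D)·g_D` with `w = max ⌊v_p(D)/2⌋`,
`T_{n+2}(g) − T_n(g) ≡ 0 mod p^{n−w}·M` for all `n ≥ w`. -/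
theorem stmt_11 {p : ℕ} [Fact p.Prime] (hp : p ≠ 2)
    {M : Type*} [AddCommGroup M] [Module ℤ M]
    (g : ℕ → M) (T : M →ₗ[ℤ] M)
    (hT : ∀ D : ℕ, 0 < D →
      T (g D) = (if p ^ 2 ∣ D then g (D / p ^ 2) else 0)
        + (legendreSym p (D : ℤ)) • g D + (p : ℤ) • g (p ^ 2 * D))
    (Tn : ℕ → M →ₗ[ℤ] M)
    (hTn0 : Tn 0 = LinearMap.id) (hTn1 : Tn 1 = T)
    (hTnrec : ∀ n : ℕ, Tn (n + 2) = T ∘ₗ Tn (n + 1) - (p : ℤ) • Tn n)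
    (S : Finset ℕ) (hS : S.Nonempty) (hSpos : ∀ D ∈ S, 0 < D)
    (c : ℕ → ℤ) (G : M) (hG : G = ∑ D ∈ S, c D • g D)
    (w : ℕ) (hw : w = S.sup (fun D => padicValNat p D / 2))
    (n : ℕ) (hn : w ≤ n) :
    ∃ x : M, Tn (n + 2) G - Tn n G = ((p : ℤ) ^ (n - w)) • x :=
  stmt_11_general g T hT Tn hTn0 hTn1 hTnrec S hSpos c G hG w hw n hn
end

section
/- Let S be a finite nonempty set of positive integers, let c : S → ℤ, and set G := Σ_{D∈S} c(D)·G_D ∈ M. Let w := max_{D∈S} ⌊v_p(D)/2⌋, where v_p denotes the p-adic valuation. Then for every integer n ≥ w there exists x ∈ M such that T_{n+2}(G) − T_n(G) = p^{n−w}·x; that is, T_{n+2}(G) − T_n(G) ≡ 0 modulo p^{n−w}·M. -/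
private def zsmulHom {M : Type*} [AddCommGroup M] (e : ℤ) : M →+ M where
  toFun x := e • x
  map_zero' := zsmul_zero e
  map_add' a b := zsmul_add a b e

lemma zsmul_finset_sum {ι M : Type*} [AddCommGroup M] (e : ℤ) (s : Finset ι)
    (g : ι → M) : e • (∑ i ∈ s, g i) = ∑ i ∈ s, e • g i :=
  map_sum (zsmulHom e) g s

section Aux
variable {M : Type*} [AddCommGroup M] [Module ℤ M]

/-- head part: `∑_{k≤t} p^k ε^{t-k} e_k` -/
def headS (p : ℕ) (ε : ℤ) (dd : ℕ → M) (t : ℕ) : M :=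
  ∑ k ∈ Finset.range (t + 1), ((p : ℤ) ^ k * ε ^ (t - k)) • dd k

/-- tail part: `∑_{i<m} p^{t+1+i} e_{t+2+2i}` -/
def tailS (p mm : ℕ) (dd : ℕ → M) (t : ℕ) : M :=
  ∑ i ∈ Finset.range mm, ((p : ℤ) ^ (t + 1 + i)) • dd (t + 2 + 2 * i)

variable (p mm : ℕ) (ε : ℤ) (dd : ℕ → M) (T : M →ₗ[ℤ] M)
variable (hTd0 : T (dd 0) = ε • dd 0 + (p : ℤ) • dd 1)
variable (hTd : ∀ k, T (dd (k + 1)) = dd k + (p : ℤ) • dd (k + 2))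

include hTd0 hTd in
lemma Thead (t : ℕ) :
    T (headS p ε dd (t + 1)) = headS p ε dd (t + 2) + (p : ℤ) • headS p ε dd t := by
  unfold headS
  rw [map_sum]
  rw [Finset.sum_range_succ' (fun k => T (((p : ℤ) ^ k * ε ^ (t + 1 - k)) • dd k)) (t + 1)]
  have h1 : ∀ k ∈ Finset.range (t + 1),
      T (((p : ℤ) ^ (k + 1) * ε ^ (t + 1 - (k + 1))) • dd (k + 1))
        = ((p : ℤ) * ((p : ℤ) ^ k * ε ^ (t - k))) • dd k
          + ((p : ℤ) ^ (k + 2) * ε ^ (t - k)) • dd (k + 2) := by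
    intro k hk
    rw [map_zsmul, hTd k, show t + 1 - (k + 1) = t - k by omega, zsmul_add, ← mul_zsmul,
      show (p : ℤ) ^ (k + 1) * ε ^ (t - k) = (p : ℤ) * ((p : ℤ) ^ k * ε ^ (t - k)) by ring,
      show (p : ℤ) * ((p : ℤ) ^ k * ε ^ (t - k)) * (p : ℤ)
        = (p : ℤ) ^ (k + 2) * ε ^ (t - k) by ring]
  rw [Finset.sum_congr rfl h1, Finset.sum_add_distrib]
  have h0 : T (((p : ℤ) ^ 0 * ε ^ (t + 1 - 0)) • dd 0)
      = (ε ^ (t + 2)) • dd 0 + ((p : ℤ) * ε ^ (t + 1)) • dd 1 := by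
    rw [map_zsmul, hTd0, zsmul_add, ← mul_zsmul, ← mul_zsmul]
    rw [show t + 1 - 0 = t + 1 by omega, pow_zero, one_mul]
    rw [show ε ^ (t + 1) * ε = ε ^ (t + 2) by ring,
      show ε ^ (t + 1) * (p : ℤ) = (p : ℤ) * ε ^ (t + 1) by ring]
  rw [h0]
  -- RHS
  rw [show t + 2 + 1 = (t + 1) + 1 + 1 by ring]
  rw [Finset.sum_range_succ' (fun k => ((p : ℤ) ^ k * ε ^ (t + 2 - k)) • dd k) (t + 1 + 1)]
  rw [Finset.sum_range_succ' (fun k => ((p : ℤ) ^ (k + 1) * ε ^ (t + 2 - (k + 1))) • dd (k + 1)) (t + 1)]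
  have h2 : ∀ k ∈ Finset.range (t + 1),
      ((p : ℤ) ^ (k + 1 + 1) * ε ^ (t + 2 - (k + 1 + 1))) • dd (k + 1 + 1)
        = ((p : ℤ) ^ (k + 2) * ε ^ (t - k)) • dd (k + 2) := by
    intro k hk
    rw [show k + 1 + 1 = k + 2 by ring, show t + 2 - (k + 2) = t - k by omega]
  rw [Finset.sum_congr rfl h2]
  rw [show ((p : ℤ) ^ (0 + 1) * ε ^ (t + 2 - (0 + 1))) • dd (0 + 1)
      = ((p : ℤ) * ε ^ (t + 1)) • dd 1 by norm_num,
    show ((p : ℤ) ^ 0 * ε ^ (t + 2 - 0)) • dd 0 = (ε ^ (t + 2)) • dd 0 by norm_num]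
  rw [zsmul_finset_sum]
  have h3 : ∀ k ∈ Finset.range (t + 1),
      (p : ℤ) • (((p : ℤ) ^ k * ε ^ (t - k)) • dd k)
        = ((p : ℤ) * ((p : ℤ) ^ k * ε ^ (t - k))) • dd k := by
    intro k hk
    rw [← mul_zsmul]
  rw [Finset.sum_congr rfl h3]
  abel

include hTd in
lemma Ttail (t : ℕ) :
    T (tailS p mm dd (t + 1)) = (p : ℤ) • tailS p mm dd t + tailS p mm dd (t + 2) := by
  unfold tailS
  rw [map_sum, zsmul_finset_sum, ← Finset.sum_add_distrib]
  refine Finset.sum_congr rfl fun i hi => ?_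
  rw [map_zsmul, show t + 1 + 2 + 2 * i = (t + 2 + 2 * i) + 1 by ring, hTd (t + 2 + 2 * i),
    zsmul_add, ← mul_zsmul, ← mul_zsmul,
    show (p : ℤ) ^ (t + 1 + 1 + i) * (p : ℤ) = (p : ℤ) ^ (t + 2 + 1 + i) by
      rw [show t + 2 + 1 + i = (t + 1 + 1 + i) + 1 by ring, pow_succ],
    show (p : ℤ) * (p : ℤ) ^ (t + 1 + i) = (p : ℤ) ^ (t + 1 + 1 + i) by
      rw [show t + 1 + 1 + i = (t + 1 + i) + 1 by ring, pow_succ']]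
  rw [show t + 2 + 2 * i + 1 + 1 = t + 2 + 2 + 2 * i by ring]

include hTd in
lemma phase1 (Tn : ℕ → M →ₗ[ℤ] M)
    (hTn0 : Tn 0 = LinearMap.id) (hTn1 : Tn 1 = T)
    (hTnrec : ∀ n : ℕ, Tn (n + 2) = T ∘ₗ Tn (n + 1) - (p : ℤ) • Tn n) :
    ∀ t, t ≤ mm → Tn t (dd mm)
      = ∑ i ∈ Finset.range (t + 1), ((p : ℤ) ^ i) • dd (mm - t + 2 * i) := by
  have hrec : ∀ k (z : M), Tn (k + 2) z = T (Tn (k + 1) z) - (p : ℤ) • Tn k z := by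
    intro k z
    rw [hTnrec k, LinearMap.sub_apply, LinearMap.comp_apply]
    congr 1
  have main : ∀ t,
      (t ≤ mm → Tn t (dd mm)
        = ∑ i ∈ Finset.range (t + 1), ((p : ℤ) ^ i) • dd (mm - t + 2 * i))
      ∧ (t + 1 ≤ mm → Tn (t + 1) (dd mm)
        = ∑ i ∈ Finset.range (t + 2), ((p : ℤ) ^ i) • dd (mm - (t + 1) + 2 * i)) := by
    intro t
    induction t with
    | zero =>
      constructor
      · intro _
        rw [hTn0, LinearMap.id_apply, Finset.sum_range_one, pow_zero, one_zsmul,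
          show mm - 0 + 2 * 0 = mm by omega]
      · intro h1
        have hd := hTd (mm - 1)
        rw [show mm - 1 + 1 = mm by omega] at hd
        rw [hTn1, hd, Finset.sum_range_succ, Finset.sum_range_one, pow_zero, one_zsmul,
          pow_one, show mm - (0 + 1) + 2 * 0 = mm - 1 by omega,
          show mm - (0 + 1) + 2 * 1 = mm - 1 + 2 by omega]
    | succ t ih =>
      refine ⟨ih.2, fun h2 => ?_⟩
      rw [show t + 1 + 1 = t + 2 by ring]
      rw [hrec t (dd mm), ih.1 (by omega), ih.2 (by omega)]
      have hA : ∀ i ∈ Finset.range (t + 2),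
          T (((p : ℤ) ^ i) • dd (mm - (t + 1) + 2 * i))
            = ((p : ℤ) ^ i) • dd (mm - (t + 2) + 2 * i)
              + ((p : ℤ) ^ (i + 1)) • dd (mm - (t + 2) + 2 * (i + 1)) := by
        intro i hi
        rw [map_zsmul, show mm - (t + 1) + 2 * i = (mm - (t + 2) + 2 * i) + 1 by omega,
          hTd, zsmul_add, ← mul_zsmul,
          show (p : ℤ) ^ i * (p : ℤ) = (p : ℤ) ^ (i + 1) by rw [pow_succ],
          show mm - (t + 2) + 2 * i + 2 = mm - (t + 2) + 2 * (i + 1) by ring]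
      rw [map_sum, Finset.sum_congr rfl hA, Finset.sum_add_distrib]
      have hB : (p : ℤ) • ∑ i ∈ Finset.range (t + 1), ((p : ℤ) ^ i) • dd (mm - t + 2 * i)
          = ∑ i ∈ Finset.range (t + 1),
              ((p : ℤ) ^ (i + 1)) • dd (mm - (t + 2) + 2 * (i + 1)) := by
        rw [zsmul_finset_sum]
        refine Finset.sum_congr rfl fun i hi => ?_
        rw [← mul_zsmul, show (p : ℤ) * (p : ℤ) ^ i = (p : ℤ) ^ (i + 1) by rw [pow_succ'],
          show mm - t + 2 * i = mm - (t + 2) + 2 * (i + 1) by omega]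
      rw [hB]
      rw [Finset.sum_range_succ
        (fun i => ((p : ℤ) ^ (i + 1)) • dd (mm - (t + 2) + 2 * (i + 1))) (t + 1)]
      rw [Finset.sum_range_succ
        (fun i => ((p : ℤ) ^ i) • dd (mm - (t + 2) + 2 * i)) (t + 2)]
      rw [show t + 1 + 1 = t + 2 by ring]
      abel
  exact fun t ht => (main t).1 ht

lemma headS_zero : headS p ε dd 0 = dd 0 := by
  unfold headS
  rw [Finset.sum_range_one, pow_zero, Nat.sub_zero, pow_zero, one_mul, one_zsmul]

lemma headS_one : headS p ε dd 1 = ε • dd 0 + (p : ℤ) • dd 1 := by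
  unfold headS
  rw [Finset.sum_range_succ, Finset.sum_range_one]
  norm_num

include hTd0 hTd in
lemma phase2 (Tn : ℕ → M →ₗ[ℤ] M)
    (hTn0 : Tn 0 = LinearMap.id) (hTn1 : Tn 1 = T)
    (hTnrec : ∀ n : ℕ, Tn (n + 2) = T ∘ₗ Tn (n + 1) - (p : ℤ) • Tn n) :
    ∀ s, Tn (mm + s) (dd mm) = headS p ε dd s + tailS p mm dd s := by
  have hrec : ∀ k (z : M), Tn (k + 2) z = T (Tn (k + 1) z) - (p : ℤ) • Tn k z := by
    intro k z
    rw [hTnrec k, LinearMap.sub_apply, LinearMap.comp_apply]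
    congr 1
  have hph1 := phase1 p mm dd T hTd Tn hTn0 hTn1 hTnrec
  -- base s = 0
  have base0 : Tn (mm + 0) (dd mm) = headS p ε dd 0 + tailS p mm dd 0 := by
    rw [Nat.add_zero, hph1 mm le_rfl, headS_zero]
    unfold tailS
    rw [Finset.sum_range_succ' (fun i => ((p : ℤ) ^ i) • dd (mm - mm + 2 * i)) mm]
    rw [show mm - mm + 2 * 0 = 0 by omega, pow_zero, one_zsmul]
    rw [Finset.sum_congr rfl (fun i (hi : i ∈ Finset.range mm) => by
      rw [show mm - mm + 2 * (i + 1) = 0 + 2 + 2 * i by omega,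
        show (i + 1 : ℕ) = 0 + 1 + i by omega] :
      ∀ i ∈ Finset.range mm, ((p : ℤ) ^ (i + 1)) • dd (mm - mm + 2 * (i + 1))
        = ((p : ℤ) ^ (0 + 1 + i)) • dd (0 + 2 + 2 * i))]
    abel
  -- base s = 1
  have base1 : Tn (mm + 1) (dd mm) = headS p ε dd 1 + tailS p mm dd 1 := by
    rcases Nat.eq_zero_or_pos mm with hm0 | hm1
    · subst hm0
      rw [zero_add, hTn1, hTd0, headS_one]
      unfold tailS
      rw [Finset.range_zero, Finset.sum_empty, add_zero]
    · rw [show mm + 1 = (mm - 1) + 2 by omega, hrec, show mm - 1 + 1 = mm by omega,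
        hph1 mm le_rfl, hph1 (mm - 1) (by omega),
        show mm - 1 + 1 = mm by omega]
      rw [map_sum]
      rw [Finset.sum_range_succ'
        (fun i => T (((p : ℤ) ^ i) • dd (mm - mm + 2 * i))) mm]
      rw [show mm - mm + 2 * 0 = 0 by omega, pow_zero, one_zsmul, hTd0]
      have hA : ∀ i ∈ Finset.range mm,
          T (((p : ℤ) ^ (i + 1)) • dd (mm - mm + 2 * (i + 1)))
            = ((p : ℤ) ^ (i + 1)) • dd (2 * i + 1)
              + ((p : ℤ) ^ (1 + 1 + i)) • dd (1 + 2 + 2 * i) := by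
        intro i hi
        rw [map_zsmul, show mm - mm + 2 * (i + 1) = (2 * i + 1) + 1 by omega, hTd,
          zsmul_add, ← mul_zsmul,
          show (p : ℤ) ^ (i + 1) * (p : ℤ) = (p : ℤ) ^ (1 + 1 + i) by ring,
          show 2 * i + 1 + 2 = 1 + 2 + 2 * i by ring]
      rw [Finset.sum_congr rfl hA, Finset.sum_add_distrib]
      have hB : (p : ℤ) • ∑ i ∈ Finset.range mm,
            ((p : ℤ) ^ i) • dd (mm - (mm - 1) + 2 * i)
          = ∑ i ∈ Finset.range mm, ((p : ℤ) ^ (i + 1)) • dd (2 * i + 1) := by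
        rw [zsmul_finset_sum]
        refine Finset.sum_congr rfl fun i hi => ?_
        rw [← mul_zsmul, show (p : ℤ) * (p : ℤ) ^ i = (p : ℤ) ^ (i + 1) by rw [pow_succ'],
          show mm - (mm - 1) + 2 * i = 2 * i + 1 by omega]
      rw [hB, headS_one]
      unfold tailS
      abel
  -- step
  have main : ∀ s,
      (Tn (mm + s) (dd mm) = headS p ε dd s + tailS p mm dd s)
      ∧ (Tn (mm + (s + 1)) (dd mm) = headS p ε dd (s + 1) + tailS p mm dd (s + 1)) := by
    intro s
    induction s with
    | zero => exact ⟨base0, base1⟩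
    | succ s ih =>
      refine ⟨ih.2, ?_⟩
      rw [show mm + (s + 1 + 1) = (mm + s) + 2 by ring, hrec,
        show mm + s + 1 = mm + (s + 1) by ring, ih.1, ih.2, map_add,
        Thead p ε dd T hTd0 hTd s, Ttail p mm dd T hTd s, zsmul_add]
      abel
  exact fun s => (main s).1

omit [Module ℤ M] in
private lemma peel3 (f : ℕ → M) (n : ℕ) :
    ∑ k ∈ Finset.range (n + 3), f k
      = ∑ k ∈ Finset.range n, f k + f n + f (n + 1) + f (n + 2) := by
  rw [show n + 3 = (n + 2) + 1 by ring, Finset.sum_range_succ,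
    show n + 2 = (n + 1) + 1 by ring, Finset.sum_range_succ, Finset.sum_range_succ]

lemma diff_div (hε3 : ε ^ 3 = ε) (s : ℕ) :
    ∃ x : M, (headS p ε dd (s + 2) + tailS p mm dd (s + 2))
        - (headS p ε dd s + tailS p mm dd s) = ((p : ℤ) ^ s) • x := by
  have hεp : ∀ b, ε ^ (b + 3) = ε ^ (b + 1) := by
    intro b
    calc ε ^ (b + 3) = ε ^ b * ε ^ 3 := by ring
      _ = ε ^ b * ε := by rw [hε3]
      _ = ε ^ (b + 1) := by ring
  refine ⟨(ε ^ 2) • dd s - dd s + ((p : ℤ) * ε) • dd (s + 1) + ((p : ℤ) ^ 2) • dd (s + 2)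
    + ∑ i ∈ Finset.range mm,
        (((p : ℤ) ^ (3 + i)) • dd (s + 2 + 2 + 2 * i)
          - ((p : ℤ) ^ (1 + i)) • dd (s + 2 + 2 * i)), ?_⟩
  have hh2 : headS p ε dd (s + 2)
      = ∑ k ∈ Finset.range s, ((p : ℤ) ^ k * ε ^ (s - k)) • dd k
        + ((p : ℤ) ^ s * ε ^ 2) • dd s + ((p : ℤ) ^ (s + 1) * ε) • dd (s + 1)
        + ((p : ℤ) ^ (s + 2)) • dd (s + 2) := by
    unfold headS
    rw [show s + 2 + 1 = s + 3 by ring, peel3]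
    rw [show s + 2 - s = 2 by omega, show s + 2 - (s + 1) = 1 by omega,
      show s + 2 - (s + 2) = 0 by omega, pow_zero, mul_one, pow_one]
    rw [Finset.sum_congr rfl (fun k (hk : k ∈ Finset.range s) => by
        have hk' := Finset.mem_range.mp hk
        rw [show s + 2 - k = (s - k - 1) + 3 by omega, hεp,
          show s - k - 1 + 1 = s - k by omega] :
      ∀ k ∈ Finset.range s, ((p : ℤ) ^ k * ε ^ (s + 2 - k)) • dd k
        = ((p : ℤ) ^ k * ε ^ (s - k)) • dd k)]
  have hh1 : headS p ε dd s
      = ∑ k ∈ Finset.range s, ((p : ℤ) ^ k * ε ^ (s - k)) • dd k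
        + ((p : ℤ) ^ s) • dd s := by
    unfold headS
    rw [Finset.sum_range_succ, show s - s = 0 by omega, pow_zero, mul_one]
  rw [hh2, hh1]
  unfold tailS
  rw [zsmul_add, zsmul_add, zsmul_add, zsmul_sub, zsmul_finset_sum]
  rw [← mul_zsmul, ← mul_zsmul, ← mul_zsmul]
  rw [show (p : ℤ) ^ s * ((p : ℤ) * ε) = (p : ℤ) ^ (s + 1) * ε by ring,
    show (p : ℤ) ^ s * (p : ℤ) ^ 2 = (p : ℤ) ^ (s + 2) by ring]
  rw [Finset.sum_congr rfl (fun i (hi : i ∈ Finset.range mm) => by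
      rw [zsmul_sub, ← mul_zsmul, ← mul_zsmul,
        show (p : ℤ) ^ s * (p : ℤ) ^ (3 + i) = (p : ℤ) ^ (s + 2 + 1 + i) by ring,
        show (p : ℤ) ^ s * (p : ℤ) ^ (1 + i) = (p : ℤ) ^ (s + 1 + i) by ring] :
    ∀ i ∈ Finset.range mm, (p : ℤ) ^ s • (((p : ℤ) ^ (3 + i)) • dd (s + 2 + 2 + 2 * i)
        - ((p : ℤ) ^ (1 + i)) • dd (s + 2 + 2 * i))
      = ((p : ℤ) ^ (s + 2 + 1 + i)) • dd (s + 2 + 2 + 2 * i)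
        - ((p : ℤ) ^ (s + 1 + i)) • dd (s + 2 + 2 * i))]
  rw [Finset.sum_sub_distrib]
  abel

end Aux

lemma key_lemma {p : ℕ} [Fact p.Prime]
    {M : Type*} [AddCommGroup M] [Module ℤ M]
    (G : ℕ → M) (T : M →ₗ[ℤ] M)
    (hT : ∀ D : ℕ, 0 < D →
      T (G D) = (if p ^ 2 ∣ D then G (D / p ^ 2) else 0)
        + (legendreSym p 12 * legendreSym p (D : ℤ)) • G D
        + (p : ℤ) • G (p ^ 2 * D))
    (Tn : ℕ → M →ₗ[ℤ] M)
    (hTn0 : Tn 0 = LinearMap.id) (hTn1 : Tn 1 = T)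
    (hTnrec : ∀ n : ℕ, Tn (n + 2) = T ∘ₗ Tn (n + 1) - (p : ℤ) • Tn n)
    (D : ℕ) (hD : 0 < D) (n : ℕ) (hn : padicValNat p D / 2 ≤ n) :
    ∃ x : M, Tn (n + 2) (G D) - Tn n (G D)
      = ((p : ℤ) ^ (n - padicValNat p D / 2)) • x := by
  have hpp : p.Prime := Fact.out
  have hp0 : 0 < p := hpp.pos
  set v := padicValNat p D with hv
  set m := v / 2 with hm
  have hdvd : p ^ (2 * m) ∣ D :=
    dvd_trans (pow_dvd_pow p (by omega : 2 * m ≤ v)) pow_padicValNat_dvd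
  set D0 := D / p ^ (2 * m) with hD0def
  have hDeq : p ^ (2 * m) * D0 = D := Nat.mul_div_cancel' hdvd
  have hD0pos : 0 < D0 :=
    Nat.div_pos (Nat.le_of_dvd hD hdvd) (pow_pos hp0 _)
  have hnotdvd : ¬ p ^ 2 ∣ D0 := by
    intro h
    have h2 : p ^ (2 * m + 2) ∣ D := by
      rw [← hDeq, pow_add]
      exact mul_dvd_mul_left _ h
    have h3 : 2 * m + 2 ≤ v := by
      rw [hv]
      exact (padicValNat_dvd_iff_le hD.ne').mp h2
    omega
  -- T action on the tower
  have lemA : ∀ k : ℕ, T (G (p ^ (2 * (k + 1)) * D0))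
      = G (p ^ (2 * k) * D0) + (p : ℤ) • G (p ^ (2 * (k + 2)) * D0) := by
    intro k
    have hpos : 0 < p ^ (2 * (k + 1)) * D0 := by positivity
    have h1 : p ^ 2 ∣ p ^ (2 * (k + 1)) * D0 :=
      Dvd.dvd.mul_right (pow_dvd_pow p (by omega)) _
    have h2 : (p ^ (2 * (k + 1)) * D0) / p ^ 2 = p ^ (2 * k) * D0 := by
      rw [show p ^ (2 * (k + 1)) = p ^ 2 * p ^ (2 * k) by ring, mul_assoc,
        Nat.mul_div_cancel_left _ (by positivity)]
    have h3 : legendreSym p ((p ^ (2 * (k + 1)) * D0 : ℕ) : ℤ) = 0 := by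
      rw [legendreSym.eq_zero_iff]
      have hc : ((((p ^ (2 * (k + 1)) * D0 : ℕ) : ℤ)) : ZMod p)
          = ((p ^ (2 * (k + 1)) * D0 : ℕ) : ZMod p) := by push_cast; ring
      rw [hc, ZMod.natCast_eq_zero_iff]
      exact dvd_mul_of_dvd_left (dvd_pow_self p (by omega)) _
    rw [hT _ hpos, if_pos h1, h2, h3, mul_zero, zero_zsmul, add_zero,
      show p ^ 2 * (p ^ (2 * (k + 1)) * D0) = p ^ (2 * (k + 2)) * D0 by ring]
  set ε : ℤ := legendreSym p 12 * legendreSym p (D0 : ℤ) with hεdef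
  have lemB : T (G (p ^ (2 * 0) * D0)) = ε • G (p ^ (2 * 0) * D0)
      + (p : ℤ) • G (p ^ (2 * 1) * D0) := by
    rw [show p ^ (2 * 0) * D0 = D0 by ring, hT D0 hD0pos, if_neg hnotdvd, zero_add,
      show (p ^ 2 * D0 : ℕ) = p ^ (2 * 1) * D0 by ring]
  have cube : ∀ a : ℤ, legendreSym p a ^ 3 = legendreSym p a := by
    intro a
    by_cases h : (a : ZMod p) = 0
    · rw [(legendreSym.eq_zero_iff p a).2 h]; norm_num
    · have h2 := legendreSym.sq_one p h
      calc legendreSym p a ^ 3 = legendreSym p a ^ 2 * legendreSym p a := by ring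
        _ = legendreSym p a := by rw [h2, one_mul]
  have hε3 : ε ^ 3 = ε := by
    rw [hεdef, mul_pow, cube, cube]
  -- assemble
  have hph2 := phase2 (p := p) (mm := m) (ε := ε)
    (dd := fun k => G (p ^ (2 * k) * D0)) (T := T) lemB lemA Tn hTn0 hTn1 hTnrec
  obtain ⟨x, hx⟩ := diff_div (p := p) (mm := m) (ε := ε)
    (dd := fun k => G (p ^ (2 * k) * D0)) hε3 (n - m)
  refine ⟨x, ?_⟩
  have h2 := hph2 (n - m + 2)
  have h0 := hph2 (n - m)
  beta_reduce at h2 h0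
  rw [show m + (n - m + 2) = n + 2 by omega, hDeq] at h2
  rw [show m + (n - m) = n by omega, hDeq] at h0
  rw [h2, h0]
  exact hx

/-- Theorem 1.1 (2): for `G = ∑_{D∈S} c(D)·G_D` with `w = max ⌊v_p(D)/2⌋`,
`T_{n+2}(G) − T_n(G) ≡ 0 mod p^{n−w}·M` for all `n ≥ w`. -/
theorem stmt_12 {p : ℕ} [Fact p.Prime] (hp : 5 ≤ p)
    {M : Type*} [AddCommGroup M] [Module ℤ M]
    (G : ℕ → M) (T : M →ₗ[ℤ] M)
    (hT : ∀ D : ℕ, 0 < D →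
      T (G D) = (if p ^ 2 ∣ D then G (D / p ^ 2) else 0)
        + (legendreSym p 12 * legendreSym p (D : ℤ)) • G D
        + (p : ℤ) • G (p ^ 2 * D))
    (Tn : ℕ → M →ₗ[ℤ] M)
    (hTn0 : Tn 0 = LinearMap.id) (hTn1 : Tn 1 = T)
    (hTnrec : ∀ n : ℕ, Tn (n + 2) = T ∘ₗ Tn (n + 1) - (p : ℤ) • Tn n)
    (S : Finset ℕ) (hS : S.Nonempty) (hSpos : ∀ D ∈ S, 0 < D)
    (c : ℕ → ℤ) (Gf : M) (hGf : Gf = ∑ D ∈ S, c D • G D)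
    (w : ℕ) (hw : w = S.sup (fun D => padicValNat p D / 2))
    (n : ℕ) (hn : w ≤ n) :
    ∃ x : M, Tn (n + 2) Gf - Tn n Gf = ((p : ℤ) ^ (n - w)) • x := by
  have hterm : ∀ D ∈ S, ∃ x : M,
      Tn (n + 2) (c D • G D) - Tn n (c D • G D) = ((p : ℤ) ^ (n - w)) • x := by
    intro D hD
    have hDpos := hSpos D hD
    have hmle : padicValNat p D / 2 ≤ w := by
      rw [hw]; exact Finset.le_sup (f := fun D => padicValNat p D / 2) hD
    obtain ⟨x, hx⟩ := key_lemma G T hT Tn hTn0 hTn1 hTnrec D hDpos n (le_trans hmle hn)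
    refine ⟨(c D * (p : ℤ) ^ (w - padicValNat p D / 2)) • x, ?_⟩
    rw [map_zsmul, map_zsmul, ← zsmul_sub, hx, ← mul_zsmul, ← mul_zsmul]
    congr 1
    rw [show n - padicValNat p D / 2 = (n - w) + (w - padicValNat p D / 2) by omega,
      pow_add]
    ring
  choose g hg using hterm
  refine ⟨∑ D ∈ S.attach, g D.1 D.2, ?_⟩
  rw [hGf, map_sum, map_sum, ← Finset.sum_sub_distrib, zsmul_finset_sum,
    ← Finset.sum_attach S (fun D => Tn (n + 2) (c D • G D) - Tn n (c D • G D))]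
  exact Finset.sum_congr rfl fun d _ => hg d.1 d.2
end

section
/- Let j be an integer with p² ∤ j, let v ≥ 0 be an integer, and set D = p^{2v}·j. Then for every integer n with n ≥ 1 and n ≥ v, and every integer d, one has p^{n−v} ∣ b_n(D,d) − (j/p)·b_{n−1}(D,d). -/
/-- Lemma 3.3 (1): for `D = p^{2v}·j` with `p² ∤ j` and `n ≥ max(1,v)`,
`b_{p^n}(D,d) − (j/p)·b_{p^{n−1}}(D,d) ≡ 0 mod p^{n−v}`. -/
theorem stmt_13 {p : ℕ} [Fact p.Prime] (hp : p ≠ 2)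
    (b : ℤ → ℤ → ℤ)
    (U : (ℤ → ℤ → ℤ) → ℤ → ℤ → ℤ)
    (hU : ∀ c : ℤ → ℤ → ℤ, ∀ D d : ℤ,
      U c D d = c D ((p : ℤ) ^ 2 * d) + legendreSym p (-d) * c D d
        + (p : ℤ) * (if (p : ℤ) ^ 2 ∣ d then c D (d / (p : ℤ) ^ 2) else 0))
    (hUb : ∀ D d : ℤ,
      U b D d = (if (p : ℤ) ^ 2 ∣ D then b (D / (p : ℤ) ^ 2) d else 0)
        + legendreSym p D * b D d + (p : ℤ) * b ((p : ℤ) ^ 2 * D) d)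
    (bn : ℕ → ℤ → ℤ → ℤ)
    (hb0 : bn 0 = b) (hb1 : bn 1 = U b)
    (hbrec : ∀ n : ℕ, ∀ D d : ℤ,
      bn (n + 2) D d = U (bn (n + 1)) D d - (p : ℤ) * bn n D d)
    (j : ℤ) (hjp : ¬ (p : ℤ) ^ 2 ∣ j) (v : ℕ)
    (D : ℤ) (hD : D = (p : ℤ) ^ (2 * v) * j)
    (n : ℕ) (hn1 : 1 ≤ n) (hnv : v ≤ n) (d : ℤ) :
    ((p : ℤ) ^ (n - v)) ∣ bn n D d - legendreSym p j * bn (n - 1) D d := by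
  have hp0 : ((p : ℤ)) ≠ 0 := by
    exact_mod_cast (Fact.out : p.Prime).ne_zero
  have pzne : ((p : ℤ)) ^ 2 ≠ 0 := pow_ne_zero _ hp0
  -- U preserves the basis relation
  have step : ∀ c : ℤ → ℤ → ℤ,
      (∀ E e : ℤ, U c E e = (if (p : ℤ) ^ 2 ∣ E then c (E / (p : ℤ) ^ 2) e else 0)
        + legendreSym p E * c E e + (p : ℤ) * c ((p : ℤ) ^ 2 * E) e) →
      ∀ E e : ℤ, U (U c) E e = (if (p : ℤ) ^ 2 ∣ E then U c (E / (p : ℤ) ^ 2) e else 0)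
        + legendreSym p E * U c E e + (p : ℤ) * U c ((p : ℤ) ^ 2 * E) e := by
    intro c hc E e
    conv_lhs => rw [hU (U c) E e, hc E ((p : ℤ) ^ 2 * e), hc E e, hc E (e / (p : ℤ) ^ 2)]
    conv_rhs => rw [hU c ((p : ℤ) ^ 2 * E) e, hU c (E / (p : ℤ) ^ 2) e, hU c E e]
    split_ifs <;> ring
  have R0 : ∀ E e : ℤ, U (bn 0) E e = (if (p : ℤ) ^ 2 ∣ E then bn 0 (E / (p : ℤ) ^ 2) e else 0)
      + legendreSym p E * bn 0 E e + (p : ℤ) * bn 0 ((p : ℤ) ^ 2 * E) e := by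
    intro E e; rw [hb0]; exact hUb E e
  have key : ∀ k : ℕ,
      (∀ E e : ℤ, U (bn k) E e = (if (p : ℤ) ^ 2 ∣ E then bn k (E / (p : ℤ) ^ 2) e else 0)
        + legendreSym p E * bn k E e + (p : ℤ) * bn k ((p : ℤ) ^ 2 * E) e) ∧
      (∀ E e : ℤ, U (bn (k+1)) E e = (if (p : ℤ) ^ 2 ∣ E then bn (k+1) (E / (p : ℤ) ^ 2) e else 0)
        + legendreSym p E * bn (k+1) E e + (p : ℤ) * bn (k+1) ((p : ℤ) ^ 2 * E) e) := by
    intro k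
    induction k with
    | zero =>
      refine ⟨R0, ?_⟩
      intro E e
      rw [hb1, ← hb0]
      exact step (bn 0) R0 E e
    | succ k ih =>
      refine ⟨ih.2, ?_⟩
      intro E e
      have hb2 : ∀ x y : ℤ, bn (k+1+1) x y = U (bn (k+1)) x y - (p : ℤ) * bn k x y :=
        fun x y => hbrec k x y
      have e1 : U (bn (k+1+1)) E e = U (U (bn (k+1))) E e - (p : ℤ) * U (bn k) E e := by
        rw [hU (bn (k+1+1)) E e, hU (U (bn (k+1))) E e, hU (bn k) E e]
        simp only [hb2]
        split_ifs <;> ring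
      rw [e1, step (bn (k+1)) ih.2 E e, ih.1 E e]
      simp only [hb2]
      split_ifs <;> ring
  have R : ∀ k : ℕ, ∀ E e : ℤ, U (bn k) E e
      = (if (p : ℤ) ^ 2 ∣ E then bn k (E / (p : ℤ) ^ 2) e else 0)
        + legendreSym p E * bn k E e + (p : ℤ) * bn k ((p : ℤ) ^ 2 * E) e :=
    fun k => (key k).1
  -- arithmetic facts about powers of p
  have hdvd : ∀ m : ℕ, (p : ℤ) ^ 2 ∣ (p : ℤ) ^ (2*(m+1)) * j :=
    fun m => ⟨(p : ℤ) ^ (2*m) * j, by ring⟩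
  have hdiv : ∀ m : ℕ, ((p : ℤ) ^ (2*(m+1)) * j) / (p : ℤ) ^ 2 = (p : ℤ) ^ (2*m) * j := by
    intro m
    rw [show (p : ℤ) ^ (2*(m+1)) * j = (p : ℤ) ^ 2 * ((p : ℤ) ^ (2*m) * j) from by ring]
    exact Int.mul_ediv_cancel_left _ pzne
  have hpow : ∀ m : ℕ, (p : ℤ) ^ 2 * ((p : ℤ) ^ (2*m) * j) = (p : ℤ) ^ (2*(m+1)) * j := by
    intro m; ring
  have hleg : ∀ m : ℕ, legendreSym p ((p : ℤ) ^ (2*(m+1)) * j) = 0 := by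
    intro m
    rw [legendreSym.eq_zero_iff,
      show (p : ℤ) ^ (2*(m+1)) * j = (p : ℤ) * ((p : ℤ) ^ (2*m+1) * j) from by ring]
    push_cast
    simp [ZMod.natCast_self]
  let A : ℕ → ℕ → ℤ := fun k m => bn k ((p : ℤ) ^ (2*m) * j) d
  have hAu : ∀ k m : ℕ, A k m = bn k ((p : ℤ) ^ (2*m) * j) d := fun _ _ => rfl
  have hUA : ∀ k m : ℕ, U (bn k) ((p : ℤ) ^ (2*(m+1)) * j) d = A k m + (p : ℤ) * A k (m+2) := by
    intro k m
    rw [R k, if_pos (hdvd m), hdiv m, hleg m, hpow (m+1), hAu k m, hAu k (m+2)]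
    ring
  have hUA0 : ∀ k : ℕ, U (bn k) ((p : ℤ) ^ (2*0) * j) d
      = legendreSym p j * A k 0 + (p : ℤ) * A k 1 := by
    intro k
    have h0 : ((p : ℤ)) ^ (2*0) * j = j := by norm_num
    rw [h0, R k, if_neg hjp, hAu k 0, hAu k 1, h0,
      show ((p : ℤ)) ^ (2*1) * j = (p : ℤ) ^ 2 * j from by norm_num]
    ring
  have hE : ∀ k m : ℕ, A (k+1) (m+1) - A k m = (p : ℤ) ^ (k+1) * A 0 (m+k+2) := by
    intro k
    induction k with
    | zero =>
      intro m
      have h1 : A 1 (m+1) = U (bn 0) ((p : ℤ) ^ (2*(m+1)) * j) d := by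
        rw [hAu, hb1, hb0]
      rw [h1, hUA 0 m]
      simp only [Nat.add_zero]
      ring
    | succ k ih =>
      intro m
      have h3 : A (k+1+1) (m+1) = U (bn (k+1)) ((p : ℤ) ^ (2*(m+1)) * j) d - (p : ℤ) * A k (m+1) := by
        rw [hAu (k+1+1) (m+1), hAu k (m+1)]
        exact hbrec k _ d
      have h2 := hUA (k+1) m
      have h4 := ih (m+1)
      rw [show m+1+k+2 = m+(k+1)+2 from by omega] at h4
      linear_combination h3 + h2 + (p : ℤ) * h4
  have hF : ∀ k : ℕ, A (k+1) 0 - legendreSym p j * A k 0 = (p : ℤ) ^ (k+1) * A 0 (k+1) := by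
    intro k
    obtain _ | k := k
    · have h1 : A 1 0 = U (bn 0) ((p : ℤ) ^ (2*0) * j) d := by
        rw [hAu, hb1, hb0]
      rw [h1, hUA0 0]
      simp only [Nat.zero_add]
      ring
    · have h3 : A (k+1+1) 0 = U (bn (k+1)) ((p : ℤ) ^ (2*0) * j) d - (p : ℤ) * A k 0 := by
        rw [hAu (k+1+1) 0, hAu k 0]
        exact hbrec k _ d
      have h2 := hUA0 (k+1)
      have h4 := hE k 0
      rw [show 0+k+2 = k+2 from by omega, show (0:ℕ)+1 = 1 from rfl] at h4
      rw [show k+1+1 = k+2 from by omega]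
      linear_combination h3 + h2 + (p : ℤ) * h4
  have hG : ∀ w s : ℕ, (p : ℤ) ^ (s+1) ∣ A (w+s+1) w - legendreSym p j * A (w+s) w := by
    intro w
    induction w with
    | zero =>
      intro s
      simp only [Nat.zero_add]
      exact ⟨A 0 (s+1), hF s⟩
    | succ w ih =>
      intro s
      have e1 := hE (w+s+1) w
      have e2 := hE (w+s) w
      have d1 : (p : ℤ) ^ (s+1) ∣ A (w+s+1+1) (w+1) - A (w+s+1) w := by
        rw [e1]; exact Dvd.dvd.mul_right (pow_dvd_pow _ (by omega)) _
      have d2 : (p : ℤ) ^ (s+1) ∣ legendreSym p j * (A (w+s+1) (w+1) - A (w+s) w) := by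
        rw [e2]; exact Dvd.dvd.mul_left (Dvd.dvd.mul_right (pow_dvd_pow _ (by omega)) _) _
      have d3 := ih s
      have hsplit : A (w+1+s+1) (w+1) - legendreSym p j * A (w+1+s) (w+1)
          = (A (w+s+1+1) (w+1) - A (w+s+1) w)
            - legendreSym p j * (A (w+s+1) (w+1) - A (w+s) w)
            + (A (w+s+1) w - legendreSym p j * A (w+s) w) := by
        rw [show w+1+s+1 = w+s+1+1 from by omega, show w+1+s = w+s+1 from by omega]
        ring
      rw [hsplit]
      exact dvd_add (dvd_sub d1 d2) d3
  rcases eq_or_lt_of_le hnv with hveq | hvlt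
  · rw [show n - v = 0 from by omega, pow_zero]
    exact one_dvd _
  · obtain ⟨s, hs⟩ : ∃ s, n = v + s + 1 := ⟨n - v - 1, by omega⟩
    rw [hD]
    have eq1 : bn n ((p : ℤ) ^ (2*v) * j) d = A (v+s+1) v := by
      rw [hAu, hs]
    have eq2 : bn (n-1) ((p : ℤ) ^ (2*v) * j) d = A (v+s) v := by
      rw [hAu, show n-1 = v+s from by omega]
    rw [eq1, eq2, show n - v = s+1 from by omega]
    exact hG v s
end

section
/- Let j be an integer with p² ∤ j, let v ≥ 0 be an integer, and set D = p^{2v}·j. Then for every integer n with n ≥ 1 and n ≥ v, and every integer d, one has p^{n−v} ∣ B_n(D,d) − (12/p)·(j/p)·B_{n−1}(D,d). -/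
section AuxStmt14

variable {p : ℕ} [Fact p.Prime]

/-- The "D-side" Hecke-type operator. -/
def Tf (p : ℕ) [Fact p.Prime] (c : ℤ → ℤ → ℤ) (D d : ℤ) : ℤ :=
  (if (p : ℤ) ^ 2 ∣ D then c (D / (p : ℤ) ^ 2) d else 0)
    + legendreSym p 12 * legendreSym p D * c D d
    + (p : ℤ) * c ((p : ℤ) ^ 2 * D) d

lemma U_Tf_comm (U : (ℤ → ℤ → ℤ) → ℤ → ℤ → ℤ)
    (hU : ∀ c : ℤ → ℤ → ℤ, ∀ D d : ℤ,
      U c D d = c D ((p : ℤ) ^ 2 * d) + legendreSym p 12 * legendreSym p (-d) * c D d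
        + (p : ℤ) * (if (p : ℤ) ^ 2 ∣ d then c D (d / (p : ℤ) ^ 2) else 0))
    (c : ℤ → ℤ → ℤ) (D d : ℤ) :
    U (Tf p c) D d = Tf p (U c) D d := by
  simp only [hU, Tf]
  split_ifs <;> ring

end AuxStmt14

/-- The down-shift operator on sequences, twisted by `χ` at zero. -/
def Aop (χ : ℤ) (g : ℕ → ℤ) : ℕ → ℤ := fun v => if v = 0 then χ * g 0 else g (v - 1)

lemma Aop_succ (χ : ℤ) (g : ℕ → ℤ) (v : ℕ) : Aop χ g (v + 1) = g v := by
  simp [Aop]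

lemma Aop_zero (χ : ℤ) (g : ℕ → ℤ) : Aop χ g 0 = χ * g 0 := by
  simp [Aop]

lemma Aop_shift (χ : ℤ) (g : ℕ → ℤ) (m v : ℕ) :
    (Aop χ)^[m + 1] g (v + 1) = (Aop χ)^[m] g v := by
  rw [Function.iterate_succ_apply', Aop_succ]

lemma Aop_vanish (χ : ℤ) (g : ℕ → ℤ) :
    ∀ v m : ℕ, v ≤ m → (Aop χ)^[m + 1] g v = χ * (Aop χ)^[m] g v := by
  intro v
  induction v with
  | zero =>
      intro m _
      rw [Function.iterate_succ_apply', Aop_zero]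
  | succ w ih =>
      intro m hm
      obtain ⟨m', rfl⟩ : ∃ m', m = m' + 1 := ⟨m - 1, by omega⟩
      rw [Aop_shift, Aop_shift, ih m' (by omega)]

/-- Core combinatorial lemma about the Chebyshev-type recursion. -/
lemma core_stmt14 (χ q : ℤ) (a : ℕ → ℕ → ℤ)
    (r1 : ∀ v, a 1 v = Aop χ (a 0) v + q * a 0 (v + 1))
    (r2 : ∀ n v, a (n + 2) v = Aop χ (a (n + 1)) v + q * a (n + 1) (v + 1) - q * a n v)
    (m v : ℕ) :
    q ^ (m + 1 - v) ∣ a (m + 1) v - χ * a m v := by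
  have form : ∀ n : ℕ,
      (∀ v, a n v = ∑ k ∈ Finset.range (n + 1),
        q ^ k * (Aop χ)^[n - k] (fun w => a 0 (w + k)) v) ∧
      (∀ v, a (n + 1) v = ∑ k ∈ Finset.range (n + 2),
        q ^ k * (Aop χ)^[n + 1 - k] (fun w => a 0 (w + k)) v) := by
    intro n
    induction n with
    | zero =>
        constructor
        · intro u; simp
        · intro u
          simp only [Nat.zero_add]
          rw [r1 u, Finset.sum_range_succ (n := 1), Finset.sum_range_one]
          simp
    | succ n ih =>
        refine ⟨ih.2, fun u => ?_⟩
        simp only [show n + 1 + 1 = n + 2 from rfl, show n + 1 + 2 = n + 3 from rfl]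
        have hA : Aop χ (a (n + 1)) u = ∑ k ∈ Finset.range (n + 2),
            q ^ k * (Aop χ)^[n + 2 - k] (fun w => a 0 (w + k)) u := by
          cases u with
          | zero =>
              rw [Aop_zero, ih.2 0, Finset.mul_sum]
              refine Finset.sum_congr rfl fun k hk => ?_
              have hk' := Finset.mem_range.mp hk
              rw [show n + 2 - k = (n + 1 - k) + 1 by omega,
                Aop_vanish χ _ 0 (n + 1 - k) (Nat.zero_le _)]
              ring
          | succ u =>
              rw [Aop_succ, ih.2 u]
              refine Finset.sum_congr rfl fun k hk => ?_
              have hk' := Finset.mem_range.mp hk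
              rw [show n + 2 - k = (n + 1 - k) + 1 by omega, Aop_shift]
        have h2 : ∑ k ∈ Finset.range (n + 1),
              q ^ k * (Aop χ)^[n + 1 - k] (fun w => a 0 (w + k)) (u + 1)
            = ∑ k ∈ Finset.range (n + 1),
              q ^ k * (Aop χ)^[n - k] (fun w => a 0 (w + k)) u := by
          refine Finset.sum_congr rfl fun k hk => ?_
          have hk' := Finset.mem_range.mp hk
          rw [show n + 1 - k = (n - k) + 1 by omega, Aop_shift]
        have hmid : q * (∑ k ∈ Finset.range (n + 2),
              q ^ k * (Aop χ)^[n + 1 - k] (fun w => a 0 (w + k)) (u + 1))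
            = q * (∑ k ∈ Finset.range (n + 1),
              q ^ k * (Aop χ)^[n - k] (fun w => a 0 (w + k)) u)
              + q ^ (n + 2) * a 0 (u + 1 + (n + 1)) := by
          rw [Finset.sum_range_succ, h2]
          simp only [Nat.add_sub_cancel, Nat.sub_self, Function.iterate_zero_apply]
          ring
        have htail : (∑ k ∈ Finset.range (n + 3),
              q ^ k * (Aop χ)^[n + 2 - k] (fun w => a 0 (w + k)) u)
            = (∑ k ∈ Finset.range (n + 2),
              q ^ k * (Aop χ)^[n + 2 - k] (fun w => a 0 (w + k)) u)
              + q ^ (n + 2) * a 0 (u + (n + 2)) := by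
          rw [Finset.sum_range_succ]
          simp only [Nat.sub_self, Function.iterate_zero_apply]
        rw [r2 n u, hA, ih.2 (u + 1), ih.1 u, hmid, htail,
          show u + 1 + (n + 1) = u + (n + 2) by omega]
        ring
  have hsplit : (∑ k ∈ Finset.range (m + 2),
        q ^ k * (Aop χ)^[m + 1 - k] (fun w => a 0 (w + k)) v)
      = (∑ k ∈ Finset.range (m + 1),
        q ^ k * (Aop χ)^[m + 1 - k] (fun w => a 0 (w + k)) v)
        + q ^ (m + 1) * a 0 (v + (m + 1)) := by
    rw [Finset.sum_range_succ]
    simp only [Nat.sub_self, Function.iterate_zero_apply]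
  rw [(form m).2 v, (form m).1 v, hsplit, Finset.mul_sum, add_sub_right_comm,
    ← Finset.sum_sub_distrib]
  refine dvd_add (Finset.dvd_sum fun k hk => ?_) ?_
  · have hk' := Finset.mem_range.mp hk
    by_cases hvk : v ≤ m - k
    · rw [show m + 1 - k = (m - k) + 1 by omega, Aop_vanish χ _ v (m - k) hvk]
      exact ⟨0, by ring⟩
    · refine dvd_trans (pow_dvd_pow q (show m + 1 - v ≤ k by omega))
        ⟨(Aop χ)^[m + 1 - k] (fun w => a 0 (w + k)) v
          - χ * (Aop χ)^[m - k] (fun w => a 0 (w + k)) v, by ring⟩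
  · exact Dvd.dvd.mul_right (pow_dvd_pow q (by omega)) _

/-- Lemma 3.3 (2): for `D = p^{2v}·j` with `p² ∤ j` and `n ≥ max(1,v)`,
`B_{p^n}(D,d) − (12/p)(j/p)·B_{p^{n−1}}(D,d) ≡ 0 mod p^{n−v}`. -/
theorem stmt_14 {p : ℕ} [Fact p.Prime] (hp : 5 ≤ p)
    (B : ℤ → ℤ → ℤ)
    (U : (ℤ → ℤ → ℤ) → ℤ → ℤ → ℤ)
    (hU : ∀ c : ℤ → ℤ → ℤ, ∀ D d : ℤ,
      U c D d = c D ((p : ℤ) ^ 2 * d) + legendreSym p 12 * legendreSym p (-d) * c D d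
        + (p : ℤ) * (if (p : ℤ) ^ 2 ∣ d then c D (d / (p : ℤ) ^ 2) else 0))
    (hUB : ∀ D d : ℤ,
      U B D d = (if (p : ℤ) ^ 2 ∣ D then B (D / (p : ℤ) ^ 2) d else 0)
        + legendreSym p 12 * legendreSym p D * B D d
        + (p : ℤ) * B ((p : ℤ) ^ 2 * D) d)
    (Bn : ℕ → ℤ → ℤ → ℤ)
    (hB0 : Bn 0 = B) (hB1 : Bn 1 = U B)
    (hBrec : ∀ n : ℕ, ∀ D d : ℤ,
      Bn (n + 2) D d = U (Bn (n + 1)) D d - (p : ℤ) * Bn n D d)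
    (j : ℤ) (hjp : ¬ (p : ℤ) ^ 2 ∣ j) (v : ℕ)
    (D : ℤ) (hD : D = (p : ℤ) ^ (2 * v) * j)
    (n : ℕ) (hn1 : 1 ≤ n) (hnv : v ≤ n) (d : ℤ) :
    ((p : ℤ) ^ (n - v)) ∣
      Bn n D d - legendreSym p 12 * legendreSym p j * Bn (n - 1) D d := by
  have hp0 : (p : ℤ) ≠ 0 := Int.natCast_ne_zero.mpr (Fact.out (p := p.Prime)).ne_zero
  subst hD
  obtain ⟨m, rfl⟩ : ∃ m, n = m + 1 := ⟨n - 1, by omega⟩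
  simp only [Nat.add_sub_cancel]
  -- Step 1: U agrees with Tf on every Bn n
  have hBB : ∀ D d : ℤ, U B D d = Tf p B D d := by
    intro D d; rw [hUB]; simp only [Tf]
  have hUf : ∀ c : ℤ → ℤ → ℤ, (∀ D d, U c D d = Tf p c D d) →
      ∀ D d, U (U c) D d = Tf p (U c) D d := by
    intro c hc D d
    have hcf : U c = Tf p c := funext fun D => funext fun d => hc D d
    calc U (U c) D d = U (Tf p c) D d := by rw [hcf]
      _ = Tf p (U c) D d := U_Tf_comm U hU c D d
  have UBn : ∀ k : ℕ, ∀ D d : ℤ, U (Bn k) D d = Tf p (Bn k) D d := by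
    have H : ∀ k : ℕ, (∀ D d, U (Bn k) D d = Tf p (Bn k) D d) ∧
        (∀ D d, U (Bn (k + 1)) D d = Tf p (Bn (k + 1)) D d) := by
      intro k
      induction k with
      | zero =>
          constructor
          · intro D d; rw [hB0]; exact hBB D d
          · intro D d
            simp only [Nat.zero_add]
            rw [hB1]
            exact hUf B hBB D d
      | succ k ih =>
          refine ⟨ih.2, fun D d => ?_⟩
          have e1 : U (Bn (k + 2)) D d
              = U (U (Bn (k + 1))) D d - (p : ℤ) * U (Bn k) D d := by
            simp only [hU, hBrec]
            split_ifs <;> ring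
          simp only [show k + 1 + 1 = k + 2 from rfl]
          rw [e1, hUf (Bn (k + 1)) ih.2 D d, ih.1 D d]
          simp only [Tf, hBrec]
          split_ifs <;> ring
    exact fun k => (H k).1
  -- Step 2: arithmetic facts about D = p^(2w) * j
  have hnd0 : ¬ (p : ℤ) ^ 2 ∣ (p : ℤ) ^ (2 * 0) * j := by simpa using hjp
  have hdvdw : ∀ w : ℕ, (p : ℤ) ^ 2 ∣ (p : ℤ) ^ (2 * (w + 1)) * j :=
    fun w => Dvd.dvd.mul_right (pow_dvd_pow (p : ℤ) (by omega)) j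
  have hdivw : ∀ w : ℕ, ((p : ℤ) ^ (2 * (w + 1)) * j) / (p : ℤ) ^ 2
      = (p : ℤ) ^ (2 * w) * j := by
    intro w
    rw [show (p : ℤ) ^ (2 * (w + 1)) * j = (p : ℤ) ^ 2 * ((p : ℤ) ^ (2 * w) * j) by ring]
    exact Int.mul_ediv_cancel_left _ (pow_ne_zero 2 hp0)
  have hleg0 : ∀ w : ℕ, legendreSym p ((p : ℤ) ^ (2 * (w + 1)) * j) = 0 := by
    intro w
    rw [legendreSym.eq_zero_iff]
    push_cast
    rw [ZMod.natCast_self]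
    simp
  have hmulw : ∀ w : ℕ, (p : ℤ) ^ 2 * ((p : ℤ) ^ (2 * w) * j)
      = (p : ℤ) ^ (2 * (w + 1)) * j := fun w => by ring
  -- Step 3: evaluation of Tf along D = p^(2w) j
  have hTf_eval : ∀ (c : ℤ → ℤ → ℤ) (w : ℕ),
      Tf p c ((p : ℤ) ^ (2 * w) * j) d
        = Aop (legendreSym p 12 * legendreSym p j)
            (fun u => c ((p : ℤ) ^ (2 * u) * j) d) w
          + (p : ℤ) * c ((p : ℤ) ^ (2 * (w + 1)) * j) d := by
    intro c w
    cases w with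
    | zero =>
        simp only [Tf, Aop, if_neg hnd0, hmulw 0]
        norm_num
    | succ w =>
        simp only [Tf, Aop]
        rw [if_pos (hdvdw w), hdivw w, hleg0 w, hmulw (w + 1),
          if_neg (by omega : ¬(w + 1 = 0))]
        simp only [Nat.add_sub_cancel]
        ring
  -- Step 4: recursions for a n w := Bn n (p^(2w) j) d
  have r1 : ∀ w : ℕ, Bn 1 ((p : ℤ) ^ (2 * w) * j) d
      = Aop (legendreSym p 12 * legendreSym p j)
          (fun u => Bn 0 ((p : ℤ) ^ (2 * u) * j) d) w
        + (p : ℤ) * Bn 0 ((p : ℤ) ^ (2 * (w + 1)) * j) d := by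
    intro w
    rw [hB1, ← hB0, UBn 0, hTf_eval]
  have r2 : ∀ (k w : ℕ), Bn (k + 2) ((p : ℤ) ^ (2 * w) * j) d
      = Aop (legendreSym p 12 * legendreSym p j)
          (fun u => Bn (k + 1) ((p : ℤ) ^ (2 * u) * j) d) w
        + (p : ℤ) * Bn (k + 1) ((p : ℤ) ^ (2 * (w + 1)) * j) d
        - (p : ℤ) * Bn k ((p : ℤ) ^ (2 * w) * j) d := by
    intro k w
    rw [hBrec, UBn (k + 1), hTf_eval]
  exact core_stmt14 (legendreSym p 12 * legendreSym p j) (p : ℤ)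
    (fun k w => Bn k ((p : ℤ) ^ (2 * w) * j) d) r1 r2 m v
end

section
/- Let i be an integer with p² ∤ i and let u ≥ 0 be an integer. Then for every integer n ≥ u and every integer D, a_n(D, p^{2u}·i) = Σ_{t=0}^{n−u} (−i/p)^{n−u−t}·p^u·a(D, p^{2t}·i) + Σ_{t=1}^{u} p^{u−t}·a(D, p^{2n−2u+4t}·i). -/
open Finset

private lemma zg_sum_Icc_one (u : ℕ) (f : ℕ → ℤ) :
    ∑ t ∈ Finset.Icc 1 u, f t = ∑ t ∈ Finset.range u, f (t+1) := by
  induction u with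
  | zero => simp
  | succ n ih => rw [Finset.sum_range_succ, ← ih, Finset.sum_Icc_succ_top (by omega)]

private theorem zg_key {p : ℕ} [Fact p.Prime]
    (a : ℤ → ℤ → ℤ) (V : (ℤ → ℤ → ℤ) → ℤ → ℤ → ℤ)
    (hV : ∀ c : ℤ → ℤ → ℤ, ∀ D d : ℤ,
      V c D d = (p : ℤ) * c ((p : ℤ) ^ 2 * D) d + legendreSym p D * c D d
        + (if (p : ℤ) ^ 2 ∣ D then c (D / (p : ℤ) ^ 2) d else 0))
    (b : ℤ → ℤ → ℤ) (d0 : ℤ) (s1 s2 : Finset ℕ) (c1 c2 : ℕ → ℤ) (y1 y2 : ℕ → ℤ)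
    (H : ∀ D, b D d0 = (∑ k ∈ s1, c1 k * a D (y1 k)) + ∑ k ∈ s2, c2 k * a D (y2 k))
    (D : ℤ) :
    V b D d0 = (∑ k ∈ s1, c1 k * V a D (y1 k)) + ∑ k ∈ s2, c2 k * V a D (y2 k) := by
  by_cases hD : (p : ℤ) ^ 2 ∣ D
  · simp only [hV, H, if_pos hD, Finset.mul_sum, mul_add, add_mul,
      Finset.sum_add_distrib, mul_left_comm]
    ring
  · simp only [hV, H, if_neg hD, Finset.mul_sum, mul_add, add_mul,
      Finset.sum_add_distrib, add_zero, mul_zero, mul_left_comm]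
    ring

private theorem zg_hw0 {p : ℕ} [Fact p.Prime]
    (a : ℤ → ℤ → ℤ) (V : (ℤ → ℤ → ℤ) → ℤ → ℤ → ℤ)
    (hVa : ∀ D d : ℤ,
      V a D d = (p : ℤ) * (if (p : ℤ) ^ 2 ∣ d then a D (d / (p : ℤ) ^ 2) else 0)
        + legendreSym p (-d) * a D d + a D ((p : ℤ) ^ 2 * d))
    (i : ℤ) (hip : ¬ (p : ℤ) ^ 2 ∣ i) (D : ℤ) :
    V a D ((p : ℤ) ^ (2 * 0) * i)
      = legendreSym p (-i) * a D ((p : ℤ) ^ (2 * 0) * i) + a D ((p : ℤ) ^ (2 * 1) * i) := by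
  have h : (p : ℤ) ^ (2*0) * i = i := by ring
  rw [h, hVa, if_neg hip]
  have h2 : (p : ℤ) ^ 2 * i = (p : ℤ) ^ (2*1) * i := by ring
  rw [h2]; ring

private theorem zg_hws {p : ℕ} [Fact p.Prime]
    (a : ℤ → ℤ → ℤ) (V : (ℤ → ℤ → ℤ) → ℤ → ℤ → ℤ)
    (hVa : ∀ D d : ℤ,
      V a D d = (p : ℤ) * (if (p : ℤ) ^ 2 ∣ d then a D (d / (p : ℤ) ^ 2) else 0)
        + legendreSym p (-d) * a D d + a D ((p : ℤ) ^ 2 * d))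
    (i : ℤ) (D : ℤ) (k : ℕ) :
    V a D ((p : ℤ) ^ (2 * (k+1)) * i)
      = (p : ℤ) * a D ((p : ℤ) ^ (2 * k) * i) + a D ((p : ℤ) ^ (2 * (k+2)) * i) := by
  have hp0 : (p : ℤ) ≠ 0 := by exact_mod_cast (Fact.out : p.Prime).ne_zero
  have h : (p : ℤ) ^ (2*(k+1)) * i = (p : ℤ) ^ 2 * ((p : ℤ) ^ (2*k) * i) := by ring
  rw [hVa]
  have hdvd : (p : ℤ) ^ 2 ∣ (p : ℤ) ^ (2*(k+1)) * i := ⟨(p : ℤ) ^ (2*k) * i, by ring⟩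
  rw [if_pos hdvd]
  have hq : (p : ℤ) ^ (2*(k+1)) * i / (p : ℤ) ^ 2 = (p : ℤ) ^ (2*k) * i := by
    rw [h, Int.mul_ediv_cancel_left _ (pow_ne_zero _ hp0)]
  rw [hq]
  have hleg : legendreSym p (-((p : ℤ) ^ (2*(k+1)) * i)) = 0 := by
    rw [legendreSym.eq_zero_iff]
    push_cast
    simp [ZMod.natCast_self]
  rw [hleg]
  have h2 : (p : ℤ) ^ 2 * ((p : ℤ) ^ (2*(k+1)) * i) = (p : ℤ) ^ (2*(k+2)) * i := by ring
  rw [h2]; ring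

private theorem zg_case1 (ε P : ℤ) (X W : ℕ → ℤ) (hW0 : W 0 = ε * X 0 + X 1)
    (hWs : ∀ k, W (k+1) = P * X k + X (k+2)) (m u : ℕ) :
    (∑ t ∈ range (m+1+1), ε^(m+1-t) * P^u * W t
      + ∑ t ∈ range u, P^(u-1-t) * W (m+1+2+2*t))
    - P * (∑ t ∈ range (m+1), ε^(m-t) * P^u * X t
      + ∑ t ∈ range u, P^(u-1-t) * X (m+2+2*t))
    = ∑ t ∈ range (m+2+1), ε^(m+2-t) * P^u * X t
      + ∑ t ∈ range u, P^(u-1-t) * X (m+2+2+2*t) := by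
  have e1 : ∑ t ∈ range (m+1+1), ε^(m+1-t) * P^u * W t
      = (P * ∑ t ∈ range (m+1), ε^(m-t) * P^u * X t)
        + (∑ t ∈ range (m+1), ε^(m-t) * P^u * X (t+2))
        + ε^(m+2) * P^u * X 0 + ε^(m+1) * P^u * X 1 := by
    rw [Finset.sum_range_succ']
    have : ∀ t ∈ range (m+1), ε^(m+1-(t+1)) * P^u * W (t+1)
        = P * (ε^(m-t) * P^u * X t) + ε^(m-t) * P^u * X (t+2) := by
      intro t ht
      rw [hWs]
      have h : m+1-(t+1) = m-t := by omega
      rw [h]; ring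
    rw [Finset.sum_congr rfl this, Finset.sum_add_distrib, ← Finset.mul_sum, hW0]
    simp only [Nat.sub_zero]
    ring
  have e2 : ∑ t ∈ range u, P^(u-1-t) * W (m+1+2+2*t)
      = (P * ∑ t ∈ range u, P^(u-1-t) * X (m+2+2*t))
        + ∑ t ∈ range u, P^(u-1-t) * X (m+2+2+2*t) := by
    have : ∀ t ∈ range u, P^(u-1-t) * W (m+1+2+2*t)
        = P * (P^(u-1-t) * X (m+2+2*t)) + P^(u-1-t) * X (m+2+2+2*t) := by
      intro t ht
      have h : m+1+2+2*t = (m+2+2*t)+1 := by omega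
      rw [h, hWs]
      have h2 : m+2+2*t+2 = m+2+2+2*t := by omega
      rw [h2]; ring
    rw [Finset.sum_congr rfl this, Finset.sum_add_distrib, ← Finset.mul_sum]
  have e3 : ∑ t ∈ range (m+2+1), ε^(m+2-t) * P^u * X t
      = (∑ t ∈ range (m+1), ε^(m-t) * P^u * X (t+2))
        + ε^(m+1) * P^u * X 1 + ε^(m+2) * P^u * X 0 := by
    rw [Finset.sum_range_succ', Finset.sum_range_succ']
    have : ∀ t ∈ range (m+1), ε^(m+2-(t+1+1)) * P^u * X (t+1+1)
        = ε^(m-t) * P^u * X (t+2) := by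
      intro t ht
      have h : m+2-(t+1+1) = m-t := by omega
      rw [h]
    rw [Finset.sum_congr rfl this]
    norm_num
  rw [e1, e2, e3]
  ring

private theorem zg_case2 (ε P : ℤ) (X W : ℕ → ℤ) (hW0 : W 0 = ε * X 0 + X 1)
    (hWs : ∀ k, W (k+1) = P * X k + X (k+2)) (n : ℕ) :
    (∑ t ∈ range (0+1), ε^(0-t) * P^(n+1) * W t
      + ∑ t ∈ range (n+1), P^(n+1-1-t) * W (0+2+2*t))
    - P * (∑ t ∈ range (n+1), P^(n-t) * X (1+0+2*t))
    = ∑ t ∈ range (1+1), ε^(1-t) * P^(n+1) * X t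
      + ∑ t ∈ range (n+1), P^(n+1-1-t) * X (1+2+2*t) := by
  have e1 : ∀ t ∈ range (n+1), P^(n+1-1-t) * W (0+2+2*t)
      = P * (P^(n-t) * X (1+0+2*t)) + P^(n-t) * X (1+2+2*t) := by
    intro t ht
    have h : 0+2+2*t = (1+2*t)+1 := by omega
    rw [h, hWs]
    have h2 : 1+2*t+2 = 1+2+2*t := by omega
    have h3 : n+1-1-t = n-t := by omega
    have h4 : 1+2*t = 1+0+2*t := by omega
    rw [h2, h3, h4]; ring
  have e2 : ∀ t ∈ range (n+1), P^(n+1-1-t) * X (1+2+2*t)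
      = P^(n-t) * X (1+2+2*t) := by
    intro t ht
    have h3 : n+1-1-t = n-t := by omega
    rw [h3]
  rw [Finset.sum_congr rfl e1, Finset.sum_congr rfl e2, Finset.sum_add_distrib,
    ← Finset.mul_sum]
  simp only [Finset.sum_range_one, Finset.sum_range_succ, Finset.sum_range_zero,
    Nat.sub_zero, Nat.sub_self, hW0]
  ring

private theorem zg_case3 (P : ℤ) (X W : ℕ → ℤ)
    (hWs : ∀ k, W (k+1) = P * X k + X (k+2)) (n v : ℕ) :
    (∑ t ∈ range (n+1+1), P^(n+1-t) * W (1+(v+1)+2*t))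
    - P * ∑ t ∈ range (n+1), P^(n-t) * X (1+(v+2)+2*t)
    = ∑ t ∈ range (n+2+1), P^(n+2-t) * X (1+v+2*t) := by
  have e1 : ∀ t ∈ range (n+1+1), P^(n+1-t) * W (1+(v+1)+2*t)
      = P^(n+2-t) * X (1+v+2*t) + P^(n+1-t) * X (1+(v+2)+2*t) := by
    intro t ht
    simp only [Finset.mem_range] at ht
    have h : 1+(v+1)+2*t = (1+v+2*t)+1 := by omega
    rw [h, hWs]
    have h2 : 1+v+2*t+2 = 1+(v+2)+2*t := by omega
    have h3 : n+2-t = (n+1-t)+1 := by omega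
    rw [h2, h3, pow_succ]; ring
  have e2 : ∀ t ∈ range (n+1), P * (P^(n-t) * X (1+(v+2)+2*t))
      = P^(n+1-t) * X (1+(v+2)+2*t) := by
    intro t ht
    simp only [Finset.mem_range] at ht
    have h : n+1-t = (n-t)+1 := by omega
    rw [h, pow_succ]; ring
  rw [Finset.sum_congr rfl e1, Finset.sum_add_distrib, Finset.mul_sum,
    Finset.sum_congr rfl e2]
  have e3 : ∑ t ∈ range (n+1+1), P^(n+1-t) * X (1+(v+2)+2*t)
      = ∑ t ∈ range (n+1), P^(n+1-t) * X (1+(v+2)+2*t) + X (1+(v+2)+2*(n+1)) := by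
    rw [Finset.sum_range_succ]
    norm_num
  have e4 : ∑ t ∈ range (n+2+1), P^(n+2-t) * X (1+v+2*t)
      = ∑ t ∈ range (n+2), P^(n+2-t) * X (1+v+2*t) + X (1+v+2*(n+2)) := by
    rw [Finset.sum_range_succ]
    norm_num
  have e5 : ∑ t ∈ range (n+2), P^(n+2-t) * X (1+v+2*t)
      = ∑ t ∈ range (n+1+1), P^(n+2-t) * X (1+v+2*t) := rfl
  rw [e3, e4, e5]
  have h5 : 1+(v+2)+2*(n+1) = 1+v+2*(n+2) := by omega
  rw [h5]; ring

private theorem zg_case0 (ε P : ℤ) (X W : ℕ → ℤ)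
    (hWs : ∀ k, W (k+1) = P * X k + X (k+2)) (n : ℕ) :
    (∑ t ∈ range (n+1+1), P^(n+1-t) * W (1+0+2*t))
    - P * ∑ t ∈ range (n+1), P^(n-t) * X (1+1+2*t)
    = ∑ t ∈ range (0+1), ε^(0-t) * P^(n+2) * X t
      + ∑ t ∈ range (n+2), P^(n+2-1-t) * X (0+2+2*t) := by
  have e1 : ∀ t ∈ range (n+1+1), P^(n+1-t) * W (1+0+2*t)
      = P^(n+2-t) * X (2*t) + P^(n+1-t) * X (1+1+2*t) := by
    intro t ht
    simp only [Finset.mem_range] at ht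
    have h : 1+0+2*t = (2*t)+1 := by omega
    rw [h, hWs]
    have h2 : 2*t+2 = 1+1+2*t := by omega
    have h3 : n+2-t = (n+1-t)+1 := by omega
    rw [h2, h3, pow_succ]; ring
  have e2 : ∀ t ∈ range (n+1), P * (P^(n-t) * X (1+1+2*t))
      = P^(n+1-t) * X (1+1+2*t) := by
    intro t ht
    simp only [Finset.mem_range] at ht
    have h : n+1-t = (n-t)+1 := by omega
    rw [h, pow_succ]; ring
  rw [Finset.sum_congr rfl e1, Finset.sum_add_distrib, Finset.mul_sum,
    Finset.sum_congr rfl e2]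
  have e3 : ∑ t ∈ range (n+1+1), P^(n+1-t) * X (1+1+2*t)
      = ∑ t ∈ range (n+1), P^(n+1-t) * X (1+1+2*t) + X (1+1+2*(n+1)) := by
    rw [Finset.sum_range_succ]
    norm_num
  have e4 : ∀ t ∈ range (n+2), P^(n+2-1-t) * X (0+2+2*t)
      = P^(n+2-(t+1)) * X (2*(t+1)) := by
    intro t ht
    have h1 : n+2-1-t = n+2-(t+1) := by omega
    have h2 : 0+2+2*t = 2*(t+1) := by omega
    rw [h1, h2]
  have e5 : ∑ t ∈ range (n+2+1), P^(n+2-t) * X (2*t)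
      = ∑ t ∈ range (n+2), P^(n+2-(t+1)) * X (2*(t+1)) + P^(n+2-0) * X (2*0) := by
    rw [Finset.sum_range_succ']
  have e6 : ∑ t ∈ range (n+2+1), P^(n+2-t) * X (2*t)
      = ∑ t ∈ range (n+1+1), P^(n+2-t) * X (2*t) + X (2*(n+2)) := by
    rw [Finset.sum_range_succ]
    norm_num
  have e7 : ∑ t ∈ range (n+2), P^(n+2-(t+1)) * X (2*(t+1))
      = ∑ t ∈ range (n+1+1), P^(n+2-t) * X (2*t) + X (2*(n+2)) - P^(n+2-0) * X (2*0) := by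
    rw [← e6]; linarith [e5]
  rw [e3, Finset.sum_congr rfl e4, e7]
  have h5 : 1+1+2*(n+1) = 2*(n+2) := by omega
  rw [h5]
  norm_num
  ring


private theorem zg_aux {p : ℕ} [Fact p.Prime]
    (a : ℤ → ℤ → ℤ) (V : (ℤ → ℤ → ℤ) → ℤ → ℤ → ℤ)
    (hV : ∀ c : ℤ → ℤ → ℤ, ∀ D d : ℤ,
      V c D d = (p : ℤ) * c ((p : ℤ) ^ 2 * D) d + legendreSym p D * c D d
        + (if (p : ℤ) ^ 2 ∣ D then c (D / (p : ℤ) ^ 2) d else 0))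
    (hVa : ∀ D d : ℤ,
      V a D d = (p : ℤ) * (if (p : ℤ) ^ 2 ∣ d then a D (d / (p : ℤ) ^ 2) else 0)
        + legendreSym p (-d) * a D d + a D ((p : ℤ) ^ 2 * d))
    (an : ℕ → ℤ → ℤ → ℤ)
    (ha0 : an 0 = a) (ha1 : an 1 = V a)
    (harec : ∀ n : ℕ, ∀ D d : ℤ,
      an (n + 2) D d = V (an (n + 1)) D d - (p : ℤ) * an n D d)
    (i : ℤ) (hip : ¬ (p : ℤ) ^ 2 ∣ i) :
    ∀ n : ℕ,
      (∀ u m : ℕ, n = u + m → ∀ D : ℤ,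
        an n D ((p : ℤ) ^ (2 * u) * i)
          = (∑ t ∈ range (m+1),
              (legendreSym p (-i))^(m-t) * (p:ℤ)^u * a D ((p:ℤ)^(2*t) * i))
            + ∑ t ∈ range u, (p:ℤ)^(u-1-t) * a D ((p:ℤ)^(2*(m+2+2*t)) * i))
      ∧ (∀ v : ℕ, ∀ D : ℤ,
        an n D ((p : ℤ) ^ (2 * (n+1+v)) * i)
          = ∑ t ∈ range (n+1), (p:ℤ)^(n-t) * a D ((p:ℤ)^(2*(1+v+2*t)) * i)) := by
  intro n
  induction n using Nat.twoStepInduction with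
  | zero =>
    constructor
    · intro u m h D
      obtain rfl : u = 0 := by omega
      obtain rfl : m = 0 := by omega
      rw [ha0]
      simp
    · intro v D
      rw [ha0]
      rw [Finset.sum_range_one]
      have h : (2*(0+1+v) : ℕ) = 2*(1+v+2*0) := by ring
      rw [h]
      norm_num
  | one =>
    constructor
    · intro u m h D
      rcases Nat.eq_or_lt_of_le (Nat.zero_le u) with hu | hu
      · -- u = 0, m = 1
        obtain rfl : u = 0 := hu.symm
        obtain rfl : m = 1 := by omega
        rw [ha1, zg_hw0 a V hVa i hip D]
        rw [Finset.sum_range_succ, Finset.sum_range_one]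
        norm_num
      · -- u = 1, m = 0
        obtain rfl : u = 1 := by omega
        obtain rfl : m = 0 := by omega
        rw [ha1]
        have hw : V a D ((p:ℤ)^(2*1) * i)
            = (p:ℤ) * a D ((p:ℤ)^(2*0) * i) + a D ((p:ℤ)^(2*2) * i) := by
          have h := zg_hws a V hVa i D 0
          have h1 : (2*(0+1) : ℕ) = 2*1 := by ring
          have h2 : (2*(0+2) : ℕ) = 2*2 := by ring
          rw [h1, h2] at h
          exact h
        rw [hw, Finset.sum_range_one, Finset.sum_range_one]
        norm_num
    · intro v D
      rw [ha1]
      have hw : V a D ((p:ℤ)^(2*(1+1+v)) * i)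
          = (p:ℤ) * a D ((p:ℤ)^(2*(1+v)) * i) + a D ((p:ℤ)^(2*(1+v+2)) * i) := by
        have h := zg_hws a V hVa i D (1+v)
        have h1 : (2*(1+v+1) : ℕ) = 2*(1+1+v) := by ring
        rw [h1] at h
        exact h
      rw [hw, Finset.sum_range_succ, Finset.sum_range_one]
      have h2 : (2*(1+v+2*0) : ℕ) = 2*(1+v) := by ring
      have h3 : (2*(1+v+2*1) : ℕ) = 2*(1+v+2) := by ring
      rw [h2, h3]
      norm_num
  | more n ih1 ih2 =>
    set ε := legendreSym p (-i) with hε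
    set P := (p : ℤ) with hP
    have hW0 : ∀ D : ℤ, V a D ((p:ℤ)^(2*0) * i)
        = ε * a D ((p:ℤ)^(2*0) * i) + a D ((p:ℤ)^(2*1) * i) :=
      fun D => zg_hw0 a V hVa i hip D
    have hWs : ∀ D : ℤ, ∀ k : ℕ, V a D ((p:ℤ)^(2*(k+1)) * i)
        = P * a D ((p:ℤ)^(2*k) * i) + a D ((p:ℤ)^(2*(k+2)) * i) :=
      fun D k => zg_hws a V hVa i D k
    constructor
    · intro u m hm D
      rcases m with _ | m'
      · -- m = 0, u = n+2
        obtain rfl : u = n + 2 := by omega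
        have H : ∀ D' : ℤ, an (n+1) D' ((p:ℤ)^(2*(n+2)) * i)
            = (∑ k ∈ range (n+1+1), P^(n+1-k) * a D' ((p:ℤ)^(2*(1+0+2*k)) * i))
              + ∑ k ∈ (∅ : Finset ℕ), (0:ℤ) * a D' ((p:ℤ)^(2*k) * i) := by
          intro D'
          have h := ih2.2 0 D'
          have harg : (2*(n+1+1+0) : ℕ) = 2*(n+2) := by ring
          rw [harg] at h
          rw [Finset.sum_empty, add_zero]
          exact h
        have hkey := zg_key a V hV (an (n+1)) ((p:ℤ)^(2*(n+2)) * i)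
          (range (n+1+1)) (∅ : Finset ℕ)
          (fun k => P^(n+1-k)) (fun _ => (0:ℤ))
          (fun k => (p:ℤ)^(2*(1+0+2*k)) * i) (fun k => (p:ℤ)^(2*k) * i) H D
        simp only [Finset.sum_empty, add_zero] at hkey
        have hn : an n D ((p:ℤ)^(2*(n+2)) * i)
            = ∑ t ∈ range (n+1), P^(n-t) * a D ((p:ℤ)^(2*(1+1+2*t)) * i) := by
          have h := ih1.2 1 D
          have harg : (2*(n+1+1) : ℕ) = 2*(n+2) := by ring
          rw [harg] at h
          exact h
        rw [harec n D ((p:ℤ)^(2*(n+2)) * i), hkey, hn]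
        have hc := zg_case0 ε P (fun k => a D ((p:ℤ)^(2*k) * i))
          (fun k => V a D ((p:ℤ)^(2*k) * i)) (hWs D) n
        exact hc
      · rcases m' with _ | m
        · -- m = 1, u = n+1
          obtain rfl : u = n + 1 := by omega
          have H : ∀ D' : ℤ, an (n+1) D' ((p:ℤ)^(2*(n+1)) * i)
              = (∑ k ∈ range (0+1), ε^(0-k) * P^(n+1) * a D' ((p:ℤ)^(2*k) * i))
                + ∑ k ∈ range (n+1), P^(n+1-1-k) * a D' ((p:ℤ)^(2*(0+2+2*k)) * i) :=
            fun D' => ih2.1 (n+1) 0 (by omega) D'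
          have hkey := zg_key a V hV (an (n+1)) ((p:ℤ)^(2*(n+1)) * i)
            (range (0+1)) (range (n+1))
            (fun k => ε^(0-k) * P^(n+1)) (fun k => P^(n+1-1-k))
            (fun k => (p:ℤ)^(2*k) * i) (fun k => (p:ℤ)^(2*(0+2+2*k)) * i) H D
          have hn : an n D ((p:ℤ)^(2*(n+1)) * i)
              = ∑ t ∈ range (n+1), P^(n-t) * a D ((p:ℤ)^(2*(1+0+2*t)) * i) := by
            have h := ih1.2 0 D
            have harg : (2*(n+1+0) : ℕ) = 2*(n+1) := by ring
            rw [harg] at h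
            exact h
          rw [harec n D ((p:ℤ)^(2*(n+1)) * i), hkey, hn]
          have hc := zg_case2 ε P (fun k => a D ((p:ℤ)^(2*k) * i))
            (fun k => V a D ((p:ℤ)^(2*k) * i)) (hW0 D) (hWs D) n
          exact hc
        · -- m = m+2, u + m = n
          have hum : n = u + m := by omega
          have H : ∀ D' : ℤ, an (n+1) D' ((p:ℤ)^(2*u) * i)
              = (∑ k ∈ range (m+1+1), ε^(m+1-k) * P^u * a D' ((p:ℤ)^(2*k) * i))
                + ∑ k ∈ range u, P^(u-1-k) * a D' ((p:ℤ)^(2*(m+1+2+2*k)) * i) :=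
            fun D' => ih2.1 u (m+1) (by omega) D'
          have hkey := zg_key a V hV (an (n+1)) ((p:ℤ)^(2*u) * i)
            (range (m+1+1)) (range u)
            (fun k => ε^(m+1-k) * P^u) (fun k => P^(u-1-k))
            (fun k => (p:ℤ)^(2*k) * i) (fun k => (p:ℤ)^(2*(m+1+2+2*k)) * i) H D
          rw [harec n D ((p:ℤ)^(2*u) * i), hkey, ih1.1 u m hum D]
          have hc := zg_case1 ε P (fun k => a D ((p:ℤ)^(2*k) * i))
            (fun k => V a D ((p:ℤ)^(2*k) * i)) (hW0 D) (hWs D) m u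
          exact hc
    · intro v D
      have H : ∀ D' : ℤ, an (n+1) D' ((p:ℤ)^(2*(n+2+1+v)) * i)
          = (∑ k ∈ range (n+1+1), P^(n+1-k) * a D' ((p:ℤ)^(2*(1+(v+1)+2*k)) * i))
            + ∑ k ∈ (∅ : Finset ℕ), (0:ℤ) * a D' ((p:ℤ)^(2*k) * i) := by
        intro D'
        have h := ih2.2 (v+1) D'
        have harg : (2*(n+1+1+(v+1)) : ℕ) = 2*(n+2+1+v) := by ring
        rw [harg] at h
        rw [Finset.sum_empty, add_zero]
        exact h
      have hkey := zg_key a V hV (an (n+1)) ((p:ℤ)^(2*(n+2+1+v)) * i)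
        (range (n+1+1)) (∅ : Finset ℕ)
        (fun k => P^(n+1-k)) (fun _ => (0:ℤ))
        (fun k => (p:ℤ)^(2*(1+(v+1)+2*k)) * i) (fun k => (p:ℤ)^(2*k) * i) H D
      simp only [Finset.sum_empty, add_zero] at hkey
      have hn : an n D ((p:ℤ)^(2*(n+2+1+v)) * i)
          = ∑ t ∈ range (n+1), P^(n-t) * a D ((p:ℤ)^(2*(1+(v+2)+2*t)) * i) := by
        have h := ih1.2 (v+2) D
        have harg : (2*(n+1+(v+2)) : ℕ) = 2*(n+2+1+v) := by ring
        rw [harg] at h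
        exact h
      rw [harec n D ((p:ℤ)^(2*(n+2+1+v)) * i), hkey, hn]
      have hc := zg_case3 P (fun k => a D ((p:ℤ)^(2*k) * i))
        (fun k => V a D ((p:ℤ)^(2*k) * i)) (hWs D) n v
      exact hc

/-- Lemma 3.4 (1): explicit formula for the weight 1/2 Hecke-transformed
coefficients `a_{p^n}(D, p^{2u}·i)` for `p² ∤ i` and `n ≥ u`. -/
theorem stmt_15 {p : ℕ} [Fact p.Prime] (hp : p ≠ 2)
    (a : ℤ → ℤ → ℤ)
    (V : (ℤ → ℤ → ℤ) → ℤ → ℤ → ℤ)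
    (hV : ∀ c : ℤ → ℤ → ℤ, ∀ D d : ℤ,
      V c D d = (p : ℤ) * c ((p : ℤ) ^ 2 * D) d + legendreSym p D * c D d
        + (if (p : ℤ) ^ 2 ∣ D then c (D / (p : ℤ) ^ 2) d else 0))
    (hVa : ∀ D d : ℤ,
      V a D d = (p : ℤ) * (if (p : ℤ) ^ 2 ∣ d then a D (d / (p : ℤ) ^ 2) else 0)
        + legendreSym p (-d) * a D d + a D ((p : ℤ) ^ 2 * d))
    (an : ℕ → ℤ → ℤ → ℤ)
    (ha0 : an 0 = a) (ha1 : an 1 = V a)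
    (harec : ∀ n : ℕ, ∀ D d : ℤ,
      an (n + 2) D d = V (an (n + 1)) D d - (p : ℤ) * an n D d)
    (i : ℤ) (hip : ¬ (p : ℤ) ^ 2 ∣ i) (u : ℕ)
    (n : ℕ) (hn : u ≤ n) (D : ℤ) :
    an n D ((p : ℤ) ^ (2 * u) * i) =
      ∑ t ∈ Finset.range (n - u + 1),
        (legendreSym p (-i)) ^ (n - u - t) * (p : ℤ) ^ u * a D ((p : ℤ) ^ (2 * t) * i)
      + ∑ t ∈ Finset.Icc 1 u,
          (p : ℤ) ^ (u - t) * a D ((p : ℤ) ^ (2 * (n - u) + 4 * t) * i) := by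
  have h := (zg_aux a V hV hVa an ha0 ha1 harec i hip n).1 u (n-u) (by omega) D
  rw [h]
  congr 1
  rw [zg_sum_Icc_one u (fun t => (p:ℤ)^(u-t) * a D ((p:ℤ)^(2*(n-u)+4*t) * i))]
  apply Finset.sum_congr rfl
  intro t ht
  have h1 : u-(t+1) = u-1-t := by omega
  have h2 : (2*(n-u)+4*(t+1) : ℕ) = 2*(n-u+2+2*t) := by ring
  simp only [h1, h2]
end

section
/- Let i be an integer with p² ∤ i and let u ≥ 0 be an integer. Then for every integer n ≥ u and every integer D, A_n(D, p^{2u}·i) = Σ_{t=0}^{n−u} (12/p)^{n−u−t}·(−i/p)^{n−u−t}·p^u·A(D, p^{2t}·i) + Σ_{t=1}^{u} p^{u−t}·A(D, p^{2n−2u+4t}·i). -/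
/-!
For fixed `D` put `b n t := A_n(D, p^{2t} i)`. The operator `V` acts in `D` and the Hecke
operator `U` on the index `d` acts in `d`, so they commute; since `V A = U A`, the recurrence
defining `A_n` turns into `b (n+2) = W b (n+1) - p b n`, where on `t ↦ p^{2t} i` the operator
`U` becomes `W = L + S`: `S` is the shift `t ↦ t + 1` and `L` the lowering operator multiplying
by `p` (by `ε = (12/p)(-i/p)` at `t = 0`, since `p² ∤ i`). As `S L = p`, this second order
recurrence collapses to the first order one `b (n+1) = L (b n) + S^{n+1} (b 0)`, which unrolls
to the stated formula.
-/

open Finset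

/-- The weight 1/2 Hecke operator `p T(p²)` acting on the first variable `D` of a grid. -/
def coeffHecke (q : ℤ) (χ : ℤ → ℤ) : Module.End ℤ (ℤ → ℤ → ℤ) where
  toFun c D d := q * c (q ^ 2 * D) d + χ D * c D d + if q ^ 2 ∣ D then c (D / q ^ 2) d else 0
  map_add' c c' := by
    ext D d
    simp only [Pi.add_apply]
    split_ifs <;> ring
  map_smul' r c := by
    ext D d
    simp only [Pi.smul_apply, smul_eq_mul, RingHom.id_apply]
    split_ifs <;> ring

/-- The Hecke operator acting on the index `d` of a grid, as in `F_d | T(p²)`. -/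
def indexHecke (q : ℤ) (ψ : ℤ → ℤ) : Module.End ℤ (ℤ → ℤ → ℤ) where
  toFun c D d := q * (if q ^ 2 ∣ d then c D (d / q ^ 2) else 0) + ψ d * c D d + c D (q ^ 2 * d)
  map_add' c c' := by
    ext D d
    simp only [Pi.add_apply]
    split_ifs <;> ring
  map_smul' r c := by
    ext D d
    simp only [Pi.smul_apply, smul_eq_mul, RingHom.id_apply]
    split_ifs <;> ring

theorem commute_coeffHecke_indexHecke (q : ℤ) (χ ψ : ℤ → ℤ) :
    Commute (coeffHecke q χ) (indexHecke q ψ) := by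
  ext c D d
  simp only [Module.End.mul_apply, coeffHecke, indexHecke, LinearMap.coe_mk, AddHom.coe_mk]
  split_ifs <;> ring

theorem indexHecke_apply_pow_mul {q : ℤ} {ψ : ℤ → ℤ} {i : ℤ} (hq : q ≠ 0) (hi : ¬ q ^ 2 ∣ i)
    (hψ : ∀ s : ℕ, ψ (q ^ (2 * (s + 1)) * i) = 0) (c : ℤ → ℤ → ℤ) (D : ℤ) (t : ℕ) :
    indexHecke q ψ c D (q ^ (2 * t) * i) =
      (if t = 0 then ψ i * c D i else q * c D (q ^ (2 * (t - 1)) * i))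
        + c D (q ^ (2 * (t + 1)) * i) := by
  simp only [indexHecke, LinearMap.coe_mk, AddHom.coe_mk]
  rcases t with _ | s
  · simp [hi]
  · have hdiv : q ^ (2 * (s + 1)) * i = q ^ 2 * (q ^ (2 * s) * i) := by ring
    rw [hψ s, hdiv, if_pos (dvd_mul_right _ _), Int.mul_ediv_cancel_left _ (pow_ne_zero 2 hq)]
    simp only [Nat.add_sub_cancel, Nat.add_one_ne_zero, if_false]
    ring_nf

theorem legendreSym_neg_pow_mul_eq_zero (p : ℕ) [Fact p.Prime] (i : ℤ) (s : ℕ) :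
    legendreSym p (-((p : ℤ) ^ (2 * (s + 1)) * i)) = 0 := by
  rw [legendreSym.eq_zero_iff]
  push_cast
  simp

theorem apply_eq_apply_of_recurrence {R M : Type*} [Semiring R] [AddCommGroup M] [Module R M]
    {T U : Module.End R M} (hTU : Commute T U) (q : R) {x : ℕ → M}
    (hx0 : T (x 0) = U (x 0)) (hx1 : x 1 = T (x 0))
    (hrec : ∀ n, x (n + 2) = T (x (n + 1)) - q • x n) (n : ℕ) :
    T (x n) = U (x n) := by
  have hTT : ∀ y, T y = U y → T (T y) = U (T y) := fun y hy =>
    (congrArg T hy).trans (LinearMap.congr_fun hTU y)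
  induction n using Nat.twoStepInduction with
  | zero => exact hx0
  | one => rw [hx1]; exact hTT _ hx0
  | more n ih0 ih1 => rw [hrec, map_sub, map_sub, map_smul, map_smul, ih0, hTT _ ih1]

def lower (ε q : ℤ) (f : ℕ → ℤ) (t : ℕ) : ℤ :=
  if t = 0 then ε * f 0 else q * f (t - 1)

section Recurrence

variable {ε q : ℤ} {b : ℕ → ℕ → ℤ}

theorem first_order_of_second_order (hb1 : ∀ t, b 1 t = lower ε q (b 0) t + b 0 (t + 1))
    (hrec : ∀ n t, b (n + 2) t = lower ε q (b (n + 1)) t + b (n + 1) (t + 1) - q * b n t) :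
    ∀ n t, b (n + 1) t = lower ε q (b n) t + b 0 (n + 1 + t) := by
  intro n
  induction n with
  | zero => simpa [add_comm] using hb1
  | succ n ih =>
    intro t
    have hshift : b (n + 1) (t + 1) = q * b n t + b 0 (n + 1 + 1 + t) := by
      rw [ih, lower, if_neg t.succ_ne_zero, Nat.add_sub_cancel]
      ring_nf
    rw [hrec, hshift]
    ring

theorem apply_zero_of_first_order
    (hstep : ∀ n t, b (n + 1) t = lower ε q (b n) t + b 0 (n + 1 + t)) (m : ℕ) :
    b m 0 = ∑ t ∈ range (m + 1), ε ^ (m - t) * b 0 t := by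
  induction m with
  | zero => simp
  | succ m ih =>
    rw [hstep, lower, if_pos rfl, ih, sum_range_succ _ (m + 1), mul_sum, Nat.sub_self, pow_zero,
      one_mul, add_zero]
    congr 1
    refine sum_congr rfl fun t ht => ?_
    rw [Nat.sub_add_comm (Nat.lt_succ_iff.mp (mem_range.mp ht)), pow_succ]
    ring

theorem apply_add_of_first_order
    (hstep : ∀ n t, b (n + 1) t = lower ε q (b n) t + b 0 (n + 1 + t)) (m u : ℕ) :
    b (m + u) u = q ^ u * b m 0 + ∑ s ∈ Icc 1 u, q ^ (u - s) * b 0 (m + 2 * s) := by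
  induction u with
  | zero => simp
  | succ u ih =>
    rw [← add_assoc, hstep, lower, if_neg u.succ_ne_zero, Nat.add_sub_cancel, ih,
      sum_Icc_succ_top (by omega), Nat.sub_self, pow_zero, one_mul, mul_add, mul_sum]
    rw [show m + u + 1 + (u + 1) = m + 2 * (u + 1) by ring]
    have hpow : ∀ s ∈ Icc 1 u, q * (q ^ (u - s) * b 0 (m + 2 * s))
        = q ^ (u + 1 - s) * b 0 (m + 2 * s) := fun s hs => by
      rw [Nat.sub_add_comm (mem_Icc.mp hs).2, pow_succ]
      ring
    rw [sum_congr rfl hpow, pow_succ]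
    ring

end Recurrence

theorem stmt_16_general {p : ℕ} [Fact p.Prime]
    (A : ℤ → ℤ → ℤ)
    (V : (ℤ → ℤ → ℤ) → ℤ → ℤ → ℤ)
    (hV : ∀ c : ℤ → ℤ → ℤ, ∀ D d : ℤ,
      V c D d = (p : ℤ) * c ((p : ℤ) ^ 2 * D) d
        + legendreSym p 12 * legendreSym p D * c D d
        + (if (p : ℤ) ^ 2 ∣ D then c (D / (p : ℤ) ^ 2) d else 0))
    (hVA : ∀ D d : ℤ,
      V A D d = (p : ℤ) * (if (p : ℤ) ^ 2 ∣ d then A D (d / (p : ℤ) ^ 2) else 0)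
        + legendreSym p 12 * legendreSym p (-d) * A D d + A D ((p : ℤ) ^ 2 * d))
    (An : ℕ → ℤ → ℤ → ℤ)
    (hA0 : An 0 = A) (hA1 : An 1 = V A)
    (hArec : ∀ n : ℕ, ∀ D d : ℤ,
      An (n + 2) D d = V (An (n + 1)) D d - (p : ℤ) * An n D d)
    (i : ℤ) (hip : ¬ (p : ℤ) ^ 2 ∣ i) (u : ℕ)
    (n : ℕ) (hn : u ≤ n) (D : ℤ) :
    An n D ((p : ℤ) ^ (2 * u) * i) =
      ∑ t ∈ Finset.range (n - u + 1),
        (legendreSym p 12) ^ (n - u - t) * (legendreSym p (-i)) ^ (n - u - t)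
          * (p : ℤ) ^ u * A D ((p : ℤ) ^ (2 * t) * i)
      + ∑ t ∈ Finset.Icc 1 u,
          (p : ℤ) ^ (u - t) * A D ((p : ℤ) ^ (2 * (n - u) + 4 * t) * i) := by
  set ψ : ℤ → ℤ := fun d => legendreSym p 12 * legendreSym p (-d)
  have hV' : V = coeffHecke p (fun D => legendreSym p 12 * legendreSym p D) :=
    funext fun c => funext fun D => funext fun d => hV c D d
  have hVA' : V A = indexHecke p ψ A := funext fun D => funext fun d => hVA D d
  subst hV'
  have hUV := apply_eq_apply_of_recurrence (commute_coeffHecke_indexHecke _ _ ψ) (p : ℤ)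
    (x := An) (by rw [hA0, hVA']) (by rw [hA1, hA0])
    (fun n => funext fun D => funext fun d => hArec n D d)
  have hU := indexHecke_apply_pow_mul (ψ := ψ) (Nat.cast_ne_zero.mpr (Fact.out : p.Prime).ne_zero)
    hip (fun s => mul_eq_zero_of_right _ (legendreSym_neg_pow_mul_eq_zero p i s))
  set b : ℕ → ℕ → ℤ := fun n t => An n D ((p : ℤ) ^ (2 * t) * i) with hb
  have hUb : ∀ n t, indexHecke p ψ (An n) D ((p : ℤ) ^ (2 * t) * i)
      = lower (ψ i) p (b n) t + b n (t + 1) := fun n t => by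
    rw [hU, lower]
    split_ifs with ht <;> simp [hb, ht]
  have hstep := first_order_of_second_order (b := b)
    (fun t => by show An 1 D _ = _; rw [hA1, hVA', ← hA0, hUb])
    (fun n t => by show An (n + 2) D _ = _; rw [hArec, hUV, hUb])
  obtain ⟨m, rfl⟩ := Nat.exists_eq_add_of_le' hn
  change b (m + u) u = _
  rw [apply_add_of_first_order hstep, apply_zero_of_first_order hstep, mul_sum, Nat.add_sub_cancel]
  simp only [hb, hA0, ψ, mul_pow]
  congr 1
  · exact sum_congr rfl fun t _ => by ring
  · exact sum_congr rfl fun s _ => by ring_nf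

/-- Lemma 3.4 (2): explicit formula for the Folsom–Ono weight 1/2
Hecke-transformed coefficients `A_{p^n}(D, p^{2u}·i)` for `p² ∤ i`, `n ≥ u`. -/
theorem stmt_16 {p : ℕ} [Fact p.Prime] (hp : 5 ≤ p)
    (A : ℤ → ℤ → ℤ)
    (V : (ℤ → ℤ → ℤ) → ℤ → ℤ → ℤ)
    (hV : ∀ c : ℤ → ℤ → ℤ, ∀ D d : ℤ,
      V c D d = (p : ℤ) * c ((p : ℤ) ^ 2 * D) d
        + legendreSym p 12 * legendreSym p D * c D d
        + (if (p : ℤ) ^ 2 ∣ D then c (D / (p : ℤ) ^ 2) d else 0))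
    (hVA : ∀ D d : ℤ,
      V A D d = (p : ℤ) * (if (p : ℤ) ^ 2 ∣ d then A D (d / (p : ℤ) ^ 2) else 0)
        + legendreSym p 12 * legendreSym p (-d) * A D d + A D ((p : ℤ) ^ 2 * d))
    (An : ℕ → ℤ → ℤ → ℤ)
    (hA0 : An 0 = A) (hA1 : An 1 = V A)
    (hArec : ∀ n : ℕ, ∀ D d : ℤ,
      An (n + 2) D d = V (An (n + 1)) D d - (p : ℤ) * An n D d)
    (i : ℤ) (hip : ¬ (p : ℤ) ^ 2 ∣ i) (u : ℕ)
    (n : ℕ) (hn : u ≤ n) (D : ℤ) :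
    An n D ((p : ℤ) ^ (2 * u) * i) =
      ∑ t ∈ Finset.range (n - u + 1),
        (legendreSym p 12) ^ (n - u - t) * (legendreSym p (-i)) ^ (n - u - t)
          * (p : ℤ) ^ u * A D ((p : ℤ) ^ (2 * t) * i)
      + ∑ t ∈ Finset.Icc 1 u,
          (p : ℤ) ^ (u - t) * A D ((p : ℤ) ^ (2 * (n - u) + 4 * t) * i) :=
  stmt_16_general A V hV hVA An hA0 hA1 hArec i hip u n hn D
end
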